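/- arXiv:2202.04746 — 8 statements merged into one kernel-verified Lean document; each statement's English description precedes it below -/
import Mathlib

section
/- Let G be a connected graph with non-negative edge weights. Then there exists a maximum weight connected matching M of G that saturates every cut vertex (articulation point) of G. -/
open Finset

/-- `M` is a matching of `G`: a finite set of edges of `G` that are pairwise disjoint. -/
def IsMatchingF {V : Type*} (G : SimpleGraph V) (M : Finset (Sym2 V)) : Prop :=
  (∀ e ∈ M, e ∈ G.edgeSet) ∧
    ∀ e ∈ M, ∀ f ∈ M, e ≠ f → ∀ v : V, ¬(v ∈ e ∧ v ∈ f)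

/-- The set of vertices saturated by the matching `M`. -/
def satSet {V : Type*} (M : Finset (Sym2 V)) : Set V := {v | ∃ e ∈ M, v ∈ e}

/-- A connected matching: the saturated vertices induce a (pre)connected subgraph. -/
def IsConnMatching {V : Type*} (G : SimpleGraph V) (M : Finset (Sym2 V)) : Prop :=
  IsMatchingF G M ∧ (G.induce (satSet M)).Preconnected

/-- The weight of a matching: the sum of the weights of its edges. -/
def mWeight {V : Type*} (w : Sym2 V → ℝ) (M : Finset (Sym2 V)) : ℝ := ∑ e ∈ M, w e

/-- A cut vertex (articulation point) of a connected graph: its removal disconnects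
the remaining vertices. -/
def IsCutVertex {V : Type*} (G : SimpleGraph V) (v : V) : Prop :=
  ¬ (G.induce {u : V | u ≠ v}).Preconnected

namespace CMAux

open SimpleGraph

variable {V : Type*}

/-- Two-step list induction principle. -/
def twoStep {p : List V → Prop} (h0 : p []) (h1 : ∀ a, p [a])
    (h2 : ∀ a b r, p r → p (a :: b :: r)) : ∀ L : List V, p L
  | [] => h0
  | [a] => h1 a
  | a :: b :: r => h2 a b r (twoStep h0 h1 h2 r)

variable [DecidableEq V]

/-- Pair up consecutive elements of a list into edges (leftover elements unpaired). -/
def pairList : List V → Finset (Sym2 V)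
  | a :: b :: r => insert s(a, b) (pairList r)
  | _ => ∅

@[simp] lemma pairList_nil : (pairList ([] : List V)) = ∅ := rfl
@[simp] lemma pairList_single (a : V) : pairList [a] = ∅ := rfl
@[simp] lemma pairList_cons2 (a b : V) (r : List V) :
    pairList (a :: b :: r) = insert s(a, b) (pairList r) := rfl

lemma mem_of_mem_pairList {x : V} {e : Sym2 V} :
    ∀ {L : List V}, e ∈ pairList L → x ∈ e → x ∈ L := by
  intro L
  induction L using twoStep with
  | h0 => simp
  | h1 a => simp
  | h2 a b r ih =>
    intro he hx
    rcases Finset.mem_insert.1 he with h | h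
    · subst h
      rcases Sym2.mem_iff.1 hx with h | h <;> simp [h]
    · simp [ih h hx]

lemma pairList_edge {G : SimpleGraph V} {e : Sym2 V} :
    ∀ {L : List V}, L.Chain' G.Adj → e ∈ pairList L → e ∈ G.edgeSet := by
  intro L
  induction L using twoStep with
  | h0 => simp
  | h1 a => simp
  | h2 a b r ih =>
    intro hc he
    rcases Finset.mem_insert.1 he with h | h
    · subst h
      exact (List.isChain_cons_cons.1 hc).1
    · exact ih ((List.isChain_cons_cons.1 hc).2.tail) h

lemma pairList_cover {x : V} :
    ∀ {L : List V} (hne : L ≠ []), Odd L.length → x ∈ L → x ≠ L.getLast hne →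
      ∃ e ∈ pairList L, x ∈ e := by
  intro L
  induction L using twoStep with
  | h0 => simp
  | h1 a => intro hne hodd hx hlast; simp at hx; simp [hx] at hlast
  | h2 a b r ih =>
    intro hne hodd hx hlast
    have hrne : r ≠ [] := by
      rintro rfl
      rcases hodd with ⟨m, hm⟩
      simp only [List.length_cons, List.length_nil] at hm
      omega
    rcases List.mem_cons.1 hx with rfl | hx
    · exact ⟨s(x, b), Finset.mem_insert_self _ _, by simp⟩
    rcases List.mem_cons.1 hx with rfl | hx
    · exact ⟨s(a, x), Finset.mem_insert_self _ _, by simp⟩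
    · have hodd' : Odd r.length := by
        simp [List.length_cons] at hodd ⊢
        rcases hodd with ⟨m, hm⟩
        exact ⟨m - 1, by omega⟩
      have hlast' : x ≠ r.getLast hrne := by
        rwa [List.getLast_cons (by simp [hrne]), List.getLast_cons hrne] at hlast
      obtain ⟨e, he, hxe⟩ := ih hrne hodd' hx hlast'
      exact ⟨e, Finset.mem_insert_of_mem he, hxe⟩

lemma pairList_mem_ne_last {x : V} {e : Sym2 V} :
    ∀ {L : List V} (hne : L ≠ []), Odd L.length → L.Nodup → e ∈ pairList L → x ∈ e →
      x ∈ L ∧ x ≠ L.getLast hne := by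
  intro L
  induction L using twoStep with
  | h0 => simp
  | h1 a => simp
  | h2 a b r ih =>
    intro hne hodd hnd he hx
    have hrne : r ≠ [] := by
      rintro rfl
      rcases hodd with ⟨m, hm⟩
      simp only [List.length_cons, List.length_nil] at hm
      omega
    have hodd' : Odd r.length := by
      rcases hodd with ⟨m, hm⟩
      simp only [List.length_cons] at hm
      exact ⟨m - 1, by omega⟩
    have hgl : (a :: b :: r).getLast hne = r.getLast hrne := by
      rw [List.getLast_cons (by simp [hrne]), List.getLast_cons hrne]
    have hglmem := List.getLast_mem hrne
    rw [hgl]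
    rcases Finset.mem_insert.1 he with h | h
    · subst h
      simp only [List.nodup_cons] at hnd
      rcases Sym2.mem_iff.1 hx with rfl | rfl
      · exact ⟨by simp, fun h => hnd.1 (by simp [h ▸ hglmem])⟩
      · exact ⟨by simp, fun h => hnd.2.1 (h ▸ hglmem)⟩
    · have hnd' : r.Nodup := (List.Nodup.of_cons (List.Nodup.of_cons hnd))
      obtain ⟨hxr, hxl⟩ := ih hrne hodd' hnd' h hx
      exact ⟨by simp [hxr], hxl⟩

lemma pairList_disjoint {x : V} {e f : Sym2 V} :
    ∀ {L : List V}, L.Nodup → e ∈ pairList L → f ∈ pairList L → e ≠ f →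
      x ∈ e → x ∈ f → False := by
  intro L
  induction L using twoStep with
  | h0 => simp
  | h1 a => simp
  | h2 a b r ih =>
    intro hnd he hf hne hxe hxf
    have hnd' : r.Nodup := (List.Nodup.of_cons (List.Nodup.of_cons hnd))
    simp only [List.nodup_cons] at hnd
    rcases Finset.mem_insert.1 he with h | h <;> rcases Finset.mem_insert.1 hf with h' | h'
    · exact hne (h.trans h'.symm)
    · subst h
      have hxr : x ∈ r := mem_of_mem_pairList h' hxf
      rcases Sym2.mem_iff.1 hxe with rfl | rfl
      · exact hnd.1 (by simp [hxr])
      · exact hnd.2.1 hxr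
    · subst h'
      have hxr : x ∈ r := mem_of_mem_pairList h hxe
      rcases Sym2.mem_iff.1 hxf with rfl | rfl
      · exact hnd.1 (by simp [hxr])
      · exact hnd.2.1 hxr
    · exact ih hnd' h h' hne hxe hxf

lemma chain_reach_head {G : SimpleGraph V} {t : Set V} :
    ∀ {L : List V} (hc : L.Chain' G.Adj) (hL : ∀ x ∈ L, x ∈ t) (hne : L ≠ [])
      (x : V) (hx : x ∈ L),
      (G.induce t).Reachable ⟨x, hL x hx⟩ ⟨L.head hne, hL _ (List.head_mem hne)⟩ := by
  intro L
  induction L with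
  | nil => intro _ _ hne; exact absurd rfl hne
  | cons a r ih =>
    intro hc hL hne x hx
    rcases List.mem_cons.1 hx with rfl | hx
    · rfl
    · have hrne : r ≠ [] := List.ne_nil_of_mem hx
      have hL' : ∀ y ∈ r, y ∈ t := fun y hy => hL y (List.mem_cons_of_mem a hy)
      have hadjG : G.Adj a (r.head hrne) :=
        (List.isChain_cons.1 hc).1 _ (by simp [List.head?_eq_head hrne])
      have hadj : (G.induce t).Adj ⟨a, hL a (by simp)⟩ ⟨r.head hrne, hL' _ (List.head_mem hrne)⟩ :=
        hadjG
      exact ((ih hc.tail hL' hrne x hx).trans hadj.symm.reachable)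

lemma chain_reach {G : SimpleGraph V} {t : Set V} {L : List V} (hc : L.Chain' G.Adj)
    (hL : ∀ x ∈ L, x ∈ t) {x y : V} (hx : x ∈ L) (hy : y ∈ L) :
    (G.induce t).Reachable ⟨x, hL x hx⟩ ⟨y, hL y hy⟩ :=
  (chain_reach_head hc hL (List.ne_nil_of_mem hx) x hx).trans
    (chain_reach_head hc hL (List.ne_nil_of_mem hx) y hy).symm

lemma walk_reach {G : SimpleGraph V} {t : Set V} {a b : V} (p : G.Walk a b)
    (h : ∀ x ∈ p.support, x ∈ t) :
    (G.induce t).Reachable ⟨a, h a p.start_mem_support⟩ ⟨b, h b p.end_mem_support⟩ :=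
  chain_reach p.isChain_adj_support h p.start_mem_support p.end_mem_support

lemma reach_mono {G : SimpleGraph V} {s t : Set V} (hst : ∀ x, x ∈ s → x ∈ t) {a b : V}
    (ha : a ∈ s) (hb : b ∈ s)
    (h : (G.induce s).Reachable ⟨a, ha⟩ ⟨b, hb⟩) :
    (G.induce t).Reachable ⟨a, hst a ha⟩ ⟨b, hst b hb⟩ := by
  obtain ⟨p⟩ := h
  have hsup : ∀ x ∈ (p.map (SimpleGraph.Embedding.induce s).toHom).support, x ∈ t := by
    intro x hx
    rw [SimpleGraph.Walk.support_map] at hx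
    obtain ⟨y, _, rfl⟩ := List.mem_map.1 hx
    exact hst _ y.2
  exact walk_reach _ hsup

lemma find_boundary {G : SimpleGraph V} {v s0 : V} (hs0 : s0 ∈ {u : V | u ≠ v}) :
    ∀ {a b : V} (_ : G.Walk a b) (_ : b = v) (ha : a ≠ v),
      ¬(G.induce {x : V | x ≠ v}).Reachable ⟨a, ha⟩ ⟨s0, hs0⟩ →
      ∃ (y : V) (hy : y ≠ v), G.Adj y v ∧
        ¬(G.induce {x : V | x ≠ v}).Reachable ⟨y, hy⟩ ⟨s0, hs0⟩ := by
  intro a b p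
  induction p with
  | nil => intro hb ha _; exact absurd hb ha
  | @cons a c b h q ih =>
    intro hb ha hr
    by_cases hcv : c = v
    · exact ⟨a, ha, by rwa [← hcv], hr⟩
    · refine ih hb hcv (fun hrc => hr ?_)
      have hadj : (G.induce {x : V | x ≠ v}).Adj ⟨a, ha⟩ ⟨c, hcv⟩ := h
      exact hadj.reachable.trans hrc

lemma satSet_union {M N : Finset (Sym2 V)} : satSet (M ∪ N) = satSet M ∪ satSet N := by
  ext x
  simp only [satSet, Set.mem_setOf_eq, Finset.mem_union, Set.mem_union]
  constructor
  · rintro ⟨e, (he | he), hx⟩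
    · exact Or.inl ⟨e, he, hx⟩
    · exact Or.inr ⟨e, he, hx⟩
  · rintro (⟨e, he, hx⟩ | ⟨e, he, hx⟩)
    · exact ⟨e, Or.inl he, hx⟩
    · exact ⟨e, Or.inr he, hx⟩

lemma build {G : SimpleGraph V} {w : Sym2 V → ℝ} (hw : ∀ e ∈ G.edgeSet, 0 ≤ w e)
    {M : Finset (Sym2 V)} (hM : IsConnMatching G M)
    {L : List V} (hne : L ≠ []) (hodd : Odd L.length) (h2 : 2 ≤ L.length)
    (hnd : L.Nodup) (hchain : L.Chain' G.Adj)
    (hlast : L.getLast hne ∈ satSet M)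
    (hnotS : ∀ x ∈ L, x ≠ L.getLast hne → x ∉ satSet M) :
    ∃ M' : Finset (Sym2 V), IsConnMatching G M' ∧ mWeight w M ≤ mWeight w M' ∧
      M.card < M'.card := by
  classical
  set P := pairList L with hP
  have hPedge : ∀ e ∈ P, e ∈ G.edgeSet := fun e he => pairList_edge hchain he
  have hPvert : ∀ e ∈ P, ∀ x ∈ e, x ∈ L ∧ x ≠ L.getLast hne :=
    fun e he x hx => pairList_mem_ne_last hne hodd hnd he hx
  have hPnotS : ∀ e ∈ P, ∀ x ∈ e, x ∉ satSet M :=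
    fun e he x hx => hnotS x (hPvert e he x hx).1 (hPvert e he x hx).2
  have hMvert : ∀ e ∈ M, ∀ x ∈ e, x ∈ satSet M := fun e he x hx => ⟨e, he, hx⟩
  have hdisj : Disjoint M P := by
    rw [Finset.disjoint_left]
    intro e heM heP
    exact hPnotS e heP e.out.1 e.out_fst_mem (hMvert e heM e.out.1 e.out_fst_mem)
  have hsatU : satSet (M ∪ P) = satSet M ∪ satSet P := satSet_union
  have hLsat : ∀ x ∈ L, x ∈ satSet (M ∪ P) := by
    intro x hx
    rw [hsatU]
    by_cases hxl : x = L.getLast hne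
    · exact Or.inl (hxl ▸ hlast)
    · obtain ⟨e, he, hxe⟩ := pairList_cover hne hodd hx hxl
      exact Or.inr ⟨e, he, hxe⟩
  have hmatch : IsMatchingF G (M ∪ P) := by
    constructor
    · intro e he
      rcases Finset.mem_union.1 he with h | h
      · exact hM.1.1 e h
      · exact hPedge e h
    · intro e he f hf hef x ⟨hxe, hxf⟩
      rcases Finset.mem_union.1 he with h | h <;> rcases Finset.mem_union.1 hf with h' | h'
      · exact hM.1.2 e h f h' hef x ⟨hxe, hxf⟩
      · exact hPnotS f h' x hxf (hMvert e h x hxe)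
      · exact hPnotS e h x hxe (hMvert f h' x hxf)
      · exact pairList_disjoint hnd h h' hef hxe hxf
  have hglmem : L.getLast hne ∈ L := List.getLast_mem hne
  have hprecon : (G.induce (satSet (M ∪ P))).Preconnected := by
    have H : ∀ (x : V) (hx : x ∈ satSet (M ∪ P)),
        (G.induce (satSet (M ∪ P))).Reachable ⟨x, hx⟩
          ⟨L.getLast hne, hLsat _ hglmem⟩ := by
      intro x hx
      have hx' : x ∈ satSet M ∪ satSet P := hsatU ▸ hx
      rcases hx' with hxM | hxP
      · exact reach_mono (fun z hz => by rw [hsatU]; exact Or.inl hz) hxM hlast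
          (hM.2 ⟨x, hxM⟩ ⟨L.getLast hne, hlast⟩)
      · obtain ⟨e, he, hxe⟩ := hxP
        exact chain_reach hchain hLsat (hPvert e he x hxe).1 hglmem
    rintro ⟨x, hx⟩ ⟨z, hz⟩
    exact (H x hx).trans (H z hz).symm
  have hwsum : mWeight w (M ∪ P) = mWeight w M + mWeight w P := by
    simp only [mWeight]
    exact Finset.sum_union hdisj
  have hwP : 0 ≤ mWeight w P := Finset.sum_nonneg fun e he => hw e (hPedge e he)
  have hPne : P.Nonempty := by
    match L, h2 with
    | a :: b :: r, _ => exact ⟨s(a, b), by rw [hP, pairList_cons2]; exact Finset.mem_insert_self _ _⟩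
  refine ⟨M ∪ P, ⟨hmatch, hprecon⟩, by rw [hwsum]; linarith, ?_⟩
  rw [Finset.card_union_of_disjoint hdisj]
  have := Finset.card_pos.2 hPne
  omega

lemma augment {G : SimpleGraph V} (hconn : G.Connected) {w : Sym2 V → ℝ}
    (hw : ∀ e ∈ G.edgeSet, 0 ≤ w e) {M : Finset (Sym2 V)} (hM : IsConnMatching G M)
    {v : V} (hv : IsCutVertex G v) (hvs : v ∉ satSet M) :
    ∃ M' : Finset (Sym2 V), IsConnMatching G M' ∧ mWeight w M ≤ mWeight w M' ∧
      M.card < M'.card := by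
  classical
  rcases Finset.eq_empty_or_nonempty M with rfl | ⟨e0, he0⟩
  -- Case A : M = ∅, just take any edge at v
  · obtain ⟨⟨a, ha⟩⟩ : Nonempty {u : V | u ≠ v} := by
      by_contra h
      rw [not_nonempty_iff] at h
      exact hv (fun a b => (h.false a).elim)
    obtain ⟨p⟩ := hconn.preconnected v a
    obtain ⟨c, hc⟩ : ∃ c, G.Adj v c := by
      cases p with
      | nil => exact absurd rfl ha
      | cons h q => exact ⟨_, h⟩
    refine ⟨{s(v, c)}, ⟨⟨?_, ?_⟩, ?_⟩, ?_, ?_⟩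
    · intro e he
      rw [Finset.mem_singleton] at he
      subst he
      exact hc
    · intro e he f hf hef
      rw [Finset.mem_singleton] at he hf
      exact absurd (he.trans hf.symm) hef
    · have hLmem : ∀ z ∈ [v, c], z ∈ satSet {s(v, c)} := by
        intro z hz
        refine ⟨s(v, c), Finset.mem_singleton_self _, ?_⟩
        rcases List.mem_cons.1 hz with rfl | hz
        · simp
        · simp at hz
          simp [hz]
      have hmem : ∀ (x : V), x ∈ satSet {s(v, c)} → x ∈ [v, c] := by
        rintro x ⟨e, he, hx⟩
        rw [Finset.mem_singleton] at he
        subst he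
        rcases Sym2.mem_iff.1 hx with rfl | rfl <;> simp
      rintro ⟨x, hx⟩ ⟨z, hz⟩
      exact chain_reach (List.isChain_pair.2 hc) hLmem (hmem x hx) (hmem z hz)
    · have h0 : mWeight w (∅ : Finset (Sym2 V)) = 0 := Finset.sum_empty
      have h1 : mWeight w {s(v, c)} = w s(v, c) := Finset.sum_singleton _ _
      rw [h0, h1]
      exact hw _ hc
    · simp
  -- Case B : M ≠ ∅
  · have hs0mem := Sym2.out_fst_mem e0
    set s0 := e0.out.1 with hs0def
    have hs0 : s0 ∈ satSet M := ⟨e0, he0, hs0mem⟩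
    have hSne : ∀ x, x ∈ satSet M → x ≠ v := fun x hx h => hvs (h ▸ hx)
    have hs0v : s0 ∈ {u : V | u ≠ v} := hSne s0 hs0
    have hSreach : ∀ x (hx : x ∈ satSet M),
        (G.induce {u : V | u ≠ v}).Reachable ⟨x, hSne x hx⟩ ⟨s0, hs0v⟩ :=
      fun x hx => reach_mono (fun z hz => hSne z hz) hx hs0 (hM.2 ⟨x, hx⟩ ⟨s0, hs0⟩)
    -- a vertex not reachable to s0 in G - v
    obtain ⟨u0, hu0⟩ : ∃ u0 : {u : V | u ≠ v},
        ¬(G.induce {u : V | u ≠ v}).Reachable u0 ⟨s0, hs0v⟩ := by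
      by_contra h
      push_neg at h
      exact hv fun a b => (h a).trans (h b).symm
    -- a neighbor of v not reachable to s0 in G - v
    obtain ⟨p0⟩ := hconn.preconnected u0.val v
    obtain ⟨y, hyv, hyadj, hyreach⟩ := find_boundary hs0v p0 rfl u0.2 hu0
    -- shortest walk from v to the saturated set
    have hPex : ∃ n : ℕ, ∃ t, t ∈ satSet M ∧ ∃ p : G.Walk v t, p.length = n :=
      ⟨_, s0, hs0, (hconn.preconnected v s0).some, rfl⟩
    obtain ⟨t, ht, p1, hp1len⟩ := Nat.find_spec hPex
    set k := Nat.find hPex with hk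
    set q := p1.bypass with hq
    have hqpath : q.IsPath := p1.bypass_isPath
    have hqlen : q.length = k :=
      le_antisymm (hp1len ▸ p1.length_bypass_le)
        (Nat.find_min' hPex ⟨t, ht, q, rfl⟩)
    have htv : t ≠ v := hSne t ht
    have hk1 : 1 ≤ k := by
      rcases Nat.eq_zero_or_pos k with h0 | h
      · exact absurd (SimpleGraph.Walk.eq_of_length_eq_zero (hqlen.trans h0)).symm htv
      · exact h
    -- internal vertices are not in the saturated set
    have hint : ∀ x (hx : x ∈ q.support), x ∈ satSet M → x = t := by
      intro x hx hxS
      by_contra hxt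
      have h1 : (q.takeUntil x hx).length + (q.dropUntil x hx).length = k := by
        rw [← hqlen, ← SimpleGraph.Walk.length_append, SimpleGraph.Walk.take_spec]
      have hd0 : (q.dropUntil x hx).length ≠ 0 :=
        fun h0 => hxt (SimpleGraph.Walk.eq_of_length_eq_zero h0)
      have h3 : k ≤ (q.takeUntil x hx).length :=
        Nat.find_min' hPex ⟨x, hxS, _, rfl⟩
      omega
    -- every support vertex other than v is on the s0-side of G - v
    have hside : ∀ x (hx : x ∈ q.support) (hxv : x ≠ v),
        (G.induce {u : V | u ≠ v}).Reachable ⟨x, hxv⟩ ⟨s0, hs0v⟩ := by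
      intro x hx hxv
      have hvd : v ∉ (q.dropUntil x hx).support := by
        intro hvmem
        have hsp : ((q.takeUntil x hx).support ++ (q.dropUntil x hx).support.tail).Nodup := by
          rw [← SimpleGraph.Walk.support_append, SimpleGraph.Walk.take_spec]
          exact hqpath.support_nodup
        have hvtake : v ∈ (q.takeUntil x hx).support :=
          SimpleGraph.Walk.start_mem_support _
        have hdisj := List.disjoint_of_nodup_append hsp
        rw [SimpleGraph.Walk.support_eq_cons] at hvmem
        rcases List.mem_cons.1 hvmem with h | h
        · exact hxv h.symm
        · exact hdisj hvtake h
      have hreach1 := walk_reach (t := {u : V | u ≠ v}) (q.dropUntil x hx)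
        (fun z hz => fun hzv => hvd (hzv ▸ hz))
      exact hreach1.trans (hSreach t ht)
    -- construct the augmenting list L
    by_cases hpar : Even k
    · refine build hw hM (L := q.support) q.support_ne_nil ?_ ?_
        hqpath.support_nodup q.isChain_adj_support ?_ ?_
      · rw [SimpleGraph.Walk.length_support, hqlen]
        exact Even.add_one hpar
      · rw [SimpleGraph.Walk.length_support, hqlen]
        omega
      · rw [SimpleGraph.Walk.getLast_support]
        exact ht
      · intro x hx hxl
        rw [SimpleGraph.Walk.getLast_support] at hxl
        exact fun hxS => hxl (hint x hx hxS)
    · have hyS : y ∉ satSet M := fun hyS => hyreach (hSreach y hyS)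
      have hynotin : y ∉ q.support := fun hy => hyreach (hside y hy hyv)
      have hlne : (y :: q.support) ≠ [] := by simp
      refine build hw hM (L := y :: q.support) hlne ?_ ?_ ?_ ?_ ?_ ?_
      · rw [List.length_cons, SimpleGraph.Walk.length_support, hqlen]
        rcases Nat.even_or_odd k with h | h
        · exact absurd h hpar
        · rcases h with ⟨m, hm⟩
          exact ⟨m + 1, by omega⟩
      · simp
      · exact List.nodup_cons.2 ⟨hynotin, hqpath.support_nodup⟩
      · refine List.isChain_cons.2 ⟨?_, q.isChain_adj_support⟩
        intro z hz
        rw [SimpleGraph.Walk.support_eq_cons] at hz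
        simp only [List.head?_cons, Option.mem_def, Option.some.injEq] at hz
        rw [← hz]
        exact hyadj
      · rw [List.getLast_cons q.support_ne_nil, SimpleGraph.Walk.getLast_support]
        exact ht
      · intro x hx hxl
        rw [List.getLast_cons q.support_ne_nil, SimpleGraph.Walk.getLast_support] at hxl
        rcases List.mem_cons.1 hx with rfl | hx
        · exact hyS
        · exact fun hxS => hxl (hint x hx hxS)

end CMAux

/-- In a connected graph with non-negative edge weights there is a maximum weight
connected matching saturating every cut vertex. -/
theorem exists_maxWeight_connMatching_saturating_cutVertices {V : Type*} [Fintype V]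
    (G : SimpleGraph V) (hconn : G.Connected)
    (w : Sym2 V → ℝ) (hw : ∀ e ∈ G.edgeSet, 0 ≤ w e) :
    ∃ M : Finset (Sym2 V), IsConnMatching G M ∧
      (∀ M' : Finset (Sym2 V), IsConnMatching G M' → mWeight w M' ≤ mWeight w M) ∧
      ∀ v : V, IsCutVertex G v → v ∈ satSet M := by
  classical
  set 𝒮 : Finset (Finset (Sym2 V)) := Finset.univ.filter (fun M => IsConnMatching G M)
    with hS
  have hmemS : ∀ M, M ∈ 𝒮 ↔ IsConnMatching G M := by
    intro M
    simp [hS]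
  have hempty : (∅ : Finset (Sym2 V)) ∈ 𝒮 := by
    rw [hmemS]
    refine ⟨⟨by simp, by simp⟩, ?_⟩
    rintro ⟨x, e, he, -⟩
    exact absurd he (Finset.notMem_empty e)
  obtain ⟨M0, hM0S, hM0max⟩ := Finset.exists_max_image 𝒮 (mWeight w) ⟨∅, hempty⟩
  set 𝒯 := 𝒮.filter (fun M => mWeight w M0 ≤ mWeight w M) with hT
  have hM0T : M0 ∈ 𝒯 := Finset.mem_filter.2 ⟨hM0S, le_refl _⟩
  obtain ⟨M, hMT, hMmax⟩ := Finset.exists_max_image 𝒯 Finset.card ⟨M0, hM0T⟩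
  obtain ⟨hMS, hMw⟩ := Finset.mem_filter.1 hMT
  have hMconn : IsConnMatching G M := (hmemS M).1 hMS
  have hmaxw : ∀ M', IsConnMatching G M' → mWeight w M' ≤ mWeight w M := by
    intro M' h
    exact le_trans (hM0max M' ((hmemS M').2 h)) hMw
  refine ⟨M, hMconn, hmaxw, ?_⟩
  intro v hv
  by_contra hvs
  obtain ⟨M', hM'conn, hM'w, hM'card⟩ := CMAux.augment hconn hw hMconn hv hvs
  have hM'T : M' ∈ 𝒯 := Finset.mem_filter.2 ⟨(hmemS M').2 hM'conn, le_trans hMw hM'w⟩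
  exact absurd (hMmax M' hM'T) (by omega)
end

section
/- In a chordal graph G with edge weights, if M is a matching such that some minimal vertex separator S of G contains two distinct vertices v₁, v₂ not saturated by M, then M ∪ {v₁v₂} is also a matching of G. Consequently, every chordal graph has a maximum cardinality matching M such that every minimal separator S satisfies |S| − 1 ≤ |V(M) ∩ S| ≤ |S|. -/
open Finset

/-- `G` is chordal: every cycle of length greater than `3` has a chord. -/
def IsChordalG {V : Type*} (G : SimpleGraph V) : Prop :=
  ∀ ⦃v : V⦄ (c : G.Walk v v), c.IsCycle → 3 < c.length →
    ∃ a b : V, a ∈ c.support ∧ b ∈ c.support ∧ G.Adj a b ∧ s(a, b) ∉ c.edges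

/-- `S` separates the pair `a, b`: they are connected in `G` but not after removing `S`. -/
def SeparatesPair {V : Type*} (G : SimpleGraph V) (S : Set V) (a b : V) : Prop :=
  G.Reachable a b ∧
    ∀ (ha : a ∈ (Sᶜ : Set V)) (hb : b ∈ (Sᶜ : Set V)),
      ¬ (G.induce (Sᶜ : Set V)).Reachable ⟨a, ha⟩ ⟨b, hb⟩

/-- `S` is a minimal vertex separator of `G`: it separates some pair of vertices outside `S`
that are connected in `G`, and no proper subset of `S` does so. -/
def IsMinimalSeparator {V : Type*} (G : SimpleGraph V) (S : Set V) : Prop :=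
  (∃ a b : V, a ∉ S ∧ b ∉ S ∧ SeparatesPair G S a b) ∧
    ∀ T : Set V, T ⊂ S → ¬ ∃ a b : V, a ∉ T ∧ b ∉ T ∧ SeparatesPair G T a b

section ChordalAux

open SimpleGraph

set_option linter.unusedSectionVars false
set_option maxHeartbeats 1600000

variable {V : Type*} [DecidableEq V] {G : SimpleGraph V} {S : Set V}

private lemma reach_of_walk : ∀ {x y : V} (p : G.Walk x y), (∀ z ∈ p.support, z ∉ S) →
    ∀ (hx : x ∈ (Sᶜ : Set V)) (hy : y ∈ (Sᶜ : Set V)),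
    (G.induce (Sᶜ : Set V)).Reachable ⟨x, hx⟩ ⟨y, hy⟩ := by
  intro x y p
  induction p with
  | nil => intro _ hx hy; rfl
  | @cons x z y h q ih =>
    intro hp hx hy
    have hz : z ∉ S := hp z (by simp)
    have hadj : (G.induce (Sᶜ : Set V)).Adj ⟨x, hx⟩ ⟨z, hz⟩ := by
      simp [comap_adj, h]
    exact hadj.reachable.trans (ih (fun w hw => hp w (by simp [hw])) hz hy)

lemma walk_of_reach {x y : V} (hx : x ∈ (Sᶜ : Set V)) (hy : y ∈ (Sᶜ : Set V))
    (h : (G.induce (Sᶜ : Set V)).Reachable ⟨x, hx⟩ ⟨y, hy⟩) :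
    ∃ p : G.Walk x y, ∀ z ∈ p.support, z ∉ S := by
  obtain ⟨w⟩ := h
  refine ⟨w.map (Embedding.induce (Sᶜ : Set V)).toHom, ?_⟩
  intro z hz
  change z ∈ (w.map (Embedding.induce (Sᶜ : Set V)).toHom).support at hz
  rw [SimpleGraph.Walk.support_map] at hz
  obtain ⟨⟨z', hz'⟩, _, rfl⟩ := List.mem_map.mp hz
  exact hz'

private lemma edge_mem_of_length_one : ∀ {x y : V} (p : G.Walk x y), p.length = 1 → s(x, y) ∈ p.edges := by
  intro x y p
  cases p with
  | nil => simp
  | cons hadj q =>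
    cases q with
    | nil => simp
    | cons h2 q2 => intro h; simp [SimpleGraph.Walk.length_cons] at h

private lemma shortcut {u w : V} (p : G.Walk u w) (hp : p.IsPath) {x y : V}
    (hx : x ∈ p.support) (hy : y ∈ p.support) (hxy : G.Adj x y)
    (he : s(x, y) ∉ p.edges) :
    ∃ q : G.Walk u w, (∀ z ∈ q.support, z ∈ p.support) ∧ q.length < p.length := by
  classical
  have hspec := p.take_spec hx
  have hlen : (p.takeUntil x hx).length + (p.dropUntil x hx).length = p.length := by
    have := congrArg SimpleGraph.Walk.length hspec
    rwa [SimpleGraph.Walk.length_append] at this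
  have hysplit : y ∈ (p.takeUntil x hx).support ∨ y ∈ (p.dropUntil x hx).support := by
    have h' : y ∈ ((p.takeUntil x hx).append (p.dropUntil x hx)).support := by rw [hspec]; exact hy
    rw [SimpleGraph.Walk.mem_support_append_iff] at h'
    exact h'
  rcases hysplit with hyt | hyd
  · -- y in the first part; new walk u → y → x → w
    set t := p.takeUntil x hx with ht
    set d := p.dropUntil x hx with hd
    have htlen : (t.takeUntil y hyt).length + (t.dropUntil y hyt).length = t.length := by
      have := congrArg SimpleGraph.Walk.length (t.take_spec hyt)
      rwa [SimpleGraph.Walk.length_append] at this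
    have h2 : 2 ≤ (t.dropUntil y hyt).length := by
      rcases Nat.lt_or_ge (t.dropUntil y hyt).length 2 with hlt | hge
      · interval_cases hl : (t.dropUntil y hyt).length
        · exact absurd (SimpleGraph.Walk.eq_of_length_eq_zero hl) hxy.ne'
        · exfalso
          have : s(y, x) ∈ (t.dropUntil y hyt).edges := edge_mem_of_length_one _ hl
          rw [Sym2.eq_swap] at this
          exact he (SimpleGraph.Walk.edges_takeUntil_subset _ _
            (SimpleGraph.Walk.edges_dropUntil_subset _ _ this))
      · exact hge
    refine ⟨(t.takeUntil y hyt).append (SimpleGraph.Walk.cons hxy.symm d), ?_, ?_⟩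
    · intro z hz
      rw [SimpleGraph.Walk.mem_support_append_iff] at hz
      rcases hz with hz | hz
      · exact SimpleGraph.Walk.support_takeUntil_subset _ _
          (SimpleGraph.Walk.support_takeUntil_subset _ _ hz)
      · rw [SimpleGraph.Walk.support_cons, List.mem_cons] at hz
        rcases hz with rfl | hz
        · exact hy
        · exact SimpleGraph.Walk.support_dropUntil_subset _ _ hz
    · rw [SimpleGraph.Walk.length_append, SimpleGraph.Walk.length_cons]
      omega
  · -- y in the second part; new walk u → x → y → w
    set t := p.takeUntil x hx with ht
    set d := p.dropUntil x hx with hd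
    have hdlen : (d.takeUntil y hyd).length + (d.dropUntil y hyd).length = d.length := by
      have := congrArg SimpleGraph.Walk.length (d.take_spec hyd)
      rwa [SimpleGraph.Walk.length_append] at this
    have h2 : 2 ≤ (d.takeUntil y hyd).length := by
      rcases Nat.lt_or_ge (d.takeUntil y hyd).length 2 with hlt | hge
      · interval_cases hl : (d.takeUntil y hyd).length
        · exact absurd (SimpleGraph.Walk.eq_of_length_eq_zero hl) hxy.ne
        · exfalso
          have : s(x, y) ∈ (d.takeUntil y hyd).edges := edge_mem_of_length_one _ hl
          exact he (SimpleGraph.Walk.edges_dropUntil_subset _ _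
            (SimpleGraph.Walk.edges_takeUntil_subset _ _ this))
      · exact hge
    refine ⟨t.append (SimpleGraph.Walk.cons hxy (d.dropUntil y hyd)), ?_, ?_⟩
    · intro z hz
      rw [SimpleGraph.Walk.mem_support_append_iff] at hz
      rcases hz with hz | hz
      · exact SimpleGraph.Walk.support_takeUntil_subset _ _ hz
      · rw [SimpleGraph.Walk.support_cons, List.mem_cons] at hz
        rcases hz with rfl | hz
        · exact hx
        · exact SimpleGraph.Walk.support_dropUntil_subset _ _
            (SimpleGraph.Walk.support_dropUntil_subset _ _ hz)
    · rw [SimpleGraph.Walk.length_append, SimpleGraph.Walk.length_cons]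
      omega

private lemma exists_min_good_path (W : Set V) {u w : V}
    (hex : ∃ p : G.Walk u w, ∀ z ∈ p.support, z ∈ W) :
    ∃ p : G.Walk u w, p.IsPath ∧ (∀ z ∈ p.support, z ∈ W) ∧
      ∀ x y, x ∈ p.support → y ∈ p.support → G.Adj x y → s(x, y) ∈ p.edges := by
  classical
  have hex' : ∃ n, ∃ p : G.Walk u w, (∀ z ∈ p.support, z ∈ W) ∧ p.length = n := by
    obtain ⟨p, hp⟩ := hex
    exact ⟨p.length, p, hp, rfl⟩
  obtain ⟨p, hp, hlen⟩ := Nat.find_spec hex'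
  have hbgood : ∀ z ∈ p.bypass.support, z ∈ W := fun z hz => hp z (p.support_bypass_subset hz)
  have hblen : p.bypass.length = Nat.find hex' := by
    have h1 : p.bypass.length ≤ Nat.find hex' := hlen ▸ p.length_bypass_le
    have h2 : Nat.find hex' ≤ p.bypass.length := Nat.find_le ⟨p.bypass, hbgood, rfl⟩
    omega
  refine ⟨p.bypass, p.bypass_isPath, hbgood, ?_⟩
  intro x y hx hy hadj
  by_contra he
  obtain ⟨q, hqsup, hqlen⟩ := shortcut p.bypass p.bypass_isPath hx hy hadj he
  exact Nat.find_min hex' (m := q.length) (by omega)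
    ⟨q, fun z hz => hbgood z (hqsup z hz), rfl⟩

private lemma sep_neighbor (hmin : IsMinimalSeparator G S) {a b : V} (ha : a ∉ S) (hb : b ∉ S)
    (hsp : SeparatesPair G S a b) {s : V} (hs : s ∈ S) :
    ∃ x, G.Adj s x ∧ ∃ p : G.Walk a x, ∀ z ∈ p.support, z ∉ S := by
  classical
  set T : Set V := S \ {s} with hT
  have hTS : T ⊂ S := by
    rw [Set.ssubset_def]
    exact ⟨Set.diff_subset, fun h => (h hs).2 rfl⟩
  have hnsep := hmin.2 T hTS
  push_neg at hnsep
  have haT : a ∉ T := fun h => ha h.1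
  have hbT : b ∉ T := fun h => hb h.1
  have hns : ¬ SeparatesPair G T a b := hnsep a b haT hbT
  rw [SeparatesPair, not_and] at hns
  have hns2 := hns hsp.1
  push_neg at hns2
  obtain ⟨haT', hbT', hreach⟩ := hns2
  obtain ⟨p, hp⟩ := walk_of_reach haT' hbT' hreach
  set p' := p.bypass with hp'def
  have hp'path : p'.IsPath := p.bypass_isPath
  have hp'T : ∀ z ∈ p'.support, z ∉ T := fun z hz => hp z (p.support_bypass_subset hz)
  by_cases hsp' : s ∈ p'.support
  · set q := p'.takeUntil s hsp' with hqdef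
    have hq : q.IsPath := hp'path.takeUntil _
    have hqr : q.reverse.IsPath := hq.reverse
    have hsa : s ≠ a := fun h => ha (h ▸ hs)
    obtain ⟨x, hadj, q', heq⟩ := SimpleGraph.Walk.exists_eq_cons_of_ne hsa q.reverse
    rw [heq, SimpleGraph.Walk.cons_isPath_iff] at hqr
    refine ⟨x, hadj, q'.reverse, ?_⟩
    intro z hz
    rw [SimpleGraph.Walk.support_reverse, List.mem_reverse] at hz
    have hzq : z ∈ q.support := by
      rw [← List.mem_reverse, ← SimpleGraph.Walk.support_reverse, heq]
      rw [SimpleGraph.Walk.support_cons]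
      exact List.mem_cons_of_mem _ hz
    have hzT : z ∉ T := hp'T z (SimpleGraph.Walk.support_takeUntil_subset _ _ hzq)
    have hzs : z ≠ s := fun h => hqr.2 (h ▸ hz)
    intro hzS
    exact hzT ⟨hzS, hzs⟩
  · exfalso
    have hps : ∀ z ∈ p'.support, z ∉ S := by
      intro z hz hzS
      have hzT : z ∉ T := hp'T z hz
      have : z = s := by
        by_contra hzs
        exact hzT ⟨hzS, hzs⟩
      exact hsp' (this ▸ hz)
    exact hsp.2 ha hb (reach_of_walk p' hps ha hb)

private lemma minsep_clique (hch : IsChordalG G) (hS : IsMinimalSeparator G S) {v₁ v₂ : V}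
    (h₁ : v₁ ∈ S) (h₂ : v₂ ∈ S) (hne : v₁ ≠ v₂) : G.Adj v₁ v₂ := by
  classical
  by_contra hadj
  obtain ⟨a, b, ha, hb, hsp⟩ := hS.1
  set Aw : Set V := {x | ∃ p : G.Walk a x, ∀ z ∈ p.support, z ∉ S} with hAw
  set Bw : Set V := {x | ∃ p : G.Walk b x, ∀ z ∈ p.support, z ∉ S} with hBw
  have hAS : ∀ x ∈ Aw, x ∉ S := by
    rintro x ⟨p, hp⟩
    exact hp x p.end_mem_support
  have hBS : ∀ x ∈ Bw, x ∉ S := by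
    rintro x ⟨p, hp⟩
    exact hp x p.end_mem_support
  have mix : ∀ x y, x ∈ Aw → y ∈ Bw → x = y ∨ G.Adj x y → False := by
    rintro x y ⟨p, hp⟩ ⟨q, hq⟩ hxy
    have hwalk : ∃ r : G.Walk a b, ∀ z ∈ r.support, z ∉ S := by
      rcases hxy with rfl | h
      · refine ⟨p.append q.reverse, ?_⟩
        intro z hz
        rw [SimpleGraph.Walk.mem_support_append_iff] at hz
        rcases hz with hz | hz
        · exact hp z hz
        · rw [SimpleGraph.Walk.support_reverse, List.mem_reverse] at hz
          exact hq z hz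
      · refine ⟨p.append (SimpleGraph.Walk.cons h q.reverse), ?_⟩
        intro z hz
        rw [SimpleGraph.Walk.mem_support_append_iff] at hz
        rcases hz with hz | hz
        · exact hp z hz
        · rw [SimpleGraph.Walk.support_cons, List.mem_cons] at hz
          rcases hz with rfl | hz
          · exact hp z p.end_mem_support
          · rw [SimpleGraph.Walk.support_reverse, List.mem_reverse] at hz
            exact hq z hz
    obtain ⟨r, hr⟩ := hwalk
    exact hsp.2 ha hb (reach_of_walk r hr ha hb)
  have hspB : SeparatesPair G S b a :=
    ⟨hsp.1.symm, fun hb' ha' hr => hsp.2 ha' hb' hr.symm⟩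
  obtain ⟨x₁, hax₁, p₁, hp₁⟩ := sep_neighbor hS ha hb hsp h₁
  obtain ⟨x₂, hax₂, p₂, hp₂⟩ := sep_neighbor hS ha hb hsp h₂
  obtain ⟨y₁, hby₁, q₁, hq₁⟩ := sep_neighbor hS hb ha hspB h₁
  obtain ⟨y₂, hby₂, q₂, hq₂⟩ := sep_neighbor hS hb ha hspB h₂
  set WA : Set V := {z | z = v₁ ∨ z = v₂ ∨ z ∈ Aw} with hWA
  set WB : Set V := {z | z = v₁ ∨ z = v₂ ∨ z ∈ Bw} with hWB
  have hexA : ∃ p : G.Walk v₁ v₂, ∀ z ∈ p.support, z ∈ WA := by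
    refine ⟨SimpleGraph.Walk.cons hax₁ ((p₁.reverse.append p₂).concat hax₂.symm), ?_⟩
    intro z hz
    rw [SimpleGraph.Walk.support_cons, List.mem_cons] at hz
    rcases hz with rfl | hz
    · exact Or.inl rfl
    rw [SimpleGraph.Walk.support_concat, List.mem_append] at hz
    rcases hz with hz | hz
    · rw [SimpleGraph.Walk.mem_support_append_iff] at hz
      refine Or.inr (Or.inr ?_)
      rcases hz with hz | hz
      · rw [SimpleGraph.Walk.support_reverse, List.mem_reverse] at hz
        exact ⟨p₁.takeUntil z hz, fun w hw =>
          hp₁ w (SimpleGraph.Walk.support_takeUntil_subset _ _ hw)⟩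
      · exact ⟨p₂.takeUntil z hz, fun w hw =>
          hp₂ w (SimpleGraph.Walk.support_takeUntil_subset _ _ hw)⟩
    · rw [List.mem_singleton] at hz
      exact Or.inr (Or.inl hz)
  have hexB : ∃ p : G.Walk v₁ v₂, ∀ z ∈ p.support, z ∈ WB := by
    refine ⟨SimpleGraph.Walk.cons hby₁ ((q₁.reverse.append q₂).concat hby₂.symm), ?_⟩
    intro z hz
    rw [SimpleGraph.Walk.support_cons, List.mem_cons] at hz
    rcases hz with rfl | hz
    · exact Or.inl rfl
    rw [SimpleGraph.Walk.support_concat, List.mem_append] at hz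
    rcases hz with hz | hz
    · rw [SimpleGraph.Walk.mem_support_append_iff] at hz
      refine Or.inr (Or.inr ?_)
      rcases hz with hz | hz
      · rw [SimpleGraph.Walk.support_reverse, List.mem_reverse] at hz
        exact ⟨q₁.takeUntil z hz, fun w hw =>
          hq₁ w (SimpleGraph.Walk.support_takeUntil_subset _ _ hw)⟩
      · exact ⟨q₂.takeUntil z hz, fun w hw =>
          hq₂ w (SimpleGraph.Walk.support_takeUntil_subset _ _ hw)⟩
    · rw [List.mem_singleton] at hz
      exact Or.inr (Or.inl hz)
  obtain ⟨P1, hP1path, hP1good, hP1chord⟩ := exists_min_good_path WA hexA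
  obtain ⟨P2, hP2path, hP2good, hP2chord⟩ := exists_min_good_path WB hexB
  have hAint : ∀ z ∈ P1.support, z ≠ v₁ → z ≠ v₂ → z ∈ Aw := by
    intro z hz h1 h2
    rcases hP1good z hz with h | h | h
    · exact absurd h h1
    · exact absurd h h2
    · exact h
  have hBint : ∀ z ∈ P2.support, z ≠ v₁ → z ≠ v₂ → z ∈ Bw := by
    intro z hz h1 h2
    rcases hP2good z hz with h | h | h
    · exact absurd h h1
    · exact absurd h h2
    · exact h
  have hlen1 : 2 ≤ P1.length := by
    rcases Nat.lt_or_ge P1.length 2 with hlt | hge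
    · interval_cases hl : P1.length
      · exact absurd (SimpleGraph.Walk.eq_of_length_eq_zero hl) hne
      · exact absurd (P1.adj_of_mem_edges (edge_mem_of_length_one P1 hl)) hadj
    · exact hge
  have hlen2 : 2 ≤ P2.length := by
    rcases Nat.lt_or_ge P2.length 2 with hlt | hge
    · interval_cases hl : P2.length
      · exact absurd (SimpleGraph.Walk.eq_of_length_eq_zero hl) hne
      · exact absurd (P2.adj_of_mem_edges (edge_mem_of_length_one P2 hl)) hadj
    · exact hge
  set C : G.Walk v₁ v₁ := P1.append P2.reverse with hC
  have hClen : C.length = P1.length + P2.length := by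
    rw [hC, SimpleGraph.Walk.length_append, SimpleGraph.Walk.length_reverse]
  have hinter : ∀ z, z ∈ P1.support → z ∈ P2.support → z = v₁ ∨ z = v₂ := by
    intro z hz1 hz2
    by_contra hcon
    push_neg at hcon
    exact mix z z (hAint z hz1 hcon.1 hcon.2) (hBint z hz2 hcon.1 hcon.2) (Or.inl rfl)
  have hCedges : ∀ e, e ∈ C.edges → e ∈ P1.edges ∨ e ∈ P2.edges := by
    intro e he
    rw [hC, SimpleGraph.Walk.edges_append, List.mem_append] at he
    rcases he with he | he
    · exact Or.inl he
    · rw [SimpleGraph.Walk.edges_reverse, List.mem_reverse] at he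
      exact Or.inr he
  have hcyc : C.IsCycle := by
    rw [SimpleGraph.Walk.isCycle_def]
    refine ⟨⟨?_⟩, ?_, ?_⟩
    · -- edges nodup
      rw [hC, SimpleGraph.Walk.edges_append, SimpleGraph.Walk.edges_reverse]
      refine List.Nodup.append hP1path.isTrail.edges_nodup
        (List.nodup_reverse.mpr hP2path.isTrail.edges_nodup) ?_
      intro e he1 he2
      rw [List.mem_reverse] at he2
      induction e with
      | h u w =>
        have hu1 : u ∈ P1.support := P1.fst_mem_support_of_mem_edges he1
        have hw1 : w ∈ P1.support := P1.snd_mem_support_of_mem_edges he1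
        have hu2 : u ∈ P2.support := P2.fst_mem_support_of_mem_edges he2
        have hw2 : w ∈ P2.support := P2.snd_mem_support_of_mem_edges he2
        have huw : G.Adj u w := P1.adj_of_mem_edges he1
        rcases hinter u hu1 hu2 with rfl | rfl <;> rcases hinter w hw1 hw2 with rfl | rfl
        · exact huw.ne rfl
        · exact hadj huw
        · exact hadj huw.symm
        · exact huw.ne rfl
    · -- not nil
      intro h
      rw [h] at hClen
      simp at hClen
      omega
    · -- support tail nodup
      have hsup : C.support = v₁ :: (P1.support.tail ++ P2.reverse.support.tail) := by
        rw [hC, SimpleGraph.Walk.support_append]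
        conv_lhs => rw [P1.support_eq_cons]
        rfl
      rw [hsup]
      simp only [List.tail_cons]
      have hn1 : P1.support.Nodup := hP1path.support_nodup
      have hv1t : v₁ ∉ P1.support.tail := by
        rw [P1.support_eq_cons] at hn1
        exact (List.nodup_cons.mp hn1).1
      have hn2 : P2.reverse.support.Nodup := hP2path.reverse.support_nodup
      have hv2t : v₂ ∉ P2.reverse.support.tail := by
        rw [P2.reverse.support_eq_cons] at hn2
        exact (List.nodup_cons.mp hn2).1
      refine List.Nodup.append hn1.tail hn2.tail ?_
      intro z hz1 hz2
      have hz1' : z ∈ P1.support := List.mem_of_mem_tail hz1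
      have hz2' : z ∈ P2.support := by
        have := List.mem_of_mem_tail hz2
        rwa [SimpleGraph.Walk.support_reverse, List.mem_reverse] at this
      have hzv1 : z ≠ v₁ := fun h => hv1t (h ▸ hz1)
      have hzv2 : z ≠ v₂ := fun h => hv2t (h ▸ hz2)
      exact mix z z (hAint z hz1' hzv1 hzv2) (hBint z hz2' hzv1 hzv2) (Or.inl rfl)
  obtain ⟨x, y, hx, hy, hxyadj, hchord⟩ := hch C hcyc (by omega)
  have hxC : x ∈ P1.support ∨ x ∈ P2.support := by
    rw [hC, SimpleGraph.Walk.mem_support_append_iff] at hx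
    rcases hx with h | h
    · exact Or.inl h
    · rw [SimpleGraph.Walk.support_reverse, List.mem_reverse] at h
      exact Or.inr h
  have hyC : y ∈ P1.support ∨ y ∈ P2.support := by
    rw [hC, SimpleGraph.Walk.mem_support_append_iff] at hy
    rcases hy with h | h
    · exact Or.inl h
    · rw [SimpleGraph.Walk.support_reverse, List.mem_reverse] at h
      exact Or.inr h
  have hch1 : s(x, y) ∉ P1.edges := fun h => hchord (by
    rw [hC, SimpleGraph.Walk.edges_append, List.mem_append]; exact Or.inl h)
  have hch2 : s(x, y) ∉ P2.edges := fun h => hchord (by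
    rw [hC, SimpleGraph.Walk.edges_append, List.mem_append]
    exact Or.inr (by rw [SimpleGraph.Walk.edges_reverse, List.mem_reverse]; exact h))
  -- final case analysis
  by_cases hx1 : x ∈ P1.support <;> by_cases hy1 : y ∈ P1.support
  · exact hch1 (hP1chord x y hx1 hy1 hxyadj)
  · -- x ∈ P1, y ∉ P1 so y ∈ P2
    have hy2 : y ∈ P2.support := hyC.resolve_left hy1
    by_cases hx2 : x ∈ P2.support
    · exact hch2 (hP2chord x y hx2 hy2 hxyadj)
    · have hxv1 : x ≠ v₁ := fun h => hx2 (h ▸ P2.start_mem_support)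
      have hxv2 : x ≠ v₂ := fun h => hx2 (h ▸ P2.end_mem_support)
      have hyv1 : y ≠ v₁ := fun h => hy1 (h ▸ P1.start_mem_support)
      have hyv2 : y ≠ v₂ := fun h => hy1 (h ▸ P1.end_mem_support)
      exact mix x y (hAint x hx1 hxv1 hxv2) (hBint y hy2 hyv1 hyv2) (Or.inr hxyadj)
  · -- y ∈ P1, x ∉ P1 so x ∈ P2
    have hx2 : x ∈ P2.support := hxC.resolve_left hx1
    by_cases hy2 : y ∈ P2.support
    · exact hch2 (hP2chord x y hx2 hy2 hxyadj)
    · have hyv1 : y ≠ v₁ := fun h => hy2 (h ▸ P2.start_mem_support)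
      have hyv2 : y ≠ v₂ := fun h => hy2 (h ▸ P2.end_mem_support)
      have hxv1 : x ≠ v₁ := fun h => hx1 (h ▸ P1.start_mem_support)
      have hxv2 : x ≠ v₂ := fun h => hx1 (h ▸ P1.end_mem_support)
      exact mix y x (hAint y hy1 hyv1 hyv2) (hBint x hx2 hxv1 hxv2) (Or.inr hxyadj.symm)
  · have hx2 : x ∈ P2.support := hxC.resolve_left hx1
    have hy2 : y ∈ P2.support := hyC.resolve_left hy1
    exact hch2 (hP2chord x y hx2 hy2 hxyadj)

end ChordalAux

set_option maxHeartbeats 1600000 in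
/-- In a chordal graph: (1) two distinct unsaturated vertices of a minimal separator can be
added as a matching edge; (2) there is a maximum cardinality matching such that every
minimal separator has at most one unsaturated vertex. -/
theorem chordal_minimalSeparator_matching {V : Type*} [Fintype V] [DecidableEq V]
    (G : SimpleGraph V) (hch : IsChordalG G) :
    (∀ (M : Finset (Sym2 V)) (S : Set V), IsMatchingF G M → IsMinimalSeparator G S →
      ∀ v₁ v₂ : V, v₁ ∈ S → v₂ ∈ S → v₁ ≠ v₂ →
        v₁ ∉ satSet M → v₂ ∉ satSet M →
        IsMatchingF G (M ∪ {s(v₁, v₂)})) ∧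
    ∃ M : Finset (Sym2 V), IsMatchingF G M ∧
      (∀ M' : Finset (Sym2 V), IsMatchingF G M' → M'.card ≤ M.card) ∧
      ∀ S : Set V, IsMinimalSeparator G S →
        S.ncard - 1 ≤ (satSet M ∩ S).ncard ∧ (satSet M ∩ S).ncard ≤ S.ncard := by
  classical
  have part1 : ∀ (M : Finset (Sym2 V)) (S : Set V), IsMatchingF G M → IsMinimalSeparator G S →
      ∀ v₁ v₂ : V, v₁ ∈ S → v₂ ∈ S → v₁ ≠ v₂ →
        v₁ ∉ satSet M → v₂ ∉ satSet M →
        IsMatchingF G (M ∪ {s(v₁, v₂)}) := by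
    intro M S hM hS v₁ v₂ h₁ h₂ hne hu₁ hu₂
    have hadj : G.Adj v₁ v₂ := minsep_clique hch hS h₁ h₂ hne
    constructor
    · intro e he
      rcases Finset.mem_union.mp he with h | h
      · exact hM.1 e h
      · rw [Finset.mem_singleton] at h
        subst h
        exact hadj
    · intro e he f hf hef v hv
      have key : ∀ g ∈ M, v ∈ g → ¬ v ∈ (s(v₁, v₂) : Sym2 V) := by
        intro g hg hvg hvs
        rcases Sym2.mem_iff.mp hvs with rfl | rfl
        · exact hu₁ ⟨g, hg, hvg⟩
        · exact hu₂ ⟨g, hg, hvg⟩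
      rcases Finset.mem_union.mp he with he' | he' <;>
        rcases Finset.mem_union.mp hf with hf' | hf'
      · exact hM.2 e he' f hf' hef v hv
      · rw [Finset.mem_singleton] at hf'
        subst hf'
        exact key e he' hv.1 hv.2
      · rw [Finset.mem_singleton] at he'
        subst he'
        exact key f hf' hv.2 hv.1
      · rw [Finset.mem_singleton] at he' hf'
        exact hef (he'.trans hf'.symm)
  refine ⟨part1, ?_⟩
  obtain ⟨M, hMmem, hMmax⟩ := Finset.exists_max_image
    (Finset.univ.filter fun M : Finset (Sym2 V) => IsMatchingF G M) Finset.card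
    ⟨∅, by simp [IsMatchingF]⟩
  rw [Finset.mem_filter] at hMmem
  have hM : IsMatchingF G M := hMmem.2
  have hmax : ∀ M' : Finset (Sym2 V), IsMatchingF G M' → M'.card ≤ M.card := by
    intro M' hM'
    exact hMmax M' (Finset.mem_filter.mpr ⟨Finset.mem_univ _, hM'⟩)
  refine ⟨M, hM, hmax, ?_⟩
  intro S hS
  have hub : (satSet M ∩ S).ncard ≤ S.ncard :=
    Set.ncard_le_ncard Set.inter_subset_right S.toFinite
  refine ⟨?_, hub⟩
  by_cases h : ∃ v ∈ S, v ∉ satSet M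
  · obtain ⟨v, hvS, hv⟩ := h
    have hsub : S ⊆ (satSet M ∩ S) ∪ {v} := by
      intro w hw
      by_cases hw' : w ∈ satSet M
      · exact Or.inl ⟨hw', hw⟩
      · have hwv : w = v := by
          by_contra hne
          have h2 := part1 M S hM hS w v hw hvS hne hw' hv
          have hnm : s(w, v) ∉ M := fun hmem => hw' ⟨_, hmem, by simp⟩
          have hcard := hmax (M ∪ {s(w, v)}) h2
          rw [Finset.union_comm, ← Finset.insert_eq,
            Finset.card_insert_of_notMem hnm] at hcard
          omega
        exact Or.inr (by simp [hwv])
    have h1 : S.ncard ≤ ((satSet M ∩ S) ∪ {v}).ncard :=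
      Set.ncard_le_ncard hsub (Set.toFinite _)
    have h2 : ((satSet M ∩ S) ∪ {v}).ncard ≤ (satSet M ∩ S).ncard + ({v} : Set V).ncard :=
      Set.ncard_union_le _ _
    rw [Set.ncard_singleton] at h2
    omega
  · push_neg at h
    have hsub : S ⊆ satSet M ∩ S := fun w hw => ⟨h w hw, hw⟩
    have := Set.ncard_le_ncard hsub (Set.toFinite _)
    omega
end

section
/- In a connected graph G, the maximum size of a matching equals the maximum size of a connected matching, i.e., there is a maximum matching whose saturated vertices induce a connected subgraph. -/
open Finset

/-!
Start from a maximum matching `M` and a submatching `N ⊆ M` whose vertex set `V(N)` induces a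
connected subgraph, and enlarge `N` until it is all of `M`. Since `V(M)` is a vertex cover, the rest
of `V(M)` lies at distance one or two from `V(N)`. At distance one, an edge of `M` joins `N`
directly. At distance two, through a vertex `b ∉ V(M)`, first rematch `V(N)` so that it absorbs `b`
at the cost of one of its vertices while staying connected; the new `M` is still maximum, and an
edge of `M` now joins `N` at `b`.

The rematching (exchange lemma): let `x` be adjacent to `a`, which `N` matches to `y`, and replace
`ay` by `xa`. If `V(N) - y + x` is still connected we are done. Otherwise the components of
`G[V(N) - y + x]` not containing `x` are perfectly matched by `N` and hang off `y` only, so they are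
rematched recursively to absorb `y`.
-/

namespace SimpleGraph

variable {V : Type*} {G : SimpleGraph V}

lemma preconnected_induce_iff_exists_walk {S : Set V} :
    (G.induce S).Preconnected ↔ ∀ u ∈ S, ∀ v ∈ S, ∃ p : G.Walk u v, ∀ w ∈ p.support, w ∈ S := by
  refine ⟨fun h u hu v hv => ?_, fun h u v => ?_⟩
  · obtain ⟨q⟩ := h ⟨u, hu⟩ ⟨v, hv⟩
    have hq : ∀ w ∈ (q.map (Embedding.induce S).toHom).support, w ∈ S := by
      simp only [Walk.support_map, List.mem_map]
      rintro _ ⟨w, -, rfl⟩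
      exact w.2
    exact ⟨_, hq⟩
  · obtain ⟨p, hp⟩ := h u u.2 v v.2
    exact ⟨p.induce S hp⟩

lemma preconnected_induce_of_forall_exists_walk_to {S : Set V} {x : V}
    (h : ∀ u ∈ S, ∃ p : G.Walk u x, ∀ w ∈ p.support, w ∈ S) : (G.induce S).Preconnected := by
  rw [preconnected_induce_iff_exists_walk]
  intro u hu v hv
  obtain ⟨p, hp⟩ := h u hu
  obtain ⟨q, hq⟩ := h v hv
  refine ⟨p.append q.reverse, fun w hw => ?_⟩
  rw [Walk.mem_support_append_iff, Walk.support_reverse, List.mem_reverse] at hw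
  exact hw.elim (hp w) (hq w)

lemma preconnected_induce_insert {S : Set V} {x a : V} (hS : (G.induce S).Preconnected)
    (ha : a ∈ S) (hxa : G.Adj x a) : (G.induce (insert x S)).Preconnected := by
  have hx : (G.induce {x}).Preconnected := fun u v => Subsingleton.elim u v ▸ Reachable.refl _
  simpa only [Set.singleton_union] using
    (connected_induce_union hx hS rfl ha hxa).preconnected

lemma exists_adj_of_preconnected_induce_insert {S : Set V} {x : V}
    (h : (G.induce (insert x S)).Preconnected) (hx : x ∉ S) (hS : S.Nonempty) :
    ∃ a ∈ S, G.Adj x a := by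
  obtain ⟨s, hs⟩ := hS
  obtain ⟨p, hp⟩ := preconnected_induce_iff_exists_walk.1 h x (Set.mem_insert x S) s
    (Set.mem_insert_of_mem x hs)
  obtain ⟨d, hd, hdx, hdx'⟩ := p.exists_boundary_dart {x} rfl (fun h => hx (h ▸ hs))
  rw [Set.mem_singleton_iff] at hdx
  refine ⟨d.snd, ?_, hdx ▸ d.adj⟩
  exact (hp _ (p.dart_snd_mem_support_of_mem_darts hd)).resolve_left hdx'

def componentIn (G : SimpleGraph V) (T : Set V) (x : V) : Set V :=
  {v | ∃ p : G.Walk x v, ∀ w ∈ p.support, w ∈ T}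

lemma componentIn_subset {T : Set V} {x : V} : G.componentIn T x ⊆ T :=
  fun _ ⟨p, hp⟩ => hp _ p.end_mem_support

lemma mem_componentIn_self {T : Set V} {x : V} (hx : x ∈ T) : x ∈ G.componentIn T x :=
  ⟨.nil, by simpa using hx⟩

lemma mem_componentIn_of_adj {T : Set V} {x v w : V} (hv : v ∈ G.componentIn T x) (hw : w ∈ T)
    (hvw : G.Adj v w) : w ∈ G.componentIn T x := by
  obtain ⟨p, hp⟩ := hv
  refine ⟨p.concat hvw, fun u hu => ?_⟩
  rw [Walk.support_concat, List.mem_append, List.mem_singleton] at hu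
  exact hu.elim (hp u) (· ▸ hw)

lemma preconnected_induce_componentIn (T : Set V) (x : V) :
    (G.induce (G.componentIn T x)).Preconnected := by
  classical
  refine preconnected_induce_of_forall_exists_walk_to (x := x) fun v ⟨p, hp⟩ => ⟨p.reverse, ?_⟩
  intro w hw
  rw [Walk.support_reverse, List.mem_reverse] at hw
  exact ⟨p.takeUntil w hw, fun u hu => hp u (p.support_takeUntil_subset_support hw hu)⟩

lemma mem_sdiff_componentIn_of_adj {T : Set V} {x v w : V} (hv : v ∈ T \ G.componentIn T x)
    (hw : w ∈ T) (hvw : G.Adj v w) : w ∈ T \ G.componentIn T x :=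
  ⟨hw, fun hwR => hv.2 (mem_componentIn_of_adj hwR hv.1 hvw.symm)⟩

lemma exists_walk_insert_of_closed {S D : Set V} {y : V}
    (hD : ∀ v ∈ D, ∀ w ∈ S, w ≠ y → G.Adj v w → w ∈ D) {u : V} (p : G.Walk u y)
    (hp : ∀ w ∈ p.support, w ∈ S) (hu : u ∈ D) :
    ∃ q : G.Walk u y, ∀ w ∈ q.support, w ∈ insert y D := by
  induction p with
  | nil => exact ⟨.nil, by simp⟩
  | @cons u v y huv p ih =>
    by_cases hvy : v = y
    · subst hvy
      exact ⟨.cons huv .nil, by simp [hu]⟩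
    · have hv : v ∈ D := hD u hu v (hp v (by simp)) hvy huv
      obtain ⟨q, hq⟩ := ih hD (fun w hw => hp w (by simp [hw])) hv
      refine ⟨.cons huv q, fun w hw => ?_⟩
      rw [Walk.support_cons, List.mem_cons] at hw
      exact hw.elim (fun h => h ▸ Set.mem_insert_of_mem y hu) (hq w)

lemma preconnected_induce_insert_of_closed {S D : Set V} {y : V}
    (hS : (G.induce S).Preconnected) (hy : y ∈ S) (hDS : D ⊆ S)
    (hD : ∀ v ∈ D, ∀ w ∈ S, w ≠ y → G.Adj v w → w ∈ D) :
    (G.induce (insert y D)).Preconnected := by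
  refine preconnected_induce_of_forall_exists_walk_to (x := y) fun u hu => ?_
  rcases hu with rfl | hu
  · exact ⟨.nil, by simp⟩
  · obtain ⟨p, hp⟩ := preconnected_induce_iff_exists_walk.1 hS u (hDS hu) y hy
    exact exists_walk_insert_of_closed hD p hp hu

lemma preconnected_induce_insert_sdiff_componentIn {S : Set V} {y : V}
    (hS : (G.induce S).Preconnected) (hy : y ∈ S) (x : V) :
    (G.induce (insert y ((S \ {y}) \ G.componentIn (S \ {y}) x))).Preconnected :=
  preconnected_induce_insert_of_closed hS hy (fun _ hv => hv.1.1)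
    fun _ hv _ hw hwy hvw => mem_sdiff_componentIn_of_adj hv ⟨hw, hwy⟩ hvw

lemma exists_adj_or_adj_adj_of_forall_adj_mem (hG : G.Preconnected) {S C : Set V}
    (hcover : ∀ p q, G.Adj p q → p ∈ S ∨ q ∈ S) {c₀ w₀ : V} (hc₀ : c₀ ∈ C) (hw₀ : w₀ ∈ S \ C) :
    ∃ c ∈ C, ∃ w ∈ S \ C, G.Adj c w ∨ ∃ b ∉ S, G.Adj c b ∧ G.Adj b w := by
  obtain ⟨p⟩ := hG c₀ w₀
  obtain ⟨d, -, hd, hd'⟩ := p.exists_boundary_dart (C ∪ {b | b ∉ S ∧ ∃ c ∈ C, G.Adj c b})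
    (Or.inl hc₀) (by rintro (h | ⟨h, -⟩); exacts [hw₀.2 h, h hw₀.1])
  simp only [Set.mem_union, Set.mem_ofPred_eq, not_or, not_and, not_exists] at hd hd'
  rcases hd with hdC | ⟨hdS, c, hc, hcd⟩
  · have hS : d.snd ∈ S := by_contra fun h => hd'.2 h d.fst hdC d.adj
    exact ⟨d.fst, hdC, d.snd, ⟨hS, hd'.1⟩, Or.inl d.adj⟩
  · have hS : d.snd ∈ S := (hcover _ _ d.adj).resolve_left hdS
    exact ⟨c, hc, d.snd, ⟨hS, hd'.1⟩, Or.inr ⟨d.fst, hdS, hcd, d.adj⟩⟩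

end SimpleGraph

section Matching

variable {V : Type*} {G : SimpleGraph V} {M N N' : Finset (Sym2 V)}

lemma satSet_empty : satSet (∅ : Finset (Sym2 V)) = ∅ := by
  simp [satSet]

lemma satSet_singleton (x y : V) : satSet {s(x, y)} = {x, y} := by
  ext v
  simp [satSet]

lemma satSet_mono (h : N ⊆ M) : satSet N ⊆ satSet M :=
  fun _ ⟨e, he, hv⟩ => ⟨e, h he, hv⟩

lemma satSet_union [DecidableEq V] (M N : Finset (Sym2 V)) :
    satSet (M ∪ N) = satSet M ∪ satSet N := by
  ext v
  simp only [satSet, Finset.mem_union, Set.mem_union, Set.mem_ofPred_eq, or_and_right, exists_or]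

lemma satSet_insert [DecidableEq V] (e : Sym2 V) (M : Finset (Sym2 V)) :
    satSet (insert e M) = {v | v ∈ e} ∪ satSet M := by
  ext v
  simp only [satSet, Finset.mem_insert, Set.mem_union, Set.mem_ofPred_eq, or_and_right, exists_or,
    exists_eq_left]

lemma disjoint_of_disjoint_satSet (h : Disjoint (satSet M) (satSet N)) : Disjoint M N :=
  Finset.disjoint_left.2 fun e heM heN =>
    Set.disjoint_left.1 h ⟨e, heM, e.out_fst_mem⟩ ⟨e, heN, e.out_fst_mem⟩

lemma eq_empty_of_satSet_eq_empty (h : satSet M = ∅) : M = ∅ :=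
  Finset.eq_empty_of_forall_notMem fun e he =>
    Set.eq_empty_iff_forall_notMem.1 h _ ⟨e, he, e.out_fst_mem⟩

lemma isMatchingF_singleton {x y : V} (h : G.Adj x y) : IsMatchingF G {s(x, y)} :=
  ⟨by simpa using h, by simp +contextual⟩

lemma card_lt_card_of_mem_satSet (h : N ⊆ M) {v : V} (hvM : v ∈ satSet M) (hvN : v ∉ satSet N) :
    N.card < M.card :=
  Finset.card_lt_card ⟨h, fun hMN => hvN (satSet_mono hMN hvM)⟩

lemma IsMatchingF.mono (hM : IsMatchingF G M) (h : N ⊆ M) : IsMatchingF G N :=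
  ⟨fun e he => hM.1 e (h he), fun e he f hf => hM.2 e (h he) f (h hf)⟩

lemma IsMatchingF.eq_of_mem (hM : IsMatchingF G M) {e f : Sym2 V} {v : V} (he : e ∈ M)
    (hf : f ∈ M) (hve : v ∈ e) (hvf : v ∈ f) : e = f :=
  by_contra fun hef => hM.2 e he f hf hef v ⟨hve, hvf⟩

lemma IsMatchingF.union [DecidableEq V] (hM : IsMatchingF G M) (hN : IsMatchingF G N)
    (h : Disjoint (satSet M) (satSet N)) : IsMatchingF G (M ∪ N) := by
  refine ⟨fun e he => (Finset.mem_union.1 he).elim (hM.1 e) (hN.1 e), ?_⟩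
  intro e he f hf hef v ⟨hve, hvf⟩
  rcases Finset.mem_union.1 he with he | he <;> rcases Finset.mem_union.1 hf with hf | hf
  · exact hM.2 e he f hf hef v ⟨hve, hvf⟩
  · exact Set.disjoint_left.1 h ⟨e, he, hve⟩ ⟨f, hf, hvf⟩
  · exact Set.disjoint_left.1 h ⟨f, hf, hvf⟩ ⟨e, he, hve⟩
  · exact hN.2 e he f hf hef v ⟨hve, hvf⟩

lemma satSet_sdiff [DecidableEq V] (hM : IsMatchingF G M) (h : N ⊆ M) :
    satSet (M \ N) = satSet M \ satSet N := by
  ext v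
  constructor
  · rintro ⟨e, he, hv⟩
    rw [Finset.mem_sdiff] at he
    exact ⟨⟨e, he.1, hv⟩, fun ⟨f, hf, hvf⟩ => he.2 (hM.eq_of_mem he.1 (h hf) hv hvf ▸ hf)⟩
  · rintro ⟨⟨e, he, hv⟩, hvN⟩
    exact ⟨e, Finset.mem_sdiff.2 ⟨he, fun heN => hvN ⟨e, heN, hv⟩⟩, hv⟩

lemma IsMatchingF.exists_replace [DecidableEq V] (hM : IsMatchingF G M) (hNM : N ⊆ M)
    (hN' : IsMatchingF G N') (h : Disjoint (satSet M \ satSet N) (satSet N')) :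
    ∃ M', IsMatchingF G M' ∧ N' ⊆ M' ∧ M'.card = M.card - N.card + N'.card ∧
      satSet M' = (satSet M \ satSet N) ∪ satSet N' := by
  rw [← satSet_sdiff hM hNM] at h
  refine ⟨M \ N ∪ N', (hM.mono Finset.sdiff_subset).union hN' h, Finset.subset_union_right, ?_, ?_⟩
  · rw [Finset.card_union_of_disjoint (disjoint_of_disjoint_satSet h),
      Finset.card_sdiff_of_subset hNM]
  · rw [satSet_union, satSet_sdiff hM hNM]

lemma IsMatchingF.exists_subset_satSet_eq (hN : IsMatchingF G N) {D : Set V}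
    (hD : D ⊆ satSet N) (hclosed : ∀ v ∈ D, ∀ w ∈ satSet N, G.Adj v w → w ∈ D) :
    ∃ N' ⊆ N, satSet N' = D := by
  classical
  refine ⟨N.filter fun e => ∀ v ∈ e, v ∈ D, Finset.filter_subset _ _, ?_⟩
  ext v
  refine ⟨fun ⟨e, he, hv⟩ => (Finset.mem_filter.1 he).2 v hv, fun hv => ?_⟩
  obtain ⟨e, he, hve⟩ := hD hv
  refine ⟨e, Finset.mem_filter.2 ⟨he, fun w hwe => ?_⟩, hve⟩
  by_cases hvw : v = w
  · exact hvw ▸ hv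
  · have hadj : G.Adj v w := by
      have := hN.1 e he
      rwa [(Sym2.mem_and_mem_iff hvw).1 ⟨hve, hwe⟩, SimpleGraph.mem_edgeSet] at this
    exact hclosed v hv w ⟨e, he, hwe⟩ hadj

lemma IsMatchingF.exists_rotate [DecidableEq V] (hN : IsMatchingF G N) {x a y : V}
    (he : s(a, y) ∈ N) (hx : x ∉ satSet N) (hxa : G.Adj x a) :
    ∃ N₁, IsMatchingF G N₁ ∧ N₁.card = N.card ∧ satSet N₁ = insert x (satSet N) \ {y} := by
  have hsub : {s(a, y)} ⊆ N := Finset.singleton_subset_iff.2 he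
  have ha : a ∈ satSet N := ⟨_, he, Sym2.mem_mk_left a y⟩
  have hy : y ∈ satSet N := ⟨_, he, Sym2.mem_mk_right a y⟩
  have hay : a ≠ y := G.ne_of_adj (hN.1 _ he)
  have hdisj : Disjoint (satSet N \ satSet {s(a, y)}) (satSet {s(x, a)}) := by
    rw [satSet_singleton, satSet_singleton, Set.disjoint_left]
    rintro v ⟨hvN, hvay⟩ (rfl | rfl)
    exacts [hx hvN, hvay (Or.inl rfl)]
  obtain ⟨N₁, hN₁, -, hN₁card, hN₁sat⟩ := hN.exists_replace hsub (isMatchingF_singleton hxa) hdisj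
  refine ⟨N₁, hN₁, ?_, ?_⟩
  · have : 1 ≤ N.card := Finset.card_pos.2 ⟨_, he⟩
    rw [hN₁card, Finset.card_singleton, Finset.card_singleton]
    omega
  · rw [hN₁sat, satSet_singleton, satSet_singleton]
    ext v
    simp only [Set.mem_union, Set.mem_sdiff, Set.mem_insert_iff, Set.mem_singleton_iff]
    grind

end Matching

lemma Set.union_insert_sdiff_sdiff_singleton {α : Type*} {A R : Set α} {y z : α}
    (hRA : R ⊆ A \ {y}) (hy : y ∈ A) (hzR : z ∉ R) :
    R ∪ insert y ((A \ {y}) \ R) \ {z} = A \ {z} := by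
  ext v
  have hv := @hRA v
  simp only [Set.mem_union, Set.mem_insert_iff, Set.mem_sdiff, Set.mem_singleton_iff] at hv ⊢
  grind

section Exchange

open SimpleGraph

variable {V : Type*} {G : SimpleGraph V}

theorem IsMatchingF.exists_exchange [DecidableEq V] {N : Finset (Sym2 V)} (hN : IsMatchingF G N)
    {x : V} (hx : x ∉ satSet N) (hne : (satSet N).Nonempty)
    (hconn : (G.induce (insert x (satSet N))).Preconnected) :
    ∃ N' z, IsMatchingF G N' ∧ N'.card = N.card ∧ z ∈ satSet N ∧
      satSet N' = insert x (satSet N) \ {z} ∧ (G.induce (satSet N')).Preconnected := by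
  induction hn : N.card using Nat.strong_induction_on generalizing N x with
  | _ n ih =>
  obtain ⟨a, ⟨e, he, hae⟩, hxa⟩ := exists_adj_of_preconnected_induce_insert hconn hx hne
  obtain ⟨y, rfl⟩ := Sym2.mem_iff_exists.1 hae
  have hyS : y ∈ satSet N := ⟨_, he, Sym2.mem_mk_right a y⟩
  obtain ⟨N₁, hN₁, hN₁card, hN₁sat⟩ := hN.exists_rotate he hx hxa
  set T := insert x (satSet N) \ {y}
  set R := G.componentIn T x
  have hxR : x ∈ R := mem_componentIn_self ⟨Set.mem_insert x _, fun h => hx (h ▸ hyS)⟩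
  by_cases hTR : T ⊆ R
  · refine ⟨N₁, y, hN₁, hN₁card.trans hn, hyS, hN₁sat, ?_⟩
    rw [hN₁sat, hTR.antisymm componentIn_subset]
    exact preconnected_induce_componentIn T x
  -- The components of `G[T]` missing `x` are rematched recursively, absorbing `y`.
  obtain ⟨N₂, hN₂N₁, hN₂sat⟩ := hN₁.exists_subset_satSet_eq (D := T \ R)
    (hN₁sat ▸ Set.sdiff_subset) fun v hv w hw => mem_sdiff_componentIn_of_adj hv (hN₁sat ▸ hw)
  have hlt : N₂.card < n := hn ▸ hN₁card ▸ card_lt_card_of_mem_satSet hN₂N₁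
    (hN₁sat ▸ componentIn_subset hxR) fun h => (hN₂sat ▸ h).2 hxR
  obtain ⟨d, hdT, hdR⟩ := Set.not_subset.1 hTR
  obtain ⟨N₃, z, hN₃, hN₃card, hz, hN₃sat, hN₃conn⟩ := ih _ hlt (hN₁.mono hN₂N₁) (x := y)
    (hN₂sat ▸ fun h => h.1.2 rfl) (hN₂sat ▸ ⟨d, hdT, hdR⟩)
    (hN₂sat ▸ preconnected_induce_insert_sdiff_componentIn hconn (Set.mem_insert_of_mem x hyS) x)
    rfl
  rw [hN₂sat] at hz hN₃sat
  have hdisj : Disjoint (satSet N₁ \ satSet N₂) (satSet N₃) := by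
    rw [hN₁sat, hN₂sat, hN₃sat, Set.disjoint_left]
    rintro v ⟨hvT, hvD⟩ ⟨rfl | hv, -⟩
    exacts [hvT.2 rfl, hvD hv]
  obtain ⟨N', hN', -, hN'card, hN'sat⟩ := hN₁.exists_replace hN₂N₁ hN₃ hdisj
  rw [hN₁sat, hN₂sat, hN₃sat, Set.sdiff_sdiff_cancel_left componentIn_subset] at hN'sat
  refine ⟨N', z, hN', ?_, hz.1.1.resolve_left fun h => hz.2 (h ▸ hxR), ?_, ?_⟩
  · rw [hN'card, hN₃card, Nat.sub_add_cancel (Finset.card_le_card hN₂N₁), hN₁card, hn]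
  · rw [hN'sat, Set.union_insert_sdiff_sdiff_singleton componentIn_subset
      (Set.mem_insert_of_mem x hyS) hz.2]
  · have haR : a ∈ R := mem_componentIn_of_adj hxR ⟨Set.mem_insert_of_mem x ⟨_, he, hae⟩,
      G.ne_of_adj (hN.1 _ he)⟩ hxa
    rw [hN'sat]
    rw [hN₃sat] at hN₃conn
    exact (connected_induce_union (preconnected_induce_componentIn T x) hN₃conn haR
      ⟨Set.mem_insert y _, fun h => hz.1.2 h.symm⟩ (hN.1 _ he)).preconnected

end Exchange

section Maximum

open SimpleGraph

variable {V : Type*} {G : SimpleGraph V} {M N : Finset (Sym2 V)}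

def IsMaximumMatchingF (G : SimpleGraph V) (M : Finset (Sym2 V)) : Prop :=
  IsMatchingF G M ∧ ∀ M' : Finset (Sym2 V), IsMatchingF G M' → M'.card ≤ M.card

lemma exists_isMaximumMatchingF [Finite V] (G : SimpleGraph V) : ∃ M, IsMaximumMatchingF G M := by
  classical
  have := Fintype.ofFinite V
  obtain ⟨M, hM, hmax⟩ := (Finset.univ.filter (IsMatchingF G)).exists_max_image Finset.card
    ⟨∅, Finset.mem_filter.2 ⟨Finset.mem_univ _, by simp [IsMatchingF]⟩⟩
  exact ⟨M, (Finset.mem_filter.1 hM).2, fun M' hM' => hmax M' (by simpa using hM')⟩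

lemma IsMaximumMatchingF.mem_or_mem_of_adj (hM : IsMaximumMatchingF G M) {p q : V}
    (hpq : G.Adj p q) : p ∈ satSet M ∨ q ∈ satSet M := by
  classical
  by_contra! h
  have hdisj : Disjoint (satSet M) (satSet {s(p, q)}) := by
    rw [satSet_singleton, Set.disjoint_left]
    rintro v hv (rfl | rfl)
    exacts [h.1 hv, h.2 hv]
  have hcard := hM.2 _ (hM.1.union (isMatchingF_singleton hpq) hdisj)
  rw [Finset.card_union_of_disjoint (disjoint_of_disjoint_satSet hdisj),
    Finset.card_singleton] at hcard
  omega

lemma preconnected_induce_satSet_insert [DecidableEq V] {e : Sym2 V} {c w : V}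
    (hN : (G.induce (satSet N)).Preconnected) (he : e ∈ G.edgeSet) (hwe : w ∈ e)
    (hc : c ∈ satSet N) (hcw : G.Adj c w) : (G.induce (satSet (insert e N))).Preconnected := by
  obtain ⟨w', rfl⟩ := Sym2.mem_iff_exists.1 hwe
  have he' : {v | v ∈ s(w, w')} = {w, w'} := by ext; simp
  rw [satSet_insert, he']
  exact (connected_induce_union (induce_pair_connected_of_adj he).preconnected hN
    (Set.mem_insert w _) hc hcw.symm).preconnected

lemma IsMaximumMatchingF.exists_larger_connected_submatching_of_adj [DecidableEq V]
    (hM : IsMaximumMatchingF G M) (hNM : N ⊆ M) (hN : (G.induce (satSet N)).Preconnected)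
    {c w : V} (hc : c ∈ satSet N) (hw : w ∈ satSet M \ satSet N) (hcw : G.Adj c w) :
    ∃ M' N', IsMaximumMatchingF G M' ∧ N' ⊆ M' ∧ (G.induce (satSet N')).Preconnected ∧
      N.card < N'.card := by
  obtain ⟨e, he, hwe⟩ := satSet_sdiff hM.1 hNM ▸ hw
  rw [Finset.mem_sdiff] at he
  exact ⟨M, insert e N, hM, Finset.insert_subset he.1 hNM,
    preconnected_induce_satSet_insert hN (hM.1.1 _ he.1) hwe hc hcw,
    Finset.card_lt_card (Finset.ssubset_insert he.2)⟩

lemma IsMaximumMatchingF.exists_larger_connected_submatching_of_adj_adj [DecidableEq V]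
    (hM : IsMaximumMatchingF G M) (hNM : N ⊆ M) (hN : (G.induce (satSet N)).Preconnected)
    {c b w : V} (hc : c ∈ satSet N) (hb : b ∉ satSet M) (hw : w ∈ satSet M \ satSet N)
    (hcb : G.Adj c b) (hbw : G.Adj b w) :
    ∃ M' N', IsMaximumMatchingF G M' ∧ N' ⊆ M' ∧ (G.induce (satSet N')).Preconnected ∧
      N.card < N'.card := by
  obtain ⟨N', z, hN', hN'card, hz, hN'sat, hN'conn⟩ := (hM.1.mono hNM).exists_exchange
    (fun h => hb (satSet_mono hNM h)) ⟨c, hc⟩ (preconnected_induce_insert hN hc hcb.symm)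
  have hdisj : Disjoint (satSet M \ satSet N) (satSet N') := by
    rw [hN'sat, Set.disjoint_left]
    rintro v ⟨hvM, hvN⟩ ⟨rfl | hv, -⟩
    exacts [hb hvM, hvN hv]
  obtain ⟨M', hM', hN'M', hM'card, hM'sat⟩ := hM.1.exists_replace hNM hN' hdisj
  have hM'max : IsMaximumMatchingF G M' := ⟨hM', fun M'' hM'' => by
    rw [hM'card, hN'card, Nat.sub_add_cancel (Finset.card_le_card hNM)]
    exact hM.2 M'' hM''⟩
  obtain ⟨e, he, hwe⟩ : w ∈ satSet M' := hM'sat ▸ Or.inl hw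
  have heN' : e ∉ N' := fun h => Set.disjoint_left.1 hdisj hw ⟨e, h, hwe⟩
  have hbN' : b ∈ satSet N' :=
    hN'sat ▸ ⟨Set.mem_insert b _, fun h => hb (h ▸ satSet_mono hNM hz)⟩
  exact ⟨M', insert e N', hM'max, Finset.insert_subset he hN'M',
    preconnected_induce_satSet_insert hN'conn (hM'.1 _ he) hwe hbN' hbw,
    hN'card ▸ Finset.card_lt_card (Finset.ssubset_insert heN')⟩

lemma IsMaximumMatchingF.exists_larger_connected_submatching [DecidableEq V]
    (hG : G.Preconnected) (hM : IsMaximumMatchingF G M) (hNM : N ⊆ M) (hNM' : N ≠ M)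
    (hN : (G.induce (satSet N)).Preconnected) :
    ∃ M' N', IsMaximumMatchingF G M' ∧ N' ⊆ M' ∧ (G.induce (satSet N')).Preconnected ∧
      N.card < N'.card := by
  obtain ⟨e, heM, heN⟩ := Finset.exists_of_ssubset (hNM.ssubset_of_ne hNM')
  rcases (satSet N).eq_empty_or_nonempty with hC | ⟨c₀, hc₀⟩
  · refine ⟨M, {e}, hM, Finset.singleton_subset_iff.2 heM, ?_, ?_⟩
    · induction e using Sym2.ind with
      | _ v w =>
        rw [satSet_singleton]
        exact (induce_pair_connected_of_adj (hM.1.1 _ heM)).preconnected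
    · simp [eq_empty_of_satSet_eq_empty hC]
  have hw₀ : e.out.1 ∈ satSet M \ satSet N :=
    satSet_sdiff hM.1 hNM ▸ ⟨e, Finset.mem_sdiff.2 ⟨heM, heN⟩, e.out_fst_mem⟩
  obtain ⟨c, hc, w, hw, hcw | ⟨b, hb, hcb, hbw⟩⟩ :=
    exists_adj_or_adj_adj_of_forall_adj_mem hG (fun _ _ => hM.mem_or_mem_of_adj) hc₀ hw₀
  · exact hM.exists_larger_connected_submatching_of_adj hNM hN hc hw hcw
  · exact hM.exists_larger_connected_submatching_of_adj_adj hNM hN hc hb hw hcb hbw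

lemma IsMaximumMatchingF.exists_preconnected [DecidableEq V] (hG : G.Preconnected)
    {M N : Finset (Sym2 V)} (hM : IsMaximumMatchingF G M) (hNM : N ⊆ M)
    (hN : (G.induce (satSet N)).Preconnected) :
    ∃ M', IsMaximumMatchingF G M' ∧ (G.induce (satSet M')).Preconnected := by
  by_cases hNM' : N = M
  · exact ⟨M, hM, hNM' ▸ hN⟩
  obtain ⟨M', N', hM', hN'M', hN', hlt⟩ :=
    hM.exists_larger_connected_submatching hG hNM hNM' hN
  exact hM'.exists_preconnected hG hN'M' hN'
termination_by M.card - N.card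
decreasing_by
  have := Finset.card_le_card hN'M'
  have := hM.2 _ hM'.1
  have := hM'.2 _ hM.1
  omega

end Maximum

/-- In a connected graph there is a maximum matching whose saturated vertices induce a
connected subgraph: the maximum sizes of matchings and of connected matchings coincide. -/
theorem exists_maximum_connected_matching {V : Type*} [Fintype V]
    (G : SimpleGraph V) (hconn : G.Connected) :
    ∃ M : Finset (Sym2 V), IsMatchingF G M ∧
      (G.induce (satSet M)).Preconnected ∧
      ∀ M' : Finset (Sym2 V), IsMatchingF G M' → M'.card ≤ M.card := by
  classical
  obtain ⟨M₀, hM₀⟩ := exists_isMaximumMatchingF G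
  have hempty : (G.induce (satSet (∅ : Finset (Sym2 V)))).Preconnected := by
    rw [satSet_empty]
    exact fun u => u.2.elim
  obtain ⟨M, hM, hMconn⟩ :=
    hM₀.exists_preconnected hconn.preconnected (Finset.empty_subset _) hempty
  exact ⟨M, hM.1, hMconn, hM.2⟩
end

section
/- In the starlike reduction graph G_{X,C} built from a 3SAT instance (X,C), any matching whose total weight equals |X| + |C| uses exactly |X| + |C| edges of weight +1 and no edges of weight −1; in particular, for each variable x_i at most one of the edges x_i⁺x_i and x_i⁻x_i belongs to the matching. -/
open Finset Classical

/-- Vertices of the starlike reduction graph `G_{X,C}` for a 3SAT instance with `m`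
variables and `q` clauses. -/
inductive StarV (m q : ℕ) : Type
  | var (i : Fin m)   -- the vertex `x_i`
  | varP (i : Fin m)  -- the vertex `x_i⁺`
  | varN (i : Fin m)  -- the vertex `x_i⁻`
  | clP (j : Fin q)   -- the vertex `c_j⁺`
  | clN (j : Fin q)   -- the vertex `c_j⁻`
  deriving DecidableEq

/-- The weight `+1` edges of `G_{X,C}`: the edges `x_i x_i⁺`, `x_i x_i⁻` and `c_j⁺ c_j⁻`. -/
def starW1 (m q : ℕ) : Set (Sym2 (StarV m q)) :=
  {e | (∃ i, e = s(StarV.var i, StarV.varP i)) ∨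
       (∃ i, e = s(StarV.var i, StarV.varN i)) ∨
       (∃ j, e = s(StarV.clP j, StarV.clN j))}

/-- The edge set of the starlike reduction graph `G_{X,C}`, where `cl j t` is the `t`-th
literal of clause `j` (a variable index together with `true` for a positive literal). -/
def starEdges (m q : ℕ) (cl : Fin q → Fin 3 → Fin m × Bool) : Set (Sym2 (StarV m q)) :=
  {e | (∃ i, e = s(StarV.var i, StarV.varP i) ∨ e = s(StarV.var i, StarV.varN i) ∨
          e = s(StarV.varP i, StarV.varN i)) ∨
       (∃ i j : Fin m, i ≠ j ∧ (e = s(StarV.varP i, StarV.varP j) ∨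
          e = s(StarV.varP i, StarV.varN j) ∨ e = s(StarV.varN i, StarV.varN j))) ∨
       (∃ j, e = s(StarV.clP j, StarV.clN j)) ∨
       (∃ (j : Fin q) (t : Fin 3), (cl j t).2 = true ∧
          (e = s(StarV.clP j, StarV.varP (cl j t).1) ∨
           e = s(StarV.clN j, StarV.varP (cl j t).1))) ∨
       (∃ (j : Fin q) (t : Fin 3), (cl j t).2 = false ∧
          (e = s(StarV.clP j, StarV.varN (cl j t).1) ∨
           e = s(StarV.clN j, StarV.varN (cl j t).1)))}

/-- The starlike reduction graph `G_{X,C}`. -/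
def starGraph (m q : ℕ) (cl : Fin q → Fin 3 → Fin m × Bool) : SimpleGraph (StarV m q) :=
  SimpleGraph.fromEdgeSet (starEdges m q cl)

/-- The edge weights of `G_{X,C}`: `+1` on `starW1`, `-1` elsewhere. -/
noncomputable def starWeight (m q : ℕ) : Sym2 (StarV m q) → ℤ :=
  fun e => if e ∈ starW1 m q then 1 else -1

/-- The "center" vertex of a weight `+1` edge. -/
noncomputable def ctr (m q : ℕ) (e : Sym2 (StarV m q)) : StarV m q :=
  if h : ∃ v, v ∈ e ∧ ((∃ i, v = StarV.var i) ∨ (∃ j, v = StarV.clP j)) then h.choose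
  else (Quot.out e).1

lemma starW1_exists {m q : ℕ} {e : Sym2 (StarV m q)} (he : e ∈ starW1 m q) :
    ∃ v, v ∈ e ∧ ((∃ i, v = StarV.var i) ∨ (∃ j, v = StarV.clP j)) := by
  rcases he with ⟨i, rfl⟩ | ⟨i, rfl⟩ | ⟨j, rfl⟩
  · exact ⟨_, by simp, Or.inl ⟨i, rfl⟩⟩
  · exact ⟨_, by simp, Or.inl ⟨i, rfl⟩⟩
  · exact ⟨_, by simp, Or.inr ⟨j, rfl⟩⟩

lemma ctr_mem {m q : ℕ} {e : Sym2 (StarV m q)} (he : e ∈ starW1 m q) :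
    ctr m q e ∈ e := by
  rw [ctr, dif_pos (starW1_exists he)]
  exact (starW1_exists he).choose_spec.1

lemma ctr_shape {m q : ℕ} {e : Sym2 (StarV m q)} (he : e ∈ starW1 m q) :
    (∃ i, ctr m q e = StarV.var i) ∨ (∃ j, ctr m q e = StarV.clP j) := by
  rw [ctr, dif_pos (starW1_exists he)]
  exact (starW1_exists he).choose_spec.2

/-- In the starlike reduction graph, any matching of total weight `|X| + |C|` consists of
exactly `|X| + |C|` weight `+1` edges and no weight `-1` edges; in particular for each
variable at most one of `x_i⁺x_i`, `x_i⁻x_i` is matched. -/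
theorem starlike_matching_weight_structure (m q : ℕ)
    (cl : Fin q → Fin 3 → Fin m × Bool) (M : Finset (Sym2 (StarV m q)))
    (hM : IsMatchingF (starGraph m q cl) M)
    (hw : ∑ e ∈ M, starWeight m q e = (m : ℤ) + q) :
    (∀ e ∈ M, starWeight m q e = 1) ∧ M.card = m + q ∧
      ∀ i : Fin m,
        ¬(s(StarV.var i, StarV.varP i) ∈ M ∧ s(StarV.var i, StarV.varN i) ∈ M) := by
  classical
  set P := M.filter (fun e => e ∈ starW1 m q) with hP
  set N := M.filter (fun e => e ∉ starW1 m q) with hN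
  have hsplit : ∑ e ∈ P, starWeight m q e + ∑ e ∈ N, starWeight m q e
      = ∑ e ∈ M, starWeight m q e := Finset.sum_filter_add_sum_filter_not M _ _
  have hPsum : ∑ e ∈ P, starWeight m q e = (P.card : ℤ) := by
    rw [Finset.sum_congr rfl (fun e he => ?_), Finset.sum_const, nsmul_eq_mul, mul_one]
    · simp only [hP, Finset.mem_filter] at he
      simp [starWeight, he.2]
  have hNsum : ∑ e ∈ N, starWeight m q e = -(N.card : ℤ) := by
    rw [Finset.sum_congr rfl (fun e he => ?_), Finset.sum_const, nsmul_eq_mul, mul_neg_one]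
    · simp only [hN, Finset.mem_filter] at he
      simp [starWeight, he.2]
  have hPcard : P.card ≤ m + q := by
    have hle : P.card ≤ ((Finset.univ.image (StarV.var (m := m) (q := q))) ∪
        (Finset.univ.image StarV.clP)).card := by
      apply Finset.card_le_card_of_injOn (ctr m q)
      · intro e he
        simp only [hP, Finset.mem_coe, Finset.mem_filter] at he
        rcases ctr_shape he.2 with ⟨i, hi⟩ | ⟨j, hj⟩
        · exact Finset.mem_union_left _ (by simp [hi])
        · exact Finset.mem_union_right _ (by simp [hj])
      · intro e he f hf hef
        simp only [hP, Finset.coe_filter, Set.mem_setOf_eq] at he hf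
        by_contra hne
        exact hM.2 e he.1 f hf.1 hne (ctr m q e) ⟨ctr_mem he.2, hef ▸ ctr_mem hf.2⟩
    calc P.card ≤ _ := hle
      _ ≤ (Finset.univ.image (StarV.var (m := m) (q := q))).card
            + (Finset.univ.image StarV.clP).card := Finset.card_union_le _ _
      _ ≤ m + q :=
          Nat.add_le_add (le_trans Finset.card_image_le (by simp))
            (le_trans Finset.card_image_le (by simp))
  have key : (P.card : ℤ) - (N.card : ℤ) = (m : ℤ) + q := by
    rw [← hw, ← hsplit, hPsum, hNsum]; ring
  have hN0 : N.card = 0 := by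
    have := hPcard
    omega
  have hPmq : P.card = m + q := by omega
  have hNempty : N = ∅ := Finset.card_eq_zero.mp hN0
  have hall : ∀ e ∈ M, starWeight m q e = 1 := by
    intro e he
    by_cases h : e ∈ starW1 m q
    · simp [starWeight, h]
    · exact absurd (Finset.mem_filter.mpr ⟨he, h⟩) (by rw [← hN, hNempty]; simp)
  have hMP : P = M := by
    apply Finset.filter_true_of_mem
    intro e he
    by_contra h
    exact absurd (Finset.mem_filter.mpr ⟨he, h⟩) (by rw [← hN, hNempty]; simp)
  refine ⟨hall, by rw [← hMP]; exact hPmq, ?_⟩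
  rintro i ⟨h1, h2⟩
  have hne : (s(StarV.var i, StarV.varP i) : Sym2 (StarV m q)) ≠ s(StarV.var i, StarV.varN i) := by
    simp [Sym2.eq_iff]
  exact hM.2 _ h1 _ h2 hne (StarV.var i) ⟨by simp, by simp⟩
end

section
/- Correctness of the tree dynamic program: for a tree T rooted at r and a non-leaf vertex v with children S(r,v), the maximum weight of a connected matching of the subtree T_v in which v is matched to one of its children equals max over u ∈ S(r,v) of [w(vu) + Σ_{s ∈ S(r,v)\{u}} max(B_{r,s}, 0) + Σ_{s ∈ S(r,u)} max(B_{r,s}, 0)], where B_{r,s} denotes the same quantity for s (and equals 0 when s is a leaf). -/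
open Finset SimpleGraph

set_option linter.unusedSectionVars false

open scoped Classical in
/-- The children `S(r,v)` of `v` in the tree `T` rooted at `r`: neighbours of `v` one
step further from the root. -/
noncomputable def childrenF {V : Type*} [Fintype V] (T : SimpleGraph V) (r v : V) :
    Finset V :=
  Finset.univ.filter fun u => T.Adj v u ∧ T.dist r u = T.dist r v + 1

/-- The vertex set of the subtree `T_v` of the tree `T` rooted at `r`: vertices whose
path to the root passes through `v`. -/
def subtreeSet {V : Type*} (T : SimpleGraph V) (r v : V) : Set V :=
  {u | T.dist r u = T.dist r v + T.dist v u}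

namespace TreeDP

variable {V : Type*} [Fintype V] [DecidableEq V] {T : SimpleGraph V}



lemma unique_path (hT : T.IsTree) {a b : V} {p q : T.Walk a b}
    (hp : p.IsPath) (hq : q.IsPath) : p = q :=
  ((hT.existsUnique_path a b).unique hp hq)

lemma path_length (hT : T.IsTree) {a b : V} (p : T.Walk a b) (hp : p.IsPath) :
    p.length = T.dist a b := by
  obtain ⟨q, hq, hql⟩ := hT.isConnected.exists_path_of_dist a b
  rw [unique_path hT hp hq, hql]

lemma dist_support (hT : T.IsTree) {a b z : V} (p : T.Walk a b) (hp : p.IsPath)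
    (hz : z ∈ p.support) : T.dist a z + T.dist z b = T.dist a b := by
  have h1 := SimpleGraph.dist_le (p.takeUntil z hz)
  have h2 := SimpleGraph.dist_le (p.dropUntil z hz)
  have h3 : (p.takeUntil z hz).length + (p.dropUntil z hz).length = p.length := by
    rw [← SimpleGraph.Walk.length_append, p.take_spec hz]
  have h4 := path_length hT p hp
  have h5 := hT.isConnected.dist_triangle (u := a) (v := z) (w := b)
  omega

lemma adj_dist (hT : T.IsTree) (r : V) {a b : V} (h : T.Adj a b) :
    T.dist r b = T.dist r a + 1 ∨ T.dist r a = T.dist r b + 1 := by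
  have hab : T.dist a b = 1 := (SimpleGraph.dist_eq_one_iff_adj).2 h
  have hba : T.dist b a = 1 := (SimpleGraph.dist_eq_one_iff_adj).2 h.symm
  have t1 := hT.isConnected.dist_triangle (u := r) (v := a) (w := b)
  have t2 := hT.isConnected.dist_triangle (u := r) (v := b) (w := a)
  have hne : T.dist r a ≠ T.dist r b := by
    intro heq
    obtain ⟨q, hq, hql⟩ := hT.isConnected.exists_path_of_dist b r
    have hW : ¬(SimpleGraph.Walk.cons h q).IsPath := by
      intro hP
      have := path_length hT _ hP
      rw [SimpleGraph.Walk.length_cons, hql] at this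
      have e1 : T.dist b r = T.dist r b := SimpleGraph.dist_comm ..
      have e2 : T.dist a r = T.dist r a := SimpleGraph.dist_comm ..
      omega
    rw [SimpleGraph.Walk.cons_isPath_iff] at hW
    push_neg at hW
    have haq : a ∈ q.support := hW hq
    have := dist_support hT q hq haq
    have e1 : T.dist b r = T.dist r b := SimpleGraph.dist_comm ..
    have e2 : T.dist a r = T.dist r a := SimpleGraph.dist_comm ..
    omega
  omega

lemma parent_unique (hT : T.IsTree) (r : V) {x p p' : V} (h1 : T.Adj x p) (h2 : T.Adj x p')
    (hd1 : T.dist r p + 1 = T.dist r x) (hd2 : T.dist r p' + 1 = T.dist r x) : p = p' := by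
  obtain ⟨q, hq, hql⟩ := hT.isConnected.exists_path_of_dist p r
  obtain ⟨q', hq', hql'⟩ := hT.isConnected.exists_path_of_dist p' r
  have e0 : T.dist x r = T.dist r x := SimpleGraph.dist_comm ..
  have e1 : T.dist p r = T.dist r p := SimpleGraph.dist_comm ..
  have e2 : T.dist p' r = T.dist r p' := SimpleGraph.dist_comm ..
  have hW : (SimpleGraph.Walk.cons h1 q).IsPath := by
    apply SimpleGraph.Walk.isPath_of_length_eq_dist
    rw [SimpleGraph.Walk.length_cons, hql]; omega
  have hW' : (SimpleGraph.Walk.cons h2 q').IsPath := by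
    apply SimpleGraph.Walk.isPath_of_length_eq_dist
    rw [SimpleGraph.Walk.length_cons, hql']; omega
  have heq := unique_path hT hW hW'
  have := congrArg (fun W => W.getVert 1) heq
  simpa [SimpleGraph.Walk.getVert_cons_succ] using this



lemma mem_subtree_iff {r v u : V} :
    u ∈ subtreeSet T r v ↔ T.dist r u = T.dist r v + T.dist v u := Iff.rfl

lemma mem_subtree_self (r v : V) : v ∈ subtreeSet T r v := by
  simp [subtreeSet]

lemma mem_children_iff {r v u : V} :
    u ∈ childrenF T r v ↔ T.Adj v u ∧ T.dist r u = T.dist r v + 1 := by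
  classical
  simp [childrenF]

lemma child_dist {r v u : V} (hu : u ∈ childrenF T r v) :
    T.dist r u = T.dist r v + 1 := (mem_children_iff.1 hu).2

lemma child_adj {r v u : V} (hu : u ∈ childrenF T r v) : T.Adj v u :=
  (mem_children_iff.1 hu).1

lemma child_mem_subtree {r v u : V} (hu : u ∈ childrenF T r v) :
    u ∈ subtreeSet T r v := by
  rw [mem_subtree_iff, (SimpleGraph.dist_eq_one_iff_adj).2 (child_adj hu)]
  exact child_dist hu

lemma subtree_mono (hT : T.IsTree) {r v u : V} (hu : u ∈ childrenF T r v) :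
    subtreeSet T r u ⊆ subtreeSet T r v := by
  intro x hx
  rw [mem_subtree_iff] at hx ⊢
  have hd := child_dist hu
  have hvu : T.dist v u = 1 := (SimpleGraph.dist_eq_one_iff_adj).2 (child_adj hu)
  have t1 := hT.isConnected.dist_triangle (u := v) (v := u) (w := x)
  have t2 := hT.isConnected.dist_triangle (u := r) (v := v) (w := x)
  omega

lemma down_closed (hT : T.IsTree) {r s x b : V} (hx : x ∈ subtreeSet T r s)
    (hadj : T.Adj x b) (hd : T.dist r b = T.dist r x + 1) : b ∈ subtreeSet T r s := by
  rw [mem_subtree_iff] at hx ⊢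
  have hxb : T.dist x b = 1 := (SimpleGraph.dist_eq_one_iff_adj).2 hadj
  have t1 := hT.isConnected.dist_triangle (u := s) (v := x) (w := b)
  have t2 := hT.isConnected.dist_triangle (u := r) (v := s) (w := b)
  omega

lemma parent_in_subtree (hT : T.IsTree) {r s x : V} (hx : x ∈ subtreeSet T r s)
    (hne : x ≠ s) : ∃ y, T.Adj x y ∧ T.dist r y + 1 = T.dist r x ∧
      y ∈ subtreeSet T r s ∧ T.dist s y + 1 = T.dist s x := by
  rw [mem_subtree_iff] at hx
  have hk : T.dist x s ≠ 0 := by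
    rw [SimpleGraph.dist_ne_zero_iff_ne_and_reachable]
    exact ⟨hne, hT.isConnected.preconnected x s⟩
  obtain ⟨p, hp, hpl⟩ := hT.isConnected.exists_path_of_dist x s
  cases p with
  | nil => simp at hpl; omega
  | cons h q =>
    rename_i y
    refine ⟨y, h, ?_⟩
    have hql := SimpleGraph.dist_le q
    rw [SimpleGraph.Walk.length_cons] at hpl
    have hxy : T.dist x y = 1 := (SimpleGraph.dist_eq_one_iff_adj).2 h
    have t1 := hT.isConnected.dist_triangle (u := x) (v := y) (w := s)
    have t2 := hT.isConnected.dist_triangle (u := r) (v := s) (w := y)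
    have t3 := hT.isConnected.dist_triangle (u := r) (v := x) (w := y)
    have t4 := hT.isConnected.dist_triangle (u := r) (v := y) (w := x)
    have e1 : T.dist y x = T.dist x y := SimpleGraph.dist_comm ..
    have e2 : T.dist s x = T.dist x s := SimpleGraph.dist_comm ..
    have e3 : T.dist s y = T.dist y s := SimpleGraph.dist_comm ..
    rw [mem_subtree_iff]
    omega

lemma sep (hT : T.IsTree) {r s x b : V} (hx : x ∈ subtreeSet T r s)
    (hb : b ∉ subtreeSet T r s) (hadj : T.Adj x b) : x = s := by
  by_contra hne
  obtain ⟨y, hy1, hy2, hy3, _⟩ := parent_in_subtree hT hx hne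
  rcases adj_dist hT r hadj with hcase | hcase
  · exact hb (down_closed hT hx hadj hcase)
  · exact hb (parent_unique hT r hadj hy1 (by omega) hy2 ▸ hy3)

lemma subtree_disjoint (hT : T.IsTree) {r v u u' : V} (hu : u ∈ childrenF T r v)
    (hu' : u' ∈ childrenF T r v) (hne : u ≠ u') {x : V}
    (hx : x ∈ subtreeSet T r u) (hx' : x ∈ subtreeSet T r u') : False := by
  have key : ∀ n : ℕ, ∀ x : V, T.dist r x ≤ n →
      x ∈ subtreeSet T r u → x ∈ subtreeSet T r u' → False := by
    intro n
    induction n with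
    | zero =>
      intro x hn h1 h2
      rw [mem_subtree_iff] at h1 h2
      have := child_dist hu
      omega
    | succ n ih =>
      intro x hn h1 h2
      have hdu := child_dist hu
      have hdu' := child_dist hu'
      by_cases hxu : x = u
      · subst hxu
        rw [mem_subtree_iff] at h2
        have h0 : T.dist u' x = 0 := by omega
        rw [SimpleGraph.Connected.dist_eq_zero_iff hT.isConnected] at h0
        exact hne h0.symm
      by_cases hxu' : x = u'
      · subst hxu'
        rw [mem_subtree_iff] at h1
        have h0 : T.dist u x = 0 := by omega
        rw [SimpleGraph.Connected.dist_eq_zero_iff hT.isConnected] at h0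
        exact hne h0
      obtain ⟨y, hy1, hy2, hy3, _⟩ := parent_in_subtree hT h1 hxu
      obtain ⟨y', hy1', hy2', hy3', _⟩ := parent_in_subtree hT h2 hxu'
      have : y = y' := parent_unique hT r hy1 hy1' hy2 hy2'
      subst this
      exact ih y (by omega) hy3 hy3'
  exact key (T.dist r x) x le_rfl hx hx'

lemma subtree_step (hT : T.IsTree) {r v x : V} (hx : x ∈ subtreeSet T r v)
    (hne : x ≠ v) : ∃ u ∈ childrenF T r v, x ∈ subtreeSet T r u := by
  have key : ∀ n : ℕ, ∀ x : V, T.dist v x ≤ n → x ∈ subtreeSet T r v → x ≠ v →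
      ∃ u ∈ childrenF T r v, x ∈ subtreeSet T r u := by
    intro n
    induction n with
    | zero =>
      intro x hn h1 h2
      have : T.dist v x = 0 := by omega
      rw [SimpleGraph.Connected.dist_eq_zero_iff hT.isConnected] at this
      exact absurd this.symm h2
    | succ n ih =>
      intro x hn h1 h2
      by_cases hd1 : T.dist v x = 1
      · refine ⟨x, ?_, mem_subtree_self r x⟩
        rw [mem_children_iff]
        rw [mem_subtree_iff] at h1
        exact ⟨(SimpleGraph.dist_eq_one_iff_adj).1 hd1, by omega⟩
      · obtain ⟨y, hy1, hy2, hy3, hy4⟩ := parent_in_subtree hT h1 h2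
        have hdvx : T.dist v x ≠ 0 := by
          rw [SimpleGraph.dist_ne_zero_iff_ne_and_reachable]
          exact ⟨Ne.symm h2, hT.isConnected.preconnected v x⟩
        have hyv : y ≠ v := by
          intro h; rw [h, SimpleGraph.dist_self] at hy4; omega
        obtain ⟨u, hu, hyu⟩ := ih y (by omega) hy3 hyv
        have := child_dist hu
        exact ⟨u, hu, down_closed hT hyu hy1.symm (by omega)⟩
  exact key (T.dist v x) x le_rfl hx hne

lemma edge_cases (hT : T.IsTree) {r v a b : V} (hadj : T.Adj a b)
    (ha : a ∈ subtreeSet T r v) (hb : b ∈ subtreeSet T r v)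
    (hdb : T.dist r b = T.dist r a + 1) :
    (a = v ∧ b ∈ childrenF T r v) ∨
      ∃ u ∈ childrenF T r v, a ∈ subtreeSet T r u ∧ b ∈ subtreeSet T r u := by
  by_cases hav : a = v
  · subst hav
    left
    rw [mem_subtree_iff] at hb
    exact ⟨rfl, mem_children_iff.2 ⟨hadj, hdb⟩⟩
  · right
    obtain ⟨u, hu, hau⟩ := subtree_step hT ha hav
    exact ⟨u, hu, hau, down_closed hT hau hadj hdb⟩

lemma exit_lemma (hT : T.IsTree) (r s : V) : ∀ {x y : V} (W : T.Walk x y),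
    x ∈ subtreeSet T r s → y ∉ subtreeSet T r s → s ∈ W.support := by
  intro x y W
  induction W with
  | nil => intro hx hy; exact absurd hx hy
  | @cons x c y hadj q ih =>
    intro hx hy
    by_cases hc : c ∈ subtreeSet T r s
    · rw [SimpleGraph.Walk.support_cons]
      exact List.mem_cons_of_mem _ (ih hc hy)
    · have := sep hT hx hc hadj
      subst this
      exact SimpleGraph.Walk.start_mem_support _

lemma path_support_subtree (hT : T.IsTree) {r s x y : V} (hx : x ∈ subtreeSet T r s)
    (hy : y ∈ subtreeSet T r s) (p : T.Walk x y) (hp : p.IsPath) :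
    ∀ z ∈ p.support, z ∈ subtreeSet T r s := by
  intro z hz
  by_contra hzA
  have h1 : s ∈ (p.takeUntil z hz).support := exit_lemma hT r s _ hx hzA
  have h2 : s ∈ (p.dropUntil z hz).support := by
    have := exit_lemma hT r s (p.dropUntil z hz).reverse hy hzA
    rwa [SimpleGraph.Walk.support_reverse, List.mem_reverse] at this
  have hsz : s ≠ z := fun h => hzA (h ▸ mem_subtree_self r s)
  have h3 : s ∈ (p.dropUntil z hz).support.tail := by
    have hc := SimpleGraph.Walk.support_eq_cons (p.dropUntil z hz)
    rw [hc] at h2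
    rcases List.mem_cons.1 h2 with h | h
    · exact absurd h hsz
    · exact h
  have hnd := hp.support_nodup
  rw [← p.take_spec hz, SimpleGraph.Walk.support_append] at hnd
  have := (List.nodup_append.1 hnd).2.2
  exact this s h1 s h3 rfl

lemma lift_walk {A : Set V} : ∀ {x y : V} (W : T.Walk x y),
    (∀ z ∈ W.support, z ∈ A) → ∀ (hx : x ∈ A) (hy : y ∈ A),
    (T.induce A).Reachable ⟨x, hx⟩ ⟨y, hy⟩ := by
  intro x y W
  induction W with
  | nil => intro _ hx hy; rfl
  | @cons x c y hadj q ih =>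
    intro hs hx hy
    have hc : c ∈ A := hs c (by simp [SimpleGraph.Walk.support_cons])
    have h1 : (T.induce A).Adj ⟨x, hx⟩ ⟨c, hc⟩ := by
      simp [hadj]
    exact h1.reachable.trans (ih (fun z hz => hs z (by simp [SimpleGraph.Walk.support_cons, hz])) hc hy)

lemma proj_walk {A : Set V} {x y : A} (h : (T.induce A).Reachable x y) :
    ∃ W : T.Walk x.1 y.1, ∀ z ∈ W.support, z ∈ A := by
  obtain ⟨w⟩ := h
  refine ⟨w.map (SimpleGraph.Embedding.induce A).toHom, ?_⟩
  intro z hz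
  have hz' : z ∈ w.support.map (SimpleGraph.Embedding.induce (G := T) A).toHom := by
    rw [← SimpleGraph.Walk.support_map]; exact hz
  obtain ⟨a, _, rfl⟩ := List.mem_map.1 hz'
  exact a.2

lemma reach_mono {A B : Set V} (hAB : A ⊆ B) {x y : V} {hx : x ∈ A} {hy : y ∈ A}
    (h : (T.induce A).Reachable ⟨x, hx⟩ ⟨y, hy⟩) :
    (T.induce B).Reachable ⟨x, hAB hx⟩ ⟨y, hAB hy⟩ := by
  obtain ⟨W, hW⟩ := proj_walk h
  exact lift_walk W (fun z hz => hAB (hW z hz)) _ _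

lemma preconnected_inter_subtree (hT : T.IsTree) {A : Set V} (r s : V)
    (hA : (T.induce A).Preconnected) :
    (T.induce (A ∩ subtreeSet T r s)).Preconnected := by
  rintro ⟨x, hxA, hxs⟩ ⟨y, hyA, hys⟩
  obtain ⟨W, hW⟩ := proj_walk (hA ⟨x, hxA⟩ ⟨y, hyA⟩)
  have hbp : W.bypass.IsPath := SimpleGraph.Walk.bypass_isPath W
  have hsub : ∀ z ∈ W.bypass.support, z ∈ A ∩ subtreeSet T r s := by
    intro z hz
    exact ⟨hW z (SimpleGraph.Walk.support_bypass_subset W hz),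
      path_support_subtree hT hxs hys W.bypass hbp z hz⟩
  exact lift_walk W.bypass hsub _ _

/-- The combined index set: children of `v` other than `u`, together with children of `u`. -/
noncomputable def Cset (T : SimpleGraph V) [Fintype V] [DecidableEq V] (r v u : V) : Finset V :=
  ((childrenF T r v).erase u) ∪ childrenF T r u

lemma mem_Cset {r v u s : V} :
    s ∈ Cset T r v u ↔ (s ≠ u ∧ s ∈ childrenF T r v) ∨ s ∈ childrenF T r u := by
  simp [Cset, Finset.mem_union, Finset.mem_erase]

lemma Cset_dist (hu : u ∈ childrenF T r v) {s : V} (hs : s ∈ Cset T r v u) :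
    T.dist r v + 1 ≤ T.dist r s := by
  have hd := child_dist hu
  rcases mem_Cset.1 hs with ⟨_, h⟩ | h <;> have := child_dist h <;> omega

lemma Cset_subtree_subset (hT : T.IsTree) (hu : u ∈ childrenF T r v) {s : V}
    (hs : s ∈ Cset T r v u) : subtreeSet T r s ⊆ subtreeSet T r v := by
  rcases mem_Cset.1 hs with ⟨_, h⟩ | h
  · exact subtree_mono hT h
  · exact (subtree_mono hT h).trans (subtree_mono hT hu)

lemma v_notin_Cset_subtree (hu : u ∈ childrenF T r v) {s : V} (hs : s ∈ Cset T r v u) :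
    v ∉ subtreeSet T r s := by
  intro h
  rw [mem_subtree_iff] at h
  have := Cset_dist hu hs
  omega

lemma u_notin_Cset_subtree (hT : T.IsTree) (hu : u ∈ childrenF T r v) {s : V}
    (hs : s ∈ Cset T r v u) : u ∉ subtreeSet T r s := by
  intro h
  rcases mem_Cset.1 hs with ⟨hne, hc⟩ | hc
  · exact subtree_disjoint hT hu hc (Ne.symm hne) (mem_subtree_self r u) h
  · rw [mem_subtree_iff] at h
    have := child_dist hc
    omega

lemma Cset_pair_disjoint (hT : T.IsTree) (hu : u ∈ childrenF T r v) {s s' : V}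
    (hs : s ∈ Cset T r v u) (hs' : s' ∈ Cset T r v u) (hne : s ≠ s') {x : V}
    (hx : x ∈ subtreeSet T r s) (hx' : x ∈ subtreeSet T r s') : False := by
  rcases mem_Cset.1 hs with ⟨hsu, hc⟩ | hc <;> rcases mem_Cset.1 hs' with ⟨hsu', hc'⟩ | hc'
  · exact subtree_disjoint hT hc hc' hne hx hx'
  · exact subtree_disjoint hT hc hu hsu hx (subtree_mono hT hc' hx')
  · exact subtree_disjoint hT hu hc' (Ne.symm hsu') (subtree_mono hT hc hx) hx'
  · exact subtree_disjoint hT hc hc' hne hx hx'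

lemma edge_place_aux (hT : T.IsTree) {r v u a b : V} (hu : u ∈ childrenF T r v)
    (hadj : T.Adj a b) (hdb : T.dist r b = T.dist r a + 1)
    (ha : a ∈ subtreeSet T r v) (hb : b ∈ subtreeSet T r v)
    (hav : a ≠ v) (hau : a ≠ u) (hbu : b ≠ u) :
    ∃ s ∈ Cset T r v u, a ∈ subtreeSet T r s ∧ b ∈ subtreeSet T r s := by
  rcases edge_cases hT hadj ha hb hdb with ⟨h, _⟩ | ⟨s', hs', has', hbs'⟩
  · exact absurd h hav
  by_cases hsu : s' = u
  · subst hsu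
    rcases edge_cases hT hadj has' hbs' hdb with ⟨h, _⟩ | ⟨s'', hs'', has'', hbs''⟩
    · exact absurd h hau
    · exact ⟨s'', mem_Cset.2 (Or.inr hs''), has'', hbs''⟩
  · exact ⟨s', mem_Cset.2 (Or.inl ⟨hsu, hs'⟩), has', hbs'⟩

lemma edge_place (hT : T.IsTree) {r v u : V} (hu : u ∈ childrenF T r v) {e : Sym2 V}
    (he : e ∈ T.edgeSet) (hsub : ∀ a ∈ e, a ∈ subtreeSet T r v)
    (hv : v ∉ e) (hu' : u ∉ e) :
    ∃ s ∈ Cset T r v u, ∀ a ∈ e, a ∈ subtreeSet T r s := by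
  induction e with
  | _ a b =>
    have hadj : T.Adj a b := he
    have ha : a ∈ subtreeSet T r v := hsub a (Sym2.mem_mk_left a b)
    have hb : b ∈ subtreeSet T r v := hsub b (Sym2.mem_mk_right a b)
    have hav : a ≠ v := fun h => hv (h ▸ Sym2.mem_mk_left a b)
    have hbv : b ≠ v := fun h => hv (h ▸ Sym2.mem_mk_right a b)
    have hau : a ≠ u := fun h => hu' (h ▸ Sym2.mem_mk_left a b)
    have hbu : b ≠ u := fun h => hu' (h ▸ Sym2.mem_mk_right a b)
    rcases adj_dist hT r hadj with hd | hd
    · obtain ⟨s, hs, h1, h2⟩ := edge_place_aux hT hu hadj hd ha hb hav hau hbu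
      refine ⟨s, hs, ?_⟩
      intro z hz
      rcases Sym2.mem_iff.1 hz with rfl | rfl <;> assumption
    · obtain ⟨s, hs, h1, h2⟩ := edge_place_aux hT hu hadj.symm hd hb ha hbv hbu hau
      refine ⟨s, hs, ?_⟩
      intro z hz
      rcases Sym2.mem_iff.1 hz with rfl | rfl <;> assumption

lemma dist_lt_card (hT : T.IsTree) (r v : V) : T.dist r v + 1 ≤ Fintype.card V := by
  obtain ⟨p, hp, hpl⟩ := hT.isConnected.exists_path_of_dist r v
  have h1 : p.support.length = p.length + 1 := SimpleGraph.Walk.length_support p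
  have h2 : p.support.length ≤ Fintype.card V := hp.support_nodup.length_le_card
  omega

/-- The set of weights of connected matchings of the subtree at `v` matching `v` to a child. -/
def MSet (T : SimpleGraph V) [Fintype V] [DecidableEq V] (r : V) (w : Sym2 V → ℝ) (v : V) :
    Set ℝ :=
  {x : ℝ | ∃ M : Finset (Sym2 V), IsMatchingF T M ∧
    (∀ e ∈ M, ∀ u : V, u ∈ e → u ∈ subtreeSet T r v) ∧
    (T.induce (satSet M)).Preconnected ∧
    (∃ u ∈ childrenF T r v, s(v, u) ∈ M) ∧
    x = ∑ e ∈ M, w e}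

lemma ub_step (hT : T.IsTree) {r v u : V} (w : Sym2 V → ℝ) (B : V → ℝ)
    (hu : u ∈ childrenF T r v)
    (IH : ∀ s ∈ Cset T r v u, (childrenF T r s).Nonempty → B s ∈ upperBounds (MSet T r w s))
    (M : Finset (Sym2 V)) (hmatch : IsMatchingF T M)
    (hsub : ∀ e ∈ M, ∀ a ∈ e, a ∈ subtreeSet T r v)
    (hconn : (T.induce (satSet M)).Preconnected)
    (hedge : s(v, u) ∈ M) :
    ∑ e ∈ M, w e ≤ w s(v, u) + ∑ s ∈ Cset T r v u, max (B s) 0 := by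
  classical
  -- edges other than s(v,u) avoid both v and u
  have havoid : ∀ e ∈ M, e ≠ s(v, u) → v ∉ e ∧ u ∉ e := by
    intro e he hne
    have h1 := hmatch.2 e he (s(v, u)) hedge hne v
    have h2 := hmatch.2 e he (s(v, u)) hedge hne u
    constructor
    · intro hv; exact h1 ⟨hv, Sym2.mem_mk_left v u⟩
    · intro hv'; exact h2 ⟨hv', Sym2.mem_mk_right v u⟩
  set Ms : V → Finset (Sym2 V) :=
    fun t => M.filter (fun e => ∀ a ∈ e, a ∈ subtreeSet T r t) with hMsdef
  -- placement of edges
  have hplace : ∀ e ∈ M, e ≠ s(v, u) → ∃ t ∈ Cset T r v u, e ∈ Ms t := by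
    intro e he hne
    obtain ⟨hv, hu'⟩ := havoid e he hne
    obtain ⟨t, ht, htt⟩ := edge_place hT hu (hmatch.1 e he) (hsub e he) hv hu'
    exact ⟨t, ht, Finset.mem_filter.2 ⟨he, htt⟩⟩
  have hMssub : ∀ t, Ms t ⊆ M := fun t => Finset.filter_subset _ _
  have hMsprop : ∀ t, ∀ e ∈ Ms t, ∀ a ∈ e, a ∈ subtreeSet T r t := by
    intro t e he
    exact (Finset.mem_filter.1 he).2
  -- decomposition of M
  have hdecomp : M = insert (s(v, u)) ((Cset T r v u).biUnion Ms) := by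
    ext e
    constructor
    · intro he
      by_cases hne : e = s(v, u)
      · exact hne ▸ Finset.mem_insert_self _ _
      · obtain ⟨t, ht, het⟩ := hplace e he hne
        exact Finset.mem_insert_of_mem (Finset.mem_biUnion.2 ⟨t, ht, het⟩)
    · intro he
      rcases Finset.mem_insert.1 he with rfl | he
      · exact hedge
      · obtain ⟨t, _, het⟩ := Finset.mem_biUnion.1 he
        exact hMssub t het
  have hnotin : s(v, u) ∉ (Cset T r v u).biUnion Ms := by
    intro h
    obtain ⟨t, ht, het⟩ := Finset.mem_biUnion.1 h
    exact v_notin_Cset_subtree hu ht (hMsprop t _ het v (Sym2.mem_mk_left v u))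
  have hpairwise : (↑(Cset T r v u) : Set V).PairwiseDisjoint Ms := by
    intro t ht t' ht' hne
    simp only [Function.onFun]
    rw [Finset.disjoint_left]
    intro e het het'
    induction e with
    | _ a b =>
      exact absurd (hMsprop t' _ het' a (Sym2.mem_mk_left a b))
        (fun h => Cset_pair_disjoint hT hu ht ht' hne
          (hMsprop t _ het a (Sym2.mem_mk_left a b)) h)
  -- sum decomposition
  have hsum : ∑ e ∈ M, w e = w s(v, u) + ∑ t ∈ Cset T r v u, ∑ e ∈ Ms t, w e := by
    rw [hdecomp, Finset.sum_insert hnotin, Finset.sum_biUnion hpairwise]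
  rw [hsum]
  have hbound : ∀ t ∈ Cset T r v u, ∑ e ∈ Ms t, w e ≤ max (B t) 0 := by
    intro t ht
    by_cases hMt : Ms t = ∅
    · rw [hMt]; simp
    · -- the sat set of the piece
      have hsat : satSet (Ms t) = satSet M ∩ subtreeSet T r t := by
        ext x
        constructor
        · rintro ⟨e, he, hxe⟩
          exact ⟨⟨e, hMssub t he, hxe⟩, hMsprop t e he x hxe⟩
        · rintro ⟨⟨e, he, hxe⟩, hxt⟩
          have hne : e ≠ s(v, u) := by
            rintro rfl
            rcases Sym2.mem_iff.1 hxe with rfl | rfl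
            · exact v_notin_Cset_subtree hu ht hxt
            · exact u_notin_Cset_subtree hT hu ht hxt
          obtain ⟨t', ht', het'⟩ := hplace e he hne
          have : t' = t := by
            by_contra hne'
            exact Cset_pair_disjoint hT hu ht' ht hne' (hMsprop t' e het' x hxe) hxt
          exact ⟨e, this ▸ het', hxe⟩
      -- v is saturated, t is not equal to v and avoids u
      have hvsat : v ∈ satSet M := ⟨s(v, u), hedge, Sym2.mem_mk_left v u⟩
      -- t is saturated in M
      have htsat : t ∈ satSet M := by
        obtain ⟨e₀, he₀⟩ := Finset.nonempty_iff_ne_empty.2 hMt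
        have hx₀ : ∃ x₀, x₀ ∈ satSet (Ms t) := by
          induction e₀ with
          | _ a b => exact ⟨a, ⟨s(a, b), he₀, Sym2.mem_mk_left a b⟩⟩
        obtain ⟨x₀, hx₀⟩ := hx₀
        rw [hsat] at hx₀
        obtain ⟨W, hW⟩ := proj_walk (hconn ⟨x₀, hx₀.1⟩ ⟨v, hvsat⟩)
        have hts : t ∈ W.support :=
          exit_lemma hT r t W hx₀.2 (v_notin_Cset_subtree hu ht)
        exact hW t hts
      obtain ⟨e₁, he₁, hte₁⟩ := htsat
      have hne₁ : e₁ ≠ s(v, u) := by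
        rintro rfl
        rcases Sym2.mem_iff.1 hte₁ with rfl | rfl
        · exact v_notin_Cset_subtree hu ht (mem_subtree_self r t)
        · exact u_notin_Cset_subtree hT hu ht (mem_subtree_self r t)
      obtain ⟨t', ht', het'⟩ := hplace e₁ he₁ hne₁
      have htt' : t' = t := by
        by_contra hne'
        exact Cset_pair_disjoint hT hu ht' ht hne'
          (hMsprop t' e₁ het' t hte₁) (mem_subtree_self r t)
      subst htt'
      obtain ⟨z, rfl⟩ := Sym2.mem_iff_exists.1 hte₁
      have hadj : T.Adj t' z := hmatch.1 _ he₁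
      have hzt : z ∈ subtreeSet T r t' :=
        hMsprop t' _ het' z (Sym2.mem_mk_right t' z)
      have hzchild : z ∈ childrenF T r t' := by
        rw [mem_children_iff]
        refine ⟨hadj, ?_⟩
        rcases adj_dist hT r hadj with hd | hd
        · exact hd
        · exfalso
          rw [mem_subtree_iff] at hzt
          have hzne : T.dist t' z ≠ 0 := by
            rw [SimpleGraph.dist_ne_zero_iff_ne_and_reachable]
            exact ⟨hadj.ne, hT.isConnected.preconnected t' z⟩
          omega
      -- Ms t' is a good matching for t'
      have hmem : (∑ e ∈ Ms t', w e) ∈ MSet T r w t' := by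
        refine ⟨Ms t', ?_, ?_, ?_, ⟨z, hzchild, het'⟩, rfl⟩
        · exact ⟨fun e he => hmatch.1 e (hMssub t' he),
            fun e he f hf => hmatch.2 e (hMssub t' he) f (hMssub t' hf)⟩
        · exact hMsprop t'
        · rw [hsat]
          exact preconnected_inter_subtree hT r t' hconn
      have := IH t' ht' ⟨z, hzchild⟩ hmem
      exact this.trans (le_max_left _ _)
  calc w s(v, u) + ∑ t ∈ Cset T r v u, ∑ e ∈ Ms t, w e
      ≤ w s(v, u) + ∑ t ∈ Cset T r v u, max (B t) 0 := by
        gcongr with t ht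
        exact hbound t ht

lemma max_if (x : ℝ) : (if 0 < x then x else 0) = max x 0 := by
  rcases lt_or_ge 0 x with h | h
  · rw [if_pos h, max_eq_left h.le]
  · rw [if_neg (not_lt.2 h), max_eq_right h]

lemma erase_children_disjoint {r v u : V} (hu : u ∈ childrenF T r v) :
    Disjoint ((childrenF T r v).erase u) (childrenF T r u) := by
  rw [Finset.disjoint_left]
  intro t ht ht'
  have h1 := child_dist (Finset.mem_of_mem_erase ht)
  have h2 := child_dist ht'
  have h3 := child_dist hu
  omega

lemma fsplit {r v u : V} (w : Sym2 V → ℝ) (B : V → ℝ) (hu : u ∈ childrenF T r v) :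
    w s(v, u) + ∑ t ∈ Cset T r v u, max (B t) 0 =
      (∑ s ∈ childrenF T r u, max (B s) 0) + w s(v, u) +
        ∑ s ∈ (childrenF T r v).erase u, max (B s) 0 := by
  rw [Cset, Finset.sum_union (erase_children_disjoint hu)]
  ring

lemma mem_step (hT : T.IsTree) {r v : V} (w : Sym2 V → ℝ) (B : V → ℝ)
    (hne : (childrenF T r v).Nonempty)
    (hB0 : ∀ s : V, childrenF T r s = ∅ → B s = 0)
    (hBv : B v = (childrenF T r v).sup' hne fun u =>
      (∑ s ∈ childrenF T r u, max (B s) 0) + w s(v, u) +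
        ∑ s ∈ (childrenF T r v).erase u, max (B s) 0)
    (IH : ∀ s : V, T.dist r v + 1 ≤ T.dist r s → (childrenF T r s).Nonempty →
      B s ∈ MSet T r w s) :
    B v ∈ MSet T r w v := by
  classical
  obtain ⟨u, hu, hval⟩ := Finset.exists_mem_eq_sup' hne
    (fun u => (∑ s ∈ childrenF T r u, max (B s) 0) + w s(v, u) +
      ∑ s ∈ (childrenF T r v).erase u, max (B s) 0)
  have hex : ∀ t : V, ∃ Mt : Finset (Sym2 V), (t ∈ Cset T r v u ∧ 0 < B t) →
      (IsMatchingF T Mt ∧ (∀ e ∈ Mt, ∀ a ∈ e, a ∈ subtreeSet T r t) ∧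
        (T.induce (satSet Mt)).Preconnected ∧
        (∃ z ∈ childrenF T r t, s(t, z) ∈ Mt) ∧ B t = ∑ e ∈ Mt, w e) := by
    intro t
    by_cases hc : t ∈ Cset T r v u ∧ 0 < B t
    · have hnet : (childrenF T r t).Nonempty := by
        rw [Finset.nonempty_iff_ne_empty]
        intro h
        rw [hB0 t h] at hc
        exact lt_irrefl 0 hc.2
      obtain ⟨Mt, h1, h2, h3, h4, h5⟩ := IH t (Cset_dist hu hc.1) hnet
      exact ⟨Mt, fun _ => ⟨h1, h2, h3, h4, h5⟩⟩
    · exact ⟨∅, fun h => absurd h hc⟩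
  choose Ms hMs using hex
  set C' := (Cset T r v u).filter (fun t => 0 < B t) with hC'
  have hC'mem : ∀ t ∈ C', t ∈ Cset T r v u ∧ 0 < B t := by
    intro t ht
    exact ⟨(Finset.mem_filter.1 ht).1, (Finset.mem_filter.1 ht).2⟩
  have key := fun t (ht : t ∈ C') => hMs t (hC'mem t ht)
  set M := insert (s(v, u)) (C'.biUnion Ms) with hM
  have hvuM : s(v, u) ∈ M := Finset.mem_insert_self _ _
  have hMssubM : ∀ t ∈ C', Ms t ⊆ M := by
    intro t ht e he
    exact Finset.mem_insert_of_mem (Finset.mem_biUnion.2 ⟨t, ht, he⟩)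
  have hMsub : ∀ t ∈ C', ∀ e ∈ Ms t, ∀ a ∈ e, a ∈ subtreeSet T r t :=
    fun t ht => (key t ht).2.1
  -- the matching property
  have hmatch : IsMatchingF T M := by
    constructor
    · intro e he
      rcases Finset.mem_insert.1 he with rfl | he'
      · exact (child_adj hu)
      · obtain ⟨t, ht, het⟩ := Finset.mem_biUnion.1 he'
        exact (key t ht).1.1 e het
    · intro e he f hf hnef a ⟨hae, haf⟩
      rcases Finset.mem_insert.1 he with rfl | he' <;>
        rcases Finset.mem_insert.1 hf with hf0 | hf'
      · exact hnef hf0.symm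
      · obtain ⟨t, ht, hft⟩ := Finset.mem_biUnion.1 hf'
        have hat : a ∈ subtreeSet T r t := hMsub t ht f hft a haf
        rcases Sym2.mem_iff.1 hae with rfl | rfl
        · exact v_notin_Cset_subtree hu (hC'mem t ht).1 hat
        · exact u_notin_Cset_subtree hT hu (hC'mem t ht).1 hat
      · obtain ⟨t, ht, het⟩ := Finset.mem_biUnion.1 he'
        have hat : a ∈ subtreeSet T r t := hMsub t ht e het a hae
        subst hf0
        rcases Sym2.mem_iff.1 haf with rfl | rfl
        · exact v_notin_Cset_subtree hu (hC'mem t ht).1 hat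
        · exact u_notin_Cset_subtree hT hu (hC'mem t ht).1 hat
      · obtain ⟨t, ht, het⟩ := Finset.mem_biUnion.1 he'
        obtain ⟨t', ht', hft'⟩ := Finset.mem_biUnion.1 hf'
        by_cases htt : t = t'
        · subst htt
          exact (key t ht).1.2 e het f hft' hnef a ⟨hae, haf⟩
        · exact Cset_pair_disjoint hT hu (hC'mem t ht).1 (hC'mem t' ht').1 htt
            (hMsub t ht e het a hae) (hMsub t' ht' f hft' a haf)
  -- edges within the subtree of v
  have hsub : ∀ e ∈ M, ∀ a ∈ e, a ∈ subtreeSet T r v := by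
    intro e he a hae
    rcases Finset.mem_insert.1 he with rfl | he'
    · rcases Sym2.mem_iff.1 hae with rfl | rfl
      · exact mem_subtree_self r a
      · exact child_mem_subtree hu
    · obtain ⟨t, ht, het⟩ := Finset.mem_biUnion.1 he'
      exact Cset_subtree_subset hT hu (hC'mem t ht).1 (hMsub t ht e het a hae)
  -- saturation facts
  have hvsat : v ∈ satSet M := ⟨s(v, u), hvuM, Sym2.mem_mk_left v u⟩
  have husat : u ∈ satSet M := ⟨s(v, u), hvuM, Sym2.mem_mk_right v u⟩
  have hsatsub : ∀ t ∈ C', satSet (Ms t) ⊆ satSet M := by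
    intro t ht x ⟨e, he, hxe⟩
    exact ⟨e, hMssubM t ht he, hxe⟩
  have htsat : ∀ t ∈ C', t ∈ satSet (Ms t) := by
    intro t ht
    obtain ⟨z, _, hz⟩ := (key t ht).2.2.2.1
    exact ⟨s(t, z), hz, Sym2.mem_mk_left t z⟩
  -- connectivity
  have hconn : (T.induce (satSet M)).Preconnected := by
    have hreach : ∀ x (hx : x ∈ satSet M),
        (T.induce (satSet M)).Reachable ⟨x, hx⟩ ⟨v, hvsat⟩ := by
      intro x hx
      obtain ⟨e, he, hxe⟩ := hx
      rcases Finset.mem_insert.1 he with rfl | he'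
      · rcases Sym2.mem_iff.1 hxe with rfl | rfl
        · exact SimpleGraph.Reachable.refl _
        · have hadj : (T.induce (satSet M)).Adj ⟨x, husat⟩ ⟨v, hvsat⟩ := by
            simp [(child_adj hu).symm]
          exact hadj.reachable
      · obtain ⟨t, ht, het⟩ := Finset.mem_biUnion.1 he'
        have hxMt : x ∈ satSet (Ms t) := ⟨e, het, hxe⟩
        have h1 : (T.induce (satSet M)).Reachable ⟨x, hsatsub t ht hxMt⟩
            ⟨t, hsatsub t ht (htsat t ht)⟩ :=
          reach_mono (hsatsub t ht) ((key t ht).2.2.1 ⟨x, hxMt⟩ ⟨t, htsat t ht⟩)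
        refine h1.trans ?_
        rcases mem_Cset.1 (hC'mem t ht).1 with ⟨_, hc⟩ | hc
        · have hadj : (T.induce (satSet M)).Adj ⟨t, hsatsub t ht (htsat t ht)⟩
              ⟨v, hvsat⟩ := by simp [(child_adj hc).symm]
          exact hadj.reachable
        · have hadj1 : (T.induce (satSet M)).Adj ⟨t, hsatsub t ht (htsat t ht)⟩
              ⟨u, husat⟩ := by simp [(child_adj hc).symm]
          have hadj2 : (T.induce (satSet M)).Adj ⟨u, husat⟩ ⟨v, hvsat⟩ := by
            simp [(child_adj hu).symm]
          exact hadj1.reachable.trans hadj2.reachable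
    rintro ⟨x, hx⟩ ⟨y, hy⟩
    exact (hreach x hx).trans (hreach y hy).symm
  -- disjointness for the sum
  have hpairwise : (↑C' : Set V).PairwiseDisjoint Ms := by
    intro t ht t' ht' htt
    simp only [Function.onFun]
    rw [Finset.disjoint_left]
    intro e het het'
    induction e with
    | _ a b =>
      exact Cset_pair_disjoint hT hu (hC'mem t ht).1 (hC'mem t' ht').1 htt
        (hMsub t ht _ het a (Sym2.mem_mk_left a b))
        (hMsub t' ht' _ het' a (Sym2.mem_mk_left a b))
  have hnotin : s(v, u) ∉ C'.biUnion Ms := by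
    intro h
    obtain ⟨t, ht, het⟩ := Finset.mem_biUnion.1 h
    exact v_notin_Cset_subtree hu (hC'mem t ht).1
      (hMsub t ht _ het v (Sym2.mem_mk_left v u))
  -- the sum computation
  have hsum : ∑ e ∈ M, w e = w s(v, u) + ∑ t ∈ Cset T r v u, max (B t) 0 := by
    rw [hM, Finset.sum_insert hnotin, Finset.sum_biUnion hpairwise]
    congr 1
    have h1 : ∀ t ∈ C', ∑ e ∈ Ms t, w e = B t := fun t ht => ((key t ht).2.2.2.2).symm
    rw [Finset.sum_congr rfl h1, hC', Finset.sum_filter]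
    exact Finset.sum_congr rfl fun t _ => max_if (B t)
  have hBsum : B v = ∑ e ∈ M, w e := by
    rw [hsum, fsplit w B hu, hBv, hval]
  exact ⟨M, hmatch, hsub, hconn, ⟨u, hu, hvuM⟩, hBsum⟩

end TreeDP

/-- Correctness of the tree dynamic program: if `B` satisfies the recurrence
`B v = 0` for leaves and
`B v = max_{u ∈ S(r,v)} [Σ_{s ∈ S(r,u)} max(B s,0) + w(vu) + Σ_{s ∈ S(r,v)\{u}} max(B s,0)]`
otherwise, then for every non-leaf `v`, `B v` is the maximum weight of a connected
matching of `T_v` in which `v` is matched to one of its children. -/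
theorem tree_dp_correct {V : Type*} [Fintype V] [DecidableEq V]
    (T : SimpleGraph V) (hT : T.IsTree) (r : V) (w : Sym2 V → ℝ) (B : V → ℝ)
    (hB0 : ∀ v : V, childrenF T r v = ∅ → B v = 0)
    (hBrec : ∀ (v : V) (h : (childrenF T r v).Nonempty),
      B v = (childrenF T r v).sup' h fun u =>
        (∑ s ∈ childrenF T r u, max (B s) 0) + w s(v, u) +
          ∑ s ∈ (childrenF T r v).erase u, max (B s) 0) :
    ∀ v : V, (childrenF T r v).Nonempty →
      IsGreatest
        {x : ℝ | ∃ M : Finset (Sym2 V), IsMatchingF T M ∧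
          (∀ e ∈ M, ∀ u : V, u ∈ e → u ∈ subtreeSet T r v) ∧
          (T.induce (satSet M)).Preconnected ∧
          (∃ u ∈ childrenF T r v, s(v, u) ∈ M) ∧
          x = ∑ e ∈ M, w e} (B v) := by
  suffices h : ∀ n : ℕ, ∀ v : V, Fintype.card V ≤ T.dist r v + n →
      (childrenF T r v).Nonempty → IsGreatest (TreeDP.MSet T r w v) (B v) by
    intro v hv
    exact h (Fintype.card V) v (by omega) hv
  intro n
  induction n with
  | zero =>
    intro v hcard _
    have := TreeDP.dist_lt_card hT r v
    omega
  | succ n ih =>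
    intro v hcard hne
    constructor
    · apply TreeDP.mem_step hT w B hne hB0 (hBrec v hne)
      intro s hd hs
      exact (ih s (by omega) hs).1
    · rintro x ⟨M, hmatch, hsub, hconn, ⟨u, hu, hedge⟩, rfl⟩
      have hIH : ∀ s ∈ TreeDP.Cset T r v u, (childrenF T r s).Nonempty →
          B s ∈ upperBounds (TreeDP.MSet T r w s) := by
        intro s hs hcs
        have := TreeDP.Cset_dist hu hs
        exact (ih s (by omega) hcs).2
      have h1 := TreeDP.ub_step hT w B hu hIH M hmatch hsub hconn hedge
      rw [TreeDP.fsplit w B hu] at h1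
      refine h1.trans ?_
      rw [hBrec v hne]
      exact Finset.le_sup' (fun u => (∑ s ∈ childrenF T r u, max (B s) 0) + w s(v, u) +
        ∑ s ∈ (childrenF T r v).erase u, max (B s) 0) hu
end

section
/- In the bipartite reduction graph G_{X,C} (with edge weights in {0,1}) built from a 3SAT instance, any matching of weight |X| + |C| + 1 contains exactly |X| + |C| + 1 edges of weight 1 and no edges of weight 0; moreover if such a matching is connected, then the assignment setting x_i to true iff x_i⁺ is saturated satisfies every clause of C. -/
/-!
The weight-1 edges fall into `|X| + |C| + 1` blocks (`h⁺h⁻`; the two edges at `x_i`;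
`c_j⁺c_j⁻`), each meeting one representative vertex `h⁺`, `x_i` or `c_j⁺`. A matching uses at
most one edge per representative, so weight `|X| + |C| + 1` forces every representative to be
covered; at `h⁺` and at `c_j⁺` this means `h⁺h⁻` and `c_j⁺c_j⁻` are matched, and every weight-0
edge meets one of them. If the matching is moreover connected, `c_j⁺` has a saturated neighbour
other than the leaf `c_j⁻`, i.e. a saturated literal vertex; as `x_i` is matched to exactly one
of `x_i⁺`, `x_i⁻`, that literal is true under the assignment.
-/

open Finset Classical

/-- Vertices of the bipartite reduction graph `G_{X,C}` for a 3SAT instance with `m`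
variables and `q` clauses. -/
inductive BipV (m q : ℕ) : Type
  | hP | hN            -- the vertices `h⁺`, `h⁻`
  | var (i : Fin m)    -- the vertex `x_i`
  | varP (i : Fin m)   -- the vertex `x_i⁺`
  | varN (i : Fin m)   -- the vertex `x_i⁻`
  | clP (j : Fin q)    -- the vertex `c_j⁺`
  | clN (j : Fin q)    -- the vertex `c_j⁻`
  deriving DecidableEq

instance (m q : ℕ) : Fintype (BipV m q) := by
  classical
  exact Fintype.ofSurjective
    (fun x : (Unit ⊕ Unit) ⊕ (Fin m ⊕ Fin m ⊕ Fin m) ⊕ (Fin q ⊕ Fin q) =>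
      match x with
      | .inl (.inl _) => BipV.hP
      | .inl (.inr _) => BipV.hN
      | .inr (.inl (.inl i)) => BipV.var i
      | .inr (.inl (.inr (.inl i))) => BipV.varP i
      | .inr (.inl (.inr (.inr i))) => BipV.varN i
      | .inr (.inr (.inl j)) => BipV.clP j
      | .inr (.inr (.inr j)) => BipV.clN j)
    (by intro v; cases v with
      | hP => exact ⟨.inl (.inl ()), rfl⟩
      | hN => exact ⟨.inl (.inr ()), rfl⟩
      | var i => exact ⟨.inr (.inl (.inl i)), rfl⟩
      | varP i => exact ⟨.inr (.inl (.inr (.inl i))), rfl⟩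
      | varN i => exact ⟨.inr (.inl (.inr (.inr i))), rfl⟩
      | clP j => exact ⟨.inr (.inr (.inl j)), rfl⟩
      | clN j => exact ⟨.inr (.inr (.inr j)), rfl⟩)

/-- The weight `1` edges of the bipartite reduction graph: `h⁺h⁻`, `x_i⁺x_i`, `x_i x_i⁻`
and `c_j⁺c_j⁻`. -/
def bipW1 (m q : ℕ) : Set (Sym2 (BipV m q)) :=
  {e | e = s(BipV.hP, BipV.hN) ∨
       (∃ i, e = s(BipV.var i, BipV.varP i)) ∨
       (∃ i, e = s(BipV.var i, BipV.varN i)) ∨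
       (∃ j, e = s(BipV.clP j, BipV.clN j))}

/-- The edge set of the bipartite reduction graph `G_{X,C}`, where `cl j t` is the `t`-th
literal of clause `j`. -/
def bipEdges (m q : ℕ) (cl : Fin q → Fin 3 → Fin m × Bool) : Set (Sym2 (BipV m q)) :=
  {e | e = s(BipV.hP, BipV.hN) ∨
       (∃ i, e = s(BipV.var i, BipV.varP i) ∨ e = s(BipV.var i, BipV.varN i) ∨
          e = s(BipV.var i, BipV.hP)) ∨
       (∃ j, e = s(BipV.clP j, BipV.clN j)) ∨
       (∃ (j : Fin q) (t : Fin 3), (cl j t).2 = true ∧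
          e = s(BipV.clP j, BipV.varP (cl j t).1)) ∨
       (∃ (j : Fin q) (t : Fin 3), (cl j t).2 = false ∧
          e = s(BipV.clP j, BipV.varN (cl j t).1))}

/-- The bipartite reduction graph `G_{X,C}`. -/
def bipGraph (m q : ℕ) (cl : Fin q → Fin 3 → Fin m × Bool) : SimpleGraph (BipV m q) :=
  SimpleGraph.fromEdgeSet (bipEdges m q cl)

/-- The edge weights of `G_{X,C}`: `1` on `bipW1`, `0` elsewhere. -/
noncomputable def bipWeight (m q : ℕ) : Sym2 (BipV m q) → ℤ :=
  fun e => if e ∈ bipW1 m q then 1 else 0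

namespace IsMatchingF

variable {V : Type*} {G : SimpleGraph V} {M : Finset (Sym2 V)}

lemma eq_of_mem_of_mem (hM : IsMatchingF G M) {e f : Sym2 V} (he : e ∈ M) (hf : f ∈ M)
    {v : V} (hve : v ∈ e) (hvf : v ∈ f) : e = f := by
  by_contra hne
  exact hM.2 e he f hf hne v ⟨hve, hvf⟩

lemma subset (hM : IsMatchingF G M) {M' : Finset (Sym2 V)} (h : M' ⊆ M) : IsMatchingF G M' :=
  ⟨fun e he => hM.1 e (h he), fun e he f hf => hM.2 e (h he) f (h hf)⟩

lemma card_le_card_of_forall_exists_mem (hM : IsMatchingF G M) {S : Finset V}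
    (hS : ∀ e ∈ M, ∃ v ∈ S, v ∈ e) : M.card ≤ S.card :=
  Finset.card_le_card_of_forall_subsingleton (fun e v => v ∈ e) hS
    fun _ _ _ he _ he' => hM.eq_of_mem_of_mem he.1 he'.1 he.2 he'.2

lemma subset_satSet_of_card_eq (hM : IsMatchingF G M) {S : Finset V}
    (hS : ∀ e ∈ M, ∃ v ∈ S, v ∈ e) (hcard : M.card = S.card) : ↑S ⊆ satSet M := by
  intro v hvS
  by_contra hv
  have hS' : ∀ e ∈ M, ∃ w ∈ S.erase v, w ∈ e := fun e he => by
    obtain ⟨w, hwS, hwe⟩ := hS e he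
    exact ⟨w, Finset.mem_erase.mpr ⟨fun hwv => hv ⟨e, he, hwv ▸ hwe⟩, hwS⟩, hwe⟩
  have := hM.card_le_card_of_forall_exists_mem hS'
  rw [Finset.card_erase_of_mem hvS] at this
  have : 0 < S.card := Finset.card_pos.mpr ⟨v, hvS⟩
  omega

end IsMatchingF

lemma SimpleGraph.Reachable.mem_of_forall_adj {V : Type*} {G : SimpleGraph V} {T : Set V}
    (hT : ∀ a b, G.Adj a b → a ∈ T → b ∈ T) {u v : V} (h : G.Reachable u v)
    (hu : u ∈ T) : v ∈ T := by
  rw [SimpleGraph.reachable_iff_reflTransGen] at h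
  induction h with
  | refl => exact hu
  | tail _ hadj ih => exact hT _ _ hadj ih

section BipGraph

variable {m q : ℕ} {cl : Fin q → Fin 3 → Fin m × Bool} {M : Finset (Sym2 (BipV m q))}

/-- One vertex from each of the `m + q + 1` blocks `{h⁺, h⁻}`, `{x_i⁺, x_i, x_i⁻}`,
`{c_j⁺, c_j⁻}` of weight-1 edges. -/
def blockReps (m q : ℕ) : Finset (BipV m q) :=
  insert BipV.hP (Finset.univ.image BipV.var ∪ Finset.univ.image BipV.clP)

lemma card_blockReps : (blockReps m q).card = m + q + 1 := by
  rw [blockReps, Finset.card_insert_of_notMem (by simp),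
    Finset.card_union_of_disjoint (by simp [Finset.disjoint_left]),
    Finset.card_image_of_injective _ fun _ _ => BipV.var.inj,
    Finset.card_image_of_injective _ fun _ _ => BipV.clP.inj]
  simp

lemma exists_mem_blockReps_of_mem_bipW1 {e : Sym2 (BipV m q)} (he : e ∈ bipW1 m q) :
    ∃ v ∈ blockReps m q, v ∈ e := by
  rcases he with rfl | ⟨i, rfl⟩ | ⟨i, rfl⟩ | ⟨j, rfl⟩
  · exact ⟨BipV.hP, by simp [blockReps]⟩
  · exact ⟨BipV.var i, by simp [blockReps]⟩
  · exact ⟨BipV.var i, by simp [blockReps]⟩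
  · exact ⟨BipV.clP j, by simp [blockReps]⟩

lemma eq_of_hP_mem_of_mem_bipW1 {e : Sym2 (BipV m q)} (he : e ∈ bipW1 m q)
    (hv : BipV.hP ∈ e) : e = s(BipV.hP, BipV.hN) := by
  rcases he with rfl | ⟨i, rfl⟩ | ⟨i, rfl⟩ | ⟨j, rfl⟩ <;> simp_all

lemma eq_of_clP_mem_of_mem_bipW1 {e : Sym2 (BipV m q)} (he : e ∈ bipW1 m q) {j : Fin q}
    (hv : BipV.clP j ∈ e) : e = s(BipV.clP j, BipV.clN j) := by
  rcases he with rfl | ⟨i, rfl⟩ | ⟨i, rfl⟩ | ⟨j', rfl⟩ <;> simp_all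

lemma eq_of_varP_mem_of_mem_bipW1 {e : Sym2 (BipV m q)} (he : e ∈ bipW1 m q) {i : Fin m}
    (hv : BipV.varP i ∈ e) : e = s(BipV.var i, BipV.varP i) := by
  rcases he with rfl | ⟨i', rfl⟩ | ⟨i', rfl⟩ | ⟨j, rfl⟩ <;> simp_all

lemma eq_of_varN_mem_of_mem_bipW1 {e : Sym2 (BipV m q)} (he : e ∈ bipW1 m q) {i : Fin m}
    (hv : BipV.varN i ∈ e) : e = s(BipV.var i, BipV.varN i) := by
  rcases he with rfl | ⟨i', rfl⟩ | ⟨i', rfl⟩ | ⟨j, rfl⟩ <;> simp_all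

lemma hP_mem_or_exists_clP_mem {e : Sym2 (BipV m q)}
    (he : e ∈ bipEdges m q cl) (hw : e ∉ bipW1 m q) :
    BipV.hP ∈ e ∨ ∃ j, BipV.clP j ∈ e := by
  rcases he with rfl | ⟨i, rfl | rfl | rfl⟩ | ⟨j, rfl⟩ | ⟨j, t, -, rfl⟩ | ⟨j, t, -, rfl⟩ <;>
    simp_all [bipW1]

lemma sum_bipWeight (M : Finset (Sym2 (BipV m q))) :
    ∑ e ∈ M, bipWeight m q e = (M.filter (· ∈ bipW1 m q)).card :=
  Finset.sum_boole _ _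

lemma hPhN_mem_and_clPclN_mem (hM : IsMatchingF (bipGraph m q cl) M)
    (hw : ∑ e ∈ M, bipWeight m q e = (m : ℤ) + q + 1) :
    s(BipV.hP, BipV.hN) ∈ M ∧ ∀ j, s(BipV.clP j, BipV.clN j) ∈ M := by
  have hcard : (M.filter (· ∈ bipW1 m q)).card = (blockReps m q).card := by
    rw [card_blockReps]
    rw [sum_bipWeight] at hw
    exact_mod_cast hw
  have hcover := (hM.subset (Finset.filter_subset _ M)).subset_satSet_of_card_eq
    (fun e he => exists_mem_blockReps_of_mem_bipW1 (Finset.mem_filter.mp he).2) hcard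
  have hsat : ∀ v ∈ blockReps m q, ∃ e ∈ M, e ∈ bipW1 m q ∧ v ∈ e := fun v hv => by
    obtain ⟨e, he, hve⟩ := hcover hv
    exact ⟨e, (Finset.mem_filter.mp he).1, (Finset.mem_filter.mp he).2, hve⟩
  constructor
  · obtain ⟨e, heM, heW, hv⟩ := hsat BipV.hP (by simp [blockReps])
    exact eq_of_hP_mem_of_mem_bipW1 heW hv ▸ heM
  · intro j
    obtain ⟨e, heM, heW, hv⟩ := hsat (BipV.clP j) (by simp [blockReps])
    exact eq_of_clP_mem_of_mem_bipW1 heW hv ▸ heM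

lemma mem_bipW1_of_hPhN_mem_of_clPclN_mem (hM : IsMatchingF (bipGraph m q cl) M)
    (hh : s(BipV.hP, BipV.hN) ∈ M) (hc : ∀ j, s(BipV.clP j, BipV.clN j) ∈ M)
    {e : Sym2 (BipV m q)} (he : e ∈ M) : e ∈ bipW1 m q := by
  by_contra hw
  have hE : e ∈ bipEdges m q cl := by
    have := hM.1 e he
    rw [bipGraph, SimpleGraph.edgeSet_fromEdgeSet] at this
    exact this.1
  rcases hP_mem_or_exists_clP_mem hE hw with hv | ⟨j, hv⟩
  · exact hw (hM.eq_of_mem_of_mem he hh hv (by simp) ▸ Or.inl rfl)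
  · exact hw (hM.eq_of_mem_of_mem he (hc j) hv (by simp) ▸ .inr (.inr (.inr ⟨j, rfl⟩)))

/-- The vertex `x_i⁺` or `x_i⁻` of `G_{X,C}` that represents the literal `l` over `x_i`. -/
def litV (l : Fin m × Bool) : BipV m q :=
  if l.2 then BipV.varP l.1 else BipV.varN l.1

lemma bipGraph_adj_clN {j : Fin q} {b : BipV m q}
    (h : (bipGraph m q cl).Adj (BipV.clN j) b) : b = BipV.clP j := by
  obtain ⟨hE, -⟩ := (SimpleGraph.fromEdgeSet_adj _).mp h
  rcases hE with h | ⟨i, h | h | h⟩ | ⟨j', h⟩ | ⟨j', t, -, h⟩ | ⟨j', t, -, h⟩ <;>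
    simp_all

lemma bipGraph_adj_clP {j : Fin q} {b : BipV m q}
    (h : (bipGraph m q cl).Adj (BipV.clP j) b) : b = BipV.clN j ∨ ∃ t, b = litV (cl j t) := by
  obtain ⟨hE, -⟩ := (SimpleGraph.fromEdgeSet_adj _).mp h
  rcases hE with h | ⟨i, h | h | h⟩ | ⟨j', h⟩ | ⟨j', t, ht, h⟩ | ⟨j', t, ht, h⟩ <;>
    simp only [Sym2.eq_iff, BipV.clP.injEq, reduceCtorEq, false_and, or_false] at h
  · exact Or.inl (h.1 ▸ h.2)
  · obtain ⟨rfl, rfl⟩ := h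
    exact Or.inr ⟨t, by simp [litV, ht]⟩
  · obtain ⟨rfl, rfl⟩ := h
    exact Or.inr ⟨t, by simp [litV, ht]⟩

lemma exists_litV_mem_satSet (hpre : ((bipGraph m q cl).induce (satSet M)).Preconnected) {j : Fin q}
    (hc : BipV.clP j ∈ satSet M) (hh : BipV.hP ∈ satSet M) :
    ∃ t, litV (cl j t) ∈ satSet M := by
  by_contra! hno
  let T : Set (satSet M) := {v | v.1 = BipV.clP j ∨ v.1 = BipV.clN j}
  have hT : ∀ a b, ((bipGraph m q cl).induce (satSet M)).Adj a b → a ∈ T → b ∈ T := by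
    rintro a ⟨b, hb⟩ hab (ha | ha) <;> rw [SimpleGraph.induce_adj, ha] at hab
    · rcases bipGraph_adj_clP hab with rfl | ⟨t, rfl⟩
      · exact Or.inr rfl
      · exact absurd hb (hno t)
    · exact Or.inl (bipGraph_adj_clN hab)
  have := (hpre ⟨_, hc⟩ ⟨_, hh⟩).mem_of_forall_adj hT (Or.inl rfl)
  simp [T] at this

lemma decide_varP_mem_satSet_of_litV_mem (hM : IsMatchingF (bipGraph m q cl) M)
    (hW : ∀ e ∈ M, e ∈ bipW1 m q) {l : Fin m × Bool} (hl : litV l ∈ satSet M) :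
    decide (BipV.varP l.1 ∈ satSet M) = l.2 := by
  obtain ⟨i, b⟩ := l
  cases b
  · obtain ⟨e, he, hve⟩ := hl
    simp only [litV, Bool.false_eq_true, ↓reduceIte] at hve
    rw [eq_of_varN_mem_of_mem_bipW1 (hW e he) hve] at he
    simp only [decide_eq_false_iff_not]
    rintro ⟨f, hf, hvf⟩
    rw [eq_of_varP_mem_of_mem_bipW1 (hW f hf) hvf] at hf
    have := hM.eq_of_mem_of_mem he hf (v := BipV.var i) (by simp) (by simp)
    simp at this
  · simpa [litV] using hl

end BipGraph

/-- In the bipartite reduction graph, a matching of weight `|X| + |C| + 1` consists of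
exactly `|X| + |C| + 1` weight-1 edges and no weight-0 edges; and if such a matching is
connected then setting `x_i` true iff `x_i⁺` is saturated satisfies every clause. -/
theorem bip_matching_weight_structure (m q : ℕ)
    (cl : Fin q → Fin 3 → Fin m × Bool) (M : Finset (Sym2 (BipV m q)))
    (hM : IsMatchingF (bipGraph m q cl) M)
    (hw : ∑ e ∈ M, bipWeight m q e = (m : ℤ) + q + 1) :
    ((∀ e ∈ M, bipWeight m q e = 1) ∧ M.card = m + q + 1) ∧
    (((bipGraph m q cl).induce (satSet M)).Preconnected →
      ∃ σ : Fin m → Bool,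
        (∀ i : Fin m, σ i = true ↔ BipV.varP i ∈ satSet M) ∧
        ∀ j : Fin q, ∃ t : Fin 3, σ (cl j t).1 = (cl j t).2) := by
  obtain ⟨hh, hc⟩ := hPhN_mem_and_clPclN_mem hM hw
  have hW : ∀ e ∈ M, e ∈ bipW1 m q := fun _ => mem_bipW1_of_hPhN_mem_of_clPclN_mem hM hh hc
  refine ⟨⟨fun e he => if_pos (hW e he), ?_⟩, fun hpre => ?_⟩
  · rw [sum_bipWeight, Finset.filter_true_of_mem hW] at hw
    exact_mod_cast hw
  refine ⟨fun i => decide (BipV.varP i ∈ satSet M), fun i => decide_eq_true_iff, fun j => ?_⟩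
  obtain ⟨t, ht⟩ := exists_litV_mem_satSet hpre (j := j) ⟨_, hc j, by simp⟩ ⟨_, hh, by simp⟩
  exact ⟨t, decide_varP_mem_satSet_of_litV_mem hM hW ht⟩
end

section
/- Satisfiability implies matching: if a 3SAT instance (X, C) has a satisfying assignment, then the bipartite reduction graph G_{X,C} admits a connected matching of weight exactly |X| + |C| + 1, namely {h⁺h⁻} ∪ {c_i⁺c_i⁻ : c_i ∈ C} ∪ {x_i x_i⁺ : x_i true} ∪ {x_i x_i⁻ : x_i false}. -/
open Finset Classical

/-- The matching associated to an assignment `σ`: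
`{h⁺h⁻} ∪ {c_j⁺c_j⁻ : j} ∪ {x_i x_i⁺ : σ i} ∪ {x_i x_i⁻ : ¬σ i}`. -/
def bipMatchingOf (m q : ℕ) (σ : Fin m → Bool) : Finset (Sym2 (BipV m q)) :=
  {s(BipV.hP, BipV.hN)} ∪
    (Finset.univ.image fun j : Fin q => s(BipV.clP j, BipV.clN j)) ∪
    (Finset.univ.image fun i : Fin m =>
      if σ i then s(BipV.var i, BipV.varP i) else s(BipV.var i, BipV.varN i))

/-! A satisfying assignment `σ` saturates, for every clause `c_j`, the vertex `x_i^±` of one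
of its true literals, since `σ` matches `x_i` to exactly that side. Hence every saturated
vertex reaches `h⁺` inside `V(M)`: `x_i` directly, `x_i^±` through `x_i`, `c_j⁺` through a
true literal of `c_j`, and `c_j⁻` through `c_j⁺`. Each vertex of an edge of `M` determines
that edge, so `M` is a matching, and its `1 + |C| + |X|` edges all have weight `1`. -/

section General

variable {V : Type*} {G : SimpleGraph V}

theorem isMatchingF_of_forall_mem_eq_mk {M : Finset (Sym2 V)} (mate : V → V)
    (hedges : ∀ e ∈ M, e ∈ G.edgeSet) (hmate : ∀ e ∈ M, ∀ v ∈ e, e = s(v, mate v)) :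
    IsMatchingF G M :=
  ⟨hedges, fun e he f hf hne v ⟨hve, hvf⟩ =>
    hne ((hmate e he v hve).trans (hmate f hf v hvf).symm)⟩

theorem left_mem_satSet {M : Finset (Sym2 V)} {a b : V} (h : s(a, b) ∈ M) : a ∈ satSet M :=
  ⟨_, h, Sym2.mem_mk_left a b⟩

theorem right_mem_satSet {M : Finset (Sym2 V)} {a b : V} (h : s(a, b) ∈ M) : b ∈ satSet M :=
  ⟨_, h, Sym2.mem_mk_right a b⟩

theorem SimpleGraph.Adj.induce_reachable {s : Set V} {a b : V} (h : G.Adj a b) (ha : a ∈ s)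
    (hb : b ∈ s) : (G.induce s).Reachable ⟨a, ha⟩ ⟨b, hb⟩ :=
  SimpleGraph.Adj.reachable (G := G.induce s) h

end General

variable {m q : ℕ}

def litVertex : Fin m × Bool → BipV m q
  | (i, true) => .varP i
  | (i, false) => .varN i

def bipMate (σ : Fin m → Bool) : BipV m q → BipV m q
  | .hP => .hN
  | .hN => .hP
  | .var i => litVertex (i, σ i)
  | .varP i => .var i
  | .varN i => .var i
  | .clP j => .clN j
  | .clN j => .clP j

theorem bipMatchingOf_eq (σ : Fin m → Bool) : bipMatchingOf m q σ =
    {s(.hP, .hN)} ∪ univ.image (fun j => s(.clP j, .clN j)) ∪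
      univ.image fun i => s(.var i, litVertex (i, σ i)) := by
  simp only [bipMatchingOf]
  congr! 3 with i
  cases σ i <;> rfl

theorem mem_bipMatchingOf {σ : Fin m → Bool} {e : Sym2 (BipV m q)} :
    e ∈ bipMatchingOf m q σ ↔ e = s(.hP, .hN) ∨ (∃ j, e = s(.clP j, .clN j)) ∨
      ∃ i, e = s(.var i, litVertex (i, σ i)) := by
  simp only [bipMatchingOf_eq, mem_union, mem_singleton, mem_image, mem_univ, true_and,
    eq_comm (b := e), or_assoc]

theorem bipMate_litVertex (σ : Fin m → Bool) (l : Fin m × Bool) :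
    bipMate σ (litVertex l : BipV m q) = .var l.1 := by
  obtain ⟨i, _ | _⟩ := l <;> rfl

theorem eq_mk_bipMate_of_mem {σ : Fin m → Bool} {e : Sym2 (BipV m q)}
    (he : e ∈ bipMatchingOf m q σ) {v : BipV m q} (hv : v ∈ e) : e = s(v, bipMate σ v) := by
  rcases mem_bipMatchingOf.1 he with rfl | ⟨j, rfl⟩ | ⟨i, rfl⟩
  · rcases Sym2.mem_iff.1 hv with rfl | rfl <;> simp [bipMate]
  · rcases Sym2.mem_iff.1 hv with rfl | rfl <;> simp [bipMate]
  · rcases Sym2.mem_iff.1 hv with rfl | rfl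
    · rfl
    · rw [bipMate_litVertex, Sym2.eq_swap]

section Adjacency

variable (cl : Fin q → Fin 3 → Fin m × Bool)

theorem bipGraph_adj_hP_hN : (bipGraph m q cl).Adj .hP .hN := by
  simp [bipGraph, bipEdges]

theorem bipGraph_adj_var_hP (i : Fin m) : (bipGraph m q cl).Adj (.var i) .hP := by
  simp [bipGraph, bipEdges]

theorem bipGraph_adj_var_litVertex (l : Fin m × Bool) :
    (bipGraph m q cl).Adj (.var l.1) (litVertex l) := by
  obtain ⟨i, _ | _⟩ := l <;> simp [bipGraph, bipEdges, litVertex]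

theorem bipGraph_adj_clP_clN (j : Fin q) : (bipGraph m q cl).Adj (.clP j) (.clN j) := by
  simp [bipGraph, bipEdges]

theorem bipGraph_adj_clP_litVertex (j : Fin q) (t : Fin 3) :
    (bipGraph m q cl).Adj (.clP j) (litVertex (cl j t)) := by
  rcases h : cl j t with ⟨i, _ | _⟩ <;>
    simpa [bipGraph, bipEdges, litVertex] using ⟨t, by simp [h]⟩

end Adjacency

section Matching

variable (cl : Fin q → Fin 3 → Fin m × Bool) (σ : Fin m → Bool)

theorem mem_edgeSet_of_mem_bipMatchingOf {e : Sym2 (BipV m q)} (he : e ∈ bipMatchingOf m q σ) :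
    e ∈ (bipGraph m q cl).edgeSet := by
  rcases mem_bipMatchingOf.1 he with rfl | ⟨j, rfl⟩ | ⟨i, rfl⟩
  · exact bipGraph_adj_hP_hN cl
  · exact bipGraph_adj_clP_clN cl j
  · exact bipGraph_adj_var_litVertex cl (i, σ i)

theorem isMatchingF_bipMatchingOf : IsMatchingF (bipGraph m q cl) (bipMatchingOf m q σ) :=
  isMatchingF_of_forall_mem_eq_mk (bipMate σ) (fun _ => mem_edgeSet_of_mem_bipMatchingOf cl σ)
    fun _ he _ hv => eq_mk_bipMate_of_mem he hv

theorem mem_bipW1_of_mem_bipMatchingOf {e : Sym2 (BipV m q)} (he : e ∈ bipMatchingOf m q σ) :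
    e ∈ bipW1 m q := by
  rcases mem_bipMatchingOf.1 he with rfl | ⟨j, rfl⟩ | ⟨i, rfl⟩
  · simp [bipW1]
  · simp [bipW1]
  · cases σ i <;> simp [bipW1, litVertex]

theorem card_bipMatchingOf : #(bipMatchingOf m q σ) = m + q + 1 := by
  have hcl : Function.Injective fun j : Fin q => (s(.clP j, .clN j) : Sym2 (BipV m q)) :=
    fun a b h => by simpa using h
  have hvar : Function.Injective fun i => (s(.var i, litVertex (i, σ i)) : Sym2 (BipV m q)) :=
    fun a b h => by cases ha : σ a <;> cases hb : σ b <;> simp_all [litVertex]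
  rw [bipMatchingOf_eq, card_union_of_disjoint (by simp [disjoint_left]),
    card_union_of_disjoint (by simp), card_singleton, card_image_of_injective _ hcl,
    card_image_of_injective _ hvar, card_univ, card_univ, Fintype.card_fin, Fintype.card_fin]
  omega

theorem sum_bipWeight_bipMatchingOf :
    ∑ e ∈ bipMatchingOf m q σ, bipWeight m q e = (m : ℤ) + q + 1 := by
  have hweight : ∀ e ∈ bipMatchingOf m q σ, bipWeight m q e = 1 :=
    fun e he => if_pos (mem_bipW1_of_mem_bipMatchingOf σ he)
  rw [sum_eq_card_nsmul hweight, card_bipMatchingOf]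
  simp

theorem hP_mem_satSet : .hP ∈ satSet (bipMatchingOf m q σ) :=
  left_mem_satSet (mem_bipMatchingOf.2 (.inl rfl))

theorem hN_mem_satSet : .hN ∈ satSet (bipMatchingOf m q σ) :=
  right_mem_satSet (mem_bipMatchingOf.2 (.inl rfl))

theorem clP_mem_satSet (j : Fin q) : .clP j ∈ satSet (bipMatchingOf m q σ) :=
  left_mem_satSet (mem_bipMatchingOf.2 (.inr (.inl ⟨j, rfl⟩)))

theorem clN_mem_satSet (j : Fin q) : .clN j ∈ satSet (bipMatchingOf m q σ) :=
  right_mem_satSet (mem_bipMatchingOf.2 (.inr (.inl ⟨j, rfl⟩)))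

theorem var_mem_satSet (i : Fin m) : .var i ∈ satSet (bipMatchingOf m q σ) :=
  left_mem_satSet (mem_bipMatchingOf.2 (.inr (.inr ⟨i, rfl⟩)))

theorem litVertex_mem_satSet {l : Fin m × Bool} (hl : σ l.1 = l.2) :
    litVertex l ∈ satSet (bipMatchingOf m q σ) := by
  obtain ⟨i, b⟩ := l
  obtain rfl : σ i = b := hl
  exact right_mem_satSet (mem_bipMatchingOf.2 (.inr (.inr ⟨i, rfl⟩)))

theorem induce_satSet_bipMatchingOf_connected
    (hσ : ∀ j : Fin q, ∃ t : Fin 3, σ (cl j t).1 = (cl j t).2) :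
    ((bipGraph m q cl).induce (satSet (bipMatchingOf m q σ))).Connected := by
  set H := (bipGraph m q cl).induce (satSet (bipMatchingOf m q σ))
  have reach_var (i : Fin m) :
      H.Reachable ⟨.var i, var_mem_satSet σ i⟩ ⟨.hP, hP_mem_satSet σ⟩ :=
    (bipGraph_adj_var_hP cl i).induce_reachable _ _
  have reach_lit (l : Fin m × Bool) (hl : litVertex l ∈ satSet (bipMatchingOf m q σ)) :
      H.Reachable ⟨litVertex l, hl⟩ ⟨.hP, hP_mem_satSet σ⟩ :=
    ((bipGraph_adj_var_litVertex cl l).symm.induce_reachable _ _).trans (reach_var l.1)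
  have reach_clP (j : Fin q) :
      H.Reachable ⟨.clP j, clP_mem_satSet σ j⟩ ⟨.hP, hP_mem_satSet σ⟩ := by
    obtain ⟨t, ht⟩ := hσ j
    exact ((bipGraph_adj_clP_litVertex cl j t).induce_reachable _
      (litVertex_mem_satSet σ ht)).trans (reach_lit _ _)
  refine (H.connected_iff_exists_forall_reachable).2 ⟨⟨.hP, hP_mem_satSet σ⟩, ?_⟩
  rintro ⟨v, hv⟩
  apply SimpleGraph.Reachable.symm
  cases v with
  | hP => rfl
  | hN => exact (bipGraph_adj_hP_hN cl).symm.induce_reachable _ _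
  | var i => exact reach_var i
  | varP i => exact reach_lit (i, true) hv
  | varN i => exact reach_lit (i, false) hv
  | clP j => exact reach_clP j
  | clN j =>
    exact ((bipGraph_adj_clP_clN cl j).symm.induce_reachable _ _).trans (reach_clP j)

end Matching

/-- Satisfiability implies matching: a satisfying assignment of the 3SAT instance yields
a connected matching of the bipartite reduction graph of weight exactly `|X| + |C| + 1`. -/
theorem bip_satisfiable_gives_connected_matching (m q : ℕ)
    (cl : Fin q → Fin 3 → Fin m × Bool) (σ : Fin m → Bool)
    (hσ : ∀ j : Fin q, ∃ t : Fin 3, σ (cl j t).1 = (cl j t).2) :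
    IsMatchingF (bipGraph m q cl) (bipMatchingOf m q σ) ∧
    ((bipGraph m q cl).induce (satSet (bipMatchingOf m q σ))).Connected ∧
    ∑ e ∈ bipMatchingOf m q σ, bipWeight m q e = (m : ℤ) + q + 1 :=
  ⟨isMatchingF_bipMatchingOf cl σ, induce_satSet_bipMatchingOf_connected cl σ hσ,
    sum_bipWeight_bipMatchingOf σ⟩
end

section
/- Solution correspondence for Steiner tree reduction: if T = (V_T, E_T) is a subtree of G' with R ⊆ V_T and |E_T| ≤ k', then the reduction graph G admits a connected matching of weight at least r|R| − pk', obtained by saturating r edges in each cycle C_w for w ∈ V_T and p edges in each path P_{uw} for uw ∈ E_T. -/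
open Finset Classical

/-- Vertices of the Steiner-tree reduction graph: for each vertex `w` of `G'` a cycle
`C_w` with `2 * L w` vertices, and for each edge `ab` of `G'` (with `a < b`) a path
`P_{ab}` with `2 * p` vertices. -/
def SteinerV (N : ℕ) (L : Fin N → ℕ) (p : ℕ) : Type :=
  (Σ w : Fin N, Fin (2 * L w)) ⊕ (Fin N × Fin N × Fin (2 * p))

instance (N : ℕ) (L : Fin N → ℕ) (p : ℕ) : DecidableEq (SteinerV N L p) := by
  unfold SteinerV; infer_instance

instance (N : ℕ) (L : Fin N → ℕ) (p : ℕ) : Fintype (SteinerV N L p) := by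
  unfold SteinerV; infer_instance

/-- The edge set of the Steiner-tree reduction graph: the cycles `C_w` (consecutive
vertices modulo `2 * L w`), the paths `P_{ab}` (consecutive vertices), and the
attachment of the two ends of each path `P_{ab}` to the designated cycle vertices
`v_{ab} = lab a b` and `v_{ba} = lab b a`. -/
def steinerEdges (N : ℕ) (G' : SimpleGraph (Fin N)) (L : Fin N → ℕ) (p : ℕ)
    (lab : (a : Fin N) → Fin N → Fin (2 * L a)) : Set (Sym2 (SteinerV N L p)) :=
  {e | (∃ (w : Fin N) (i j : Fin (2 * L w)), (i.val + 1) % (2 * L w) = j.val ∧ i ≠ j ∧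
          e = s(Sum.inl ⟨w, i⟩, Sum.inl ⟨w, j⟩)) ∨
       (∃ (a b : Fin N) (i j : Fin (2 * p)), a < b ∧ G'.Adj a b ∧ j.val = i.val + 1 ∧
          e = s(Sum.inr (a, b, i), Sum.inr (a, b, j))) ∨
       (∃ (a b : Fin N) (i : Fin (2 * p)), a < b ∧ G'.Adj a b ∧
          ((i.val = 0 ∧ e = s(Sum.inr (a, b, i), Sum.inl ⟨a, lab a b⟩)) ∨
           (i.val = 2 * p - 1 ∧ e = s(Sum.inr (a, b, i), Sum.inl ⟨b, lab b a⟩))))}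

/-- The Steiner-tree reduction graph. -/
def steinerGraph (N : ℕ) (G' : SimpleGraph (Fin N)) (L : Fin N → ℕ) (p : ℕ)
    (lab : (a : Fin N) → Fin N → Fin (2 * L a)) : SimpleGraph (SteinerV N L p) :=
  SimpleGraph.fromEdgeSet (steinerEdges N G' L p lab)

/-- The edge weights of the reduction graph: `+1` on edges inside a cycle `C_w`,
`-1` on all other edges. -/
noncomputable def steinerWeight (N : ℕ) (L : Fin N → ℕ) (p : ℕ) :
    Sym2 (SteinerV N L p) → ℤ :=
  fun e =>
    if ∃ (w : Fin N) (i j : Fin (2 * L w)), e = s(Sum.inl ⟨w, i⟩, Sum.inl ⟨w, j⟩)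
    then 1 else -1


section SteinerAux

open SimpleGraph

variable (N : ℕ) (G' : SimpleGraph (Fin N)) (L : Fin N → ℕ) (p : ℕ)
  (lab : (a : Fin N) → Fin N → Fin (2 * L a)) (T : G'.Subgraph)

/-- Cycle vertex. -/
def cv (w : Fin N) (i : Fin (2 * L w)) : SteinerV N L p := Sum.inl ⟨w, i⟩

/-- Path vertex. -/
def pv (a b : Fin N) (i : Fin (2 * p)) : SteinerV N L p := Sum.inr (a, b, i)

/-- Matching edge inside cycle `C_w`. -/
def cycEdge (w : Fin N) (t : Fin (L w)) : Sym2 (SteinerV N L p) :=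
  s(cv N L p w ⟨2 * t.1, by have := t.2; omega⟩,
    cv N L p w ⟨2 * t.1 + 1, by have := t.2; omega⟩)

/-- Matching edge inside path `P_{ab}`. -/
def pathEdge (a b : Fin N) (t : Fin p) : Sym2 (SteinerV N L p) :=
  s(pv N L p a b ⟨2 * t.1, by have := t.2; omega⟩,
    pv N L p a b ⟨2 * t.1 + 1, by have := t.2; omega⟩)

/-- The pairs `(a,b)` with `a < b` that are edges of `T`. -/
noncomputable def ETp : Finset (Fin N × Fin N) :=
  Finset.univ.filter (fun ab => ab.1 < ab.2 ∧ T.Adj ab.1 ab.2)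

/-- The vertex set of `T` as a finset. -/
noncomputable def VTf : Finset (Fin N) := (Set.toFinite T.verts).toFinset

/-- The constructed connected matching. -/
noncomputable def MM : Finset (Sym2 (SteinerV N L p)) :=
  (VTf N G' T).biUnion
      (fun w => (Finset.univ : Finset (Fin (L w))).image (cycEdge N L p w)) ∪
    (ETp N G' T).biUnion
      (fun ab => (Finset.univ : Finset (Fin p)).image (pathEdge N L p ab.1 ab.2))

variable {N G' L p T}

lemma cv_inj {w w' : Fin N} {i : Fin (2 * L w)} {i' : Fin (2 * L w')}
    (h : cv N L p w i = cv N L p w' i') : w = w' ∧ i.1 = i'.1 := by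
  unfold cv at h
  have h2 : (⟨w, i⟩ : Σ w : Fin N, Fin (2 * L w)) = ⟨w', i'⟩ := Sum.inl.inj h
  obtain ⟨rfl, h3⟩ := Sigma.mk.inj_iff.mp h2
  exact ⟨rfl, congrArg Fin.val (eq_of_heq h3)⟩

lemma pv_inj {a b a' b' : Fin N} {i i' : Fin (2 * p)}
    (h : pv N L p a b i = pv N L p a' b' i') : a = a' ∧ b = b' ∧ i = i' := by
  unfold pv at h
  have h2 : ((a, b, i) : Fin N × Fin N × Fin (2 * p)) = (a', b', i') := Sum.inr.inj h
  simpa [Prod.ext_iff] using h2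

lemma cv_ne_pv {w : Fin N} {i : Fin (2 * L w)} {a b : Fin N} {j : Fin (2 * p)} :
    cv N L p w i ≠ pv N L p a b j := by
  unfold cv pv; exact fun h => Sum.inl_ne_inr h

lemma mem_MM {e : Sym2 (SteinerV N L p)} :
    e ∈ MM N G' L p T ↔
      (∃ w, w ∈ T.verts ∧ ∃ t : Fin (L w), e = cycEdge N L p w t) ∨
      (∃ a b, a < b ∧ T.Adj a b ∧ ∃ t : Fin p, e = pathEdge N L p a b t) := by
  simp only [MM, Finset.mem_union, Finset.mem_biUnion, Finset.mem_image,
    Finset.mem_univ, true_and, VTf, Set.Finite.mem_toFinset, ETp, Finset.mem_filter]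
  constructor
  · rintro (⟨w, hw, t, rfl⟩ | ⟨ab, ⟨hlt, hadj⟩, t, rfl⟩)
    · exact Or.inl ⟨w, hw, t, rfl⟩
    · exact Or.inr ⟨ab.1, ab.2, hlt, hadj, t, rfl⟩
  · rintro (⟨w, hw, t, rfl⟩ | ⟨a, b, hlt, hadj, t, rfl⟩)
    · exact Or.inl ⟨w, hw, t, rfl⟩
    · exact Or.inr ⟨(a, b), ⟨hlt, hadj⟩, t, rfl⟩

lemma cycEdge_inj {w w' : Fin N} {t : Fin (L w)} {t' : Fin (L w')}
    (h : cycEdge N L p w t = cycEdge N L p w' t') : w = w' ∧ t.1 = t'.1 := by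
  rw [cycEdge, cycEdge, Sym2.eq_iff] at h
  rcases h with ⟨h1, h2⟩ | ⟨h1, h2⟩
  · obtain ⟨rfl, hv⟩ := cv_inj h1
    have hv2 : 2 * t.1 = 2 * t'.1 := hv
    exact ⟨rfl, by omega⟩
  · obtain ⟨rfl, hv⟩ := cv_inj h1
    have hv2 : 2 * t.1 = 2 * t'.1 + 1 := hv
    exact ⟨rfl, by omega⟩

lemma pathEdge_inj {a b a' b' : Fin N} {t t' : Fin p}
    (h : pathEdge N L p a b t = pathEdge N L p a' b' t') :
    a = a' ∧ b = b' ∧ t.1 = t'.1 := by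
  rw [pathEdge, pathEdge, Sym2.eq_iff] at h
  rcases h with ⟨h1, h2⟩ | ⟨h1, h2⟩
  · obtain ⟨rfl, rfl, hv⟩ := pv_inj h1
    have hv2 : 2 * t.1 = 2 * t'.1 := congrArg Fin.val hv
    exact ⟨rfl, rfl, by omega⟩
  · obtain ⟨rfl, rfl, hv⟩ := pv_inj h1
    have hv2 : 2 * t.1 = 2 * t'.1 + 1 := congrArg Fin.val hv
    exact ⟨rfl, rfl, by omega⟩

lemma cycEdge_ne_pathEdge {w : Fin N} {t : Fin (L w)} {a b : Fin N} {t' : Fin p} :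
    cycEdge N L p w t ≠ pathEdge N L p a b t' := by
  intro h
  rw [cycEdge, pathEdge, Sym2.eq_iff] at h
  rcases h with ⟨h1, h2⟩ | ⟨h1, h2⟩ <;> exact cv_ne_pv h1

lemma mem_cycEdge {v : SteinerV N L p} {w : Fin N} {t : Fin (L w)}
    (h : v ∈ cycEdge N L p w t) :
    ∃ i : Fin (2 * L w), v = cv N L p w i ∧ (i.1 = 2 * t.1 ∨ i.1 = 2 * t.1 + 1) := by
  rw [cycEdge, Sym2.mem_iff] at h
  rcases h with rfl | rfl
  · exact ⟨_, rfl, Or.inl rfl⟩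
  · exact ⟨_, rfl, Or.inr rfl⟩

lemma mem_pathEdge {v : SteinerV N L p} {a b : Fin N} {t : Fin p}
    (h : v ∈ pathEdge N L p a b t) :
    ∃ i : Fin (2 * p), v = pv N L p a b i ∧ (i.1 = 2 * t.1 ∨ i.1 = 2 * t.1 + 1) := by
  rw [pathEdge, Sym2.mem_iff] at h
  rcases h with rfl | rfl
  · exact ⟨_, rfl, Or.inl rfl⟩
  · exact ⟨_, rfl, Or.inr rfl⟩

lemma sat_cv {w : Fin N} (hw : w ∈ T.verts) (i : Fin (2 * L w)) :
    cv N L p w i ∈ satSet (MM N G' L p T) := by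
  have h2 := i.2
  refine ⟨cycEdge N L p w ⟨i.1 / 2, by omega⟩,
    mem_MM.mpr (Or.inl ⟨w, hw, _, rfl⟩), ?_⟩
  rw [cycEdge, Sym2.mem_iff]
  rcases Nat.even_or_odd i.1 with he | ho
  · rw [Nat.even_iff] at he
    exact Or.inl (congrArg (cv N L p w) (Fin.ext (show i.1 = 2 * (i.1 / 2) by omega)))
  · rw [Nat.odd_iff] at ho
    exact Or.inr (congrArg (cv N L p w) (Fin.ext (show i.1 = 2 * (i.1 / 2) + 1 by omega)))

lemma sat_pv {a b : Fin N} (hab : a < b) (hadj : T.Adj a b) (i : Fin (2 * p)) :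
    pv N L p a b i ∈ satSet (MM N G' L p T) := by
  have h2 := i.2
  refine ⟨pathEdge N L p a b ⟨i.1 / 2, by omega⟩,
    mem_MM.mpr (Or.inr ⟨a, b, hab, hadj, _, rfl⟩), ?_⟩
  rw [pathEdge, Sym2.mem_iff]
  rcases Nat.even_or_odd i.1 with he | ho
  · rw [Nat.even_iff] at he
    exact Or.inl (congrArg (pv N L p a b) (Fin.ext (show i.1 = 2 * (i.1 / 2) by omega)))
  · rw [Nat.odd_iff] at ho
    exact Or.inr (congrArg (pv N L p a b) (Fin.ext (show i.1 = 2 * (i.1 / 2) + 1 by omega)))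

lemma sat_inv {v : SteinerV N L p} (hv : v ∈ satSet (MM N G' L p T)) :
    (∃ w, w ∈ T.verts ∧ ∃ i, v = cv N L p w i) ∨
      (∃ a b, a < b ∧ T.Adj a b ∧ ∃ i, v = pv N L p a b i) := by
  obtain ⟨e, he, hve⟩ := hv
  rcases mem_MM.mp he with ⟨w, hw, t, rfl⟩ | ⟨a, b, hlt, hadj, t, rfl⟩
  · obtain ⟨i, rfl, -⟩ := mem_cycEdge hve
    exact Or.inl ⟨w, hw, i, rfl⟩
  · obtain ⟨i, rfl, -⟩ := mem_pathEdge hve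
    exact Or.inr ⟨a, b, hlt, hadj, i, rfl⟩

lemma MM_subset_edges {e : Sym2 (SteinerV N L p)} (he : e ∈ MM N G' L p T) :
    e ∈ (steinerGraph N G' L p lab).edgeSet := by
  rcases mem_MM.mp he with ⟨w, hw, t, rfl⟩ | ⟨a, b, hlt, hadj, t, rfl⟩
  · rw [cycEdge, SimpleGraph.mem_edgeSet, steinerGraph, SimpleGraph.fromEdgeSet_adj]
    constructor
    · exact Or.inl ⟨w, ⟨2 * t.1, by have := t.2; omega⟩, ⟨2 * t.1 + 1, by have := t.2; omega⟩,
        Nat.mod_eq_of_lt (by have := t.2; show 2 * t.1 + 1 < 2 * L w; omega),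
        fun hh => absurd (congrArg Fin.val hh) (show ¬(2 * t.1 = 2 * t.1 + 1) by omega), rfl⟩
    · intro hh
      have hv : 2 * t.1 = 2 * t.1 + 1 := (cv_inj hh).2
      omega
  · rw [pathEdge, SimpleGraph.mem_edgeSet, steinerGraph, SimpleGraph.fromEdgeSet_adj]
    constructor
    · exact Or.inr (Or.inl ⟨a, b, ⟨2 * t.1, by have := t.2; omega⟩,
        ⟨2 * t.1 + 1, by have := t.2; omega⟩, hlt, T.adj_sub hadj, rfl, rfl⟩)
    · intro hh
      have hv : (⟨2 * t.1, by have := t.2; omega⟩ : Fin (2 * p))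
          = ⟨2 * t.1 + 1, by have := t.2; omega⟩ := (pv_inj hh).2.2
      have hv2 : 2 * t.1 = 2 * t.1 + 1 := congrArg Fin.val hv
      omega

lemma MM_matching : IsMatchingF (steinerGraph N G' L p lab) (MM N G' L p T) := by
  constructor
  · intro e he; exact MM_subset_edges lab he
  · rintro e he f hf hef v ⟨hve, hvf⟩
    rcases mem_MM.mp he with ⟨w, hw, t, rfl⟩ | ⟨a, b, hlt, hadj, t, rfl⟩ <;>
      rcases mem_MM.mp hf with ⟨w', hw', t', rfl⟩ | ⟨a', b', hlt', hadj', t', rfl⟩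
    · obtain ⟨i, rfl, hi⟩ := mem_cycEdge hve
      obtain ⟨i', heq, hi'⟩ := mem_cycEdge hvf
      obtain ⟨rfl, hval⟩ := cv_inj heq
      exact hef (congrArg (cycEdge N L p w) (Fin.ext (by omega)))
    · obtain ⟨i, rfl, hi⟩ := mem_cycEdge hve
      obtain ⟨i', heq, hi'⟩ := mem_pathEdge hvf
      exact cv_ne_pv heq
    · obtain ⟨i, rfl, hi⟩ := mem_pathEdge hve
      obtain ⟨i', heq, hi'⟩ := mem_cycEdge hvf
      exact cv_ne_pv heq.symm
    · obtain ⟨i, rfl, hi⟩ := mem_pathEdge hve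
      obtain ⟨i', heq, hi'⟩ := mem_pathEdge hvf
      obtain ⟨rfl, rfl, hval⟩ := pv_inj heq
      have hval2 : i.1 = i'.1 := congrArg Fin.val hval
      exact hef (congrArg (pathEdge N L p a b) (Fin.ext (by omega)))

lemma weight_cycEdge {w : Fin N} {t : Fin (L w)} :
    steinerWeight N L p (cycEdge N L p w t) = 1 := by
  simp only [steinerWeight]
  rw [if_pos]
  exact ⟨w, ⟨2 * t.1, by have := t.2; omega⟩, ⟨2 * t.1 + 1, by have := t.2; omega⟩, rfl⟩

lemma weight_pathEdge {a b : Fin N} {t : Fin p} :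
    steinerWeight N L p (pathEdge N L p a b t) = -1 := by
  simp only [steinerWeight]
  rw [if_neg]
  rintro ⟨w, i, j, h⟩
  replace h : pathEdge N L p a b t = s(cv N L p w i, cv N L p w j) := h
  rw [pathEdge, Sym2.eq_iff] at h
  rcases h with ⟨h1, -⟩ | ⟨h1, -⟩ <;>
    exact cv_ne_pv (show cv N L p w _ = pv N L p a b _ from h1.symm)

lemma weight_MM :
    ∑ e ∈ MM N G' L p T, steinerWeight N L p e
      = (∑ w ∈ VTf N G' T, (L w : ℤ)) - (ETp N G' T).card * p := by
  rw [MM, Finset.sum_union]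
  · rw [Finset.sum_biUnion, Finset.sum_biUnion]
    · have h1 : ∀ w ∈ VTf N G' T,
          (∑ e ∈ (Finset.univ : Finset (Fin (L w))).image (cycEdge N L p w),
            steinerWeight N L p e) = (L w : ℤ) := by
        intro w _
        rw [Finset.sum_image (fun t _ t' _ h => Fin.ext (cycEdge_inj h).2)]
        simp [weight_cycEdge]
      have h2 : ∀ ab ∈ ETp N G' T,
          (∑ e ∈ (Finset.univ : Finset (Fin p)).image (pathEdge N L p ab.1 ab.2),
            steinerWeight N L p e) = -(p : ℤ) := by
        intro ab _
        rw [Finset.sum_image (fun t _ t' _ h => Fin.ext (pathEdge_inj h).2.2)]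
        simp [weight_pathEdge]
      rw [Finset.sum_congr rfl h1, Finset.sum_congr rfl h2, Finset.sum_const]
      ring
    · intro ab _ ab' _ hne
      simp only [Function.onFun]
      rw [Finset.disjoint_left]
      rintro e he he'
      simp only [Finset.mem_image, Finset.mem_univ, true_and] at he he'
      obtain ⟨t, rfl⟩ := he
      obtain ⟨t', heq⟩ := he'
      obtain ⟨h1, h2, -⟩ := pathEdge_inj heq
      exact hne (Prod.ext h1.symm h2.symm)
    · intro w _ w' _ hne
      simp only [Function.onFun]
      rw [Finset.disjoint_left]
      rintro e he he'
      simp only [Finset.mem_image, Finset.mem_univ, true_and] at he he'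
      obtain ⟨t, rfl⟩ := he
      obtain ⟨t', heq⟩ := he'
      exact hne (cycEdge_inj heq.symm).1
  · rw [Finset.disjoint_left]
    rintro e he he'
    simp only [Finset.mem_biUnion, Finset.mem_image, Finset.mem_univ, true_and] at he he'
    obtain ⟨w, -, t, rfl⟩ := he
    obtain ⟨ab, -, t', heq⟩ := he'
    exact cycEdge_ne_pathEdge heq.symm

lemma HG_adj {x y : SteinerV N L p} (hx : x ∈ satSet (MM N G' L p T))
    (hy : y ∈ satSet (MM N G' L p T))
    (h : s(x, y) ∈ steinerEdges N G' L p lab) (hxy : x ≠ y) :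
    ((steinerGraph N G' L p lab).induce (satSet (MM N G' L p T))).Adj ⟨x, hx⟩ ⟨y, hy⟩ := by
  show (steinerGraph N G' L p lab).Adj x y
  exact (SimpleGraph.fromEdgeSet_adj _).mpr ⟨h, hxy⟩

lemma reach_cycle {w : Fin N} (hw : w ∈ T.verts) (i j : Fin (2 * L w)) :
    ((steinerGraph N G' L p lab).induce (satSet (MM N G' L p T))).Reachable
      ⟨cv N L p w i, sat_cv hw i⟩ ⟨cv N L p w j, sat_cv hw j⟩ := by
  have hpos : 0 < 2 * L w := lt_of_le_of_lt (Nat.zero_le _) i.2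
  suffices h : ∀ n (hn : n < 2 * L w),
      ((steinerGraph N G' L p lab).induce (satSet (MM N G' L p T))).Reachable
        ⟨cv N L p w ⟨0, hpos⟩, sat_cv hw _⟩ ⟨cv N L p w ⟨n, hn⟩, sat_cv hw _⟩ by
    exact (h i.1 i.2).symm.trans (h j.1 j.2)
  intro n
  induction n with
  | zero => intro hn; exact SimpleGraph.Reachable.refl _
  | succ k ih =>
    intro hn
    refine (ih (by omega)).trans (SimpleGraph.Adj.reachable (HG_adj lab _ _ ?_ ?_))
    · exact Or.inl ⟨w, ⟨k, by omega⟩, ⟨k + 1, hn⟩,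
        Nat.mod_eq_of_lt (show k + 1 < 2 * L w from hn),
        fun hh => absurd (congrArg Fin.val hh) (show ¬(k = k + 1) by omega), rfl⟩
    · intro hh
      have hv : k = k + 1 := (cv_inj hh).2
      omega

lemma reach_path {a b : Fin N} (hab : a < b) (hadj : T.Adj a b) (i j : Fin (2 * p)) :
    ((steinerGraph N G' L p lab).induce (satSet (MM N G' L p T))).Reachable
      ⟨pv N L p a b i, sat_pv hab hadj i⟩ ⟨pv N L p a b j, sat_pv hab hadj j⟩ := by
  have hpos : 0 < 2 * p := lt_of_le_of_lt (Nat.zero_le _) i.2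
  suffices h : ∀ n (hn : n < 2 * p),
      ((steinerGraph N G' L p lab).induce (satSet (MM N G' L p T))).Reachable
        ⟨pv N L p a b ⟨0, hpos⟩, sat_pv hab hadj _⟩ ⟨pv N L p a b ⟨n, hn⟩, sat_pv hab hadj _⟩ by
    exact (h i.1 i.2).symm.trans (h j.1 j.2)
  intro n
  induction n with
  | zero => intro hn; exact SimpleGraph.Reachable.refl _
  | succ k ih =>
    intro hn
    refine (ih (by omega)).trans (SimpleGraph.Adj.reachable (HG_adj lab _ _ ?_ ?_))
    · exact Or.inr (Or.inl ⟨a, b, ⟨k, by omega⟩, ⟨k + 1, hn⟩, hab, T.adj_sub hadj, rfl, rfl⟩)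
    · intro hh
      have hv : (⟨k, by omega⟩ : Fin (2 * p)) = ⟨k + 1, hn⟩ := (pv_inj hh).2.2
      have hv2 : k = k + 1 := congrArg Fin.val hv
      omega

lemma adj_attach_left {a b : Fin N} (hab : a < b) (hadj : T.Adj a b) (h0 : 0 < 2 * p) :
    ((steinerGraph N G' L p lab).induce (satSet (MM N G' L p T))).Adj
      ⟨pv N L p a b ⟨0, h0⟩, sat_pv hab hadj _⟩
      ⟨cv N L p a (lab a b), sat_cv (T.edge_vert hadj) _⟩ := by
  refine HG_adj lab _ _ ?_ ?_
  · exact Or.inr (Or.inr ⟨a, b, ⟨0, h0⟩, hab, T.adj_sub hadj, Or.inl ⟨rfl, rfl⟩⟩)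
  · exact fun hh => cv_ne_pv (show cv N L p a _ = pv N L p a b _ from hh.symm)

lemma adj_attach_right {a b : Fin N} (hab : a < b) (hadj : T.Adj a b) (h1 : 2 * p - 1 < 2 * p) :
    ((steinerGraph N G' L p lab).induce (satSet (MM N G' L p T))).Adj
      ⟨pv N L p a b ⟨2 * p - 1, h1⟩, sat_pv hab hadj _⟩
      ⟨cv N L p b (lab b a), sat_cv (T.edge_vert hadj.symm) _⟩ := by
  refine HG_adj lab _ _ ?_ ?_
  · exact Or.inr (Or.inr ⟨a, b, ⟨2 * p - 1, h1⟩, hab, T.adj_sub hadj, Or.inr ⟨rfl, rfl⟩⟩)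
  · exact fun hh => cv_ne_pv (show cv N L p b _ = pv N L p a b _ from hh.symm)

lemma reach_tree (hp1 : 1 ≤ p) (hconn : T.coe.Connected) {u w : Fin N}
    (hu : u ∈ T.verts) (hw : w ∈ T.verts) (i : Fin (2 * L u)) (j : Fin (2 * L w)) :
    ((steinerGraph N G' L p lab).induce (satSet (MM N G' L p T))).Reachable
      ⟨cv N L p u i, sat_cv hu i⟩ ⟨cv N L p w j, sat_cv hw j⟩ := by
  have h0 : 0 < 2 * p := by omega
  have h1 : 2 * p - 1 < 2 * p := by omega
  suffices h : ∀ (x y : T.verts) (W : T.coe.Walk x y) (i : Fin (2 * L x.1))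
      (j : Fin (2 * L y.1)),
      ((steinerGraph N G' L p lab).induce (satSet (MM N G' L p T))).Reachable
        ⟨cv N L p x.1 i, sat_cv x.2 i⟩ ⟨cv N L p y.1 j, sat_cv y.2 j⟩ by
    obtain ⟨W⟩ := hconn ⟨u, hu⟩ ⟨w, hw⟩
    exact h ⟨u, hu⟩ ⟨w, hw⟩ W i j
  intro x y W
  induction W with
  | nil => intro i j; exact reach_cycle lab (Subtype.coe_prop _) i j
  | @cons x z y hxz W ih =>
    intro i j
    have hTadj : T.Adj x.1 z.1 := (SimpleGraph.Subgraph.coe_adj ..).mp hxz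
    have hne : x.1 ≠ z.1 := (T.adj_sub hTadj).ne
    rcases lt_or_gt_of_ne hne with hlt | hgt
    · refine (reach_cycle lab x.2 i (lab x.1 z.1)).trans ?_
      refine ((adj_attach_left lab hlt hTadj h0).symm.reachable).trans ?_
      refine (reach_path lab hlt hTadj ⟨0, h0⟩ ⟨2 * p - 1, h1⟩).trans ?_
      exact ((adj_attach_right lab hlt hTadj h1).reachable).trans (ih (lab z.1 x.1) j)
    · have hTadj' : T.Adj z.1 x.1 := hTadj.symm
      refine (reach_cycle lab x.2 i (lab x.1 z.1)).trans ?_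
      refine ((adj_attach_right lab hgt hTadj' h1).symm.reachable).trans ?_
      refine (reach_path lab hgt hTadj' ⟨2 * p - 1, h1⟩ ⟨0, h0⟩).trans ?_
      exact ((adj_attach_left lab hgt hTadj' h0).reachable).trans (ih (lab z.1 x.1) j)

lemma MM_preconnected (hp1 : 1 ≤ p) (hconn : T.coe.Connected) :
    ((steinerGraph N G' L p lab).induce (satSet (MM N G' L p T))).Preconnected := by
  rintro ⟨u, hu⟩ ⟨v, hv⟩
  have key : ∀ (x : SteinerV N L p) (hx : x ∈ satSet (MM N G' L p T)),
      ∃ (w : Fin N) (hw : w ∈ T.verts) (i : Fin (2 * L w)),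
        ((steinerGraph N G' L p lab).induce (satSet (MM N G' L p T))).Reachable
          ⟨x, hx⟩ ⟨cv N L p w i, sat_cv hw i⟩ := by
    intro x hx
    rcases sat_inv hx with ⟨w, hw, i, rfl⟩ | ⟨a, b, hab, hadj, i, rfl⟩
    · exact ⟨w, hw, i, SimpleGraph.Reachable.refl _⟩
    · have h0 : 0 < 2 * p := lt_of_le_of_lt (Nat.zero_le _) i.2
      exact ⟨a, T.edge_vert hadj, lab a b,
        (reach_path lab hab hadj i ⟨0, h0⟩).trans
          (adj_attach_left lab hab hadj h0).reachable⟩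
  obtain ⟨w, hw, i, h1⟩ := key u hu
  obtain ⟨w', hw', i', h2⟩ := key v hv
  exact h1.trans ((reach_tree lab hp1 hconn hw hw' i i').trans h2.symm)

end SteinerAux

/-- Solution correspondence for the Steiner-tree reduction: if `T` is a subtree of `G'`
containing all terminals `R` and having at most `k'` edges, then the reduction graph
(with `q = Δ(G')`, `p = q(|V'| - |R|) + 1`, `r = p|E'| + 1`) admits a connected matching
of weight at least `r|R| - pk'`. -/
theorem steiner_tree_gives_connected_matching
    (N : ℕ) (G' : SimpleGraph (Fin N)) [DecidableRel G'.Adj]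
    (R : Finset (Fin N)) (k' q p r : ℕ)
    (hq : q = G'.maxDegree) (hp : p = q * (N - R.card) + 1)
    (hr : r = p * G'.edgeFinset.card + 1)
    (L : Fin N → ℕ) (hL : ∀ w : Fin N, L w = if w ∈ R then r else q)
    (lab : (a : Fin N) → Fin N → Fin (2 * L a))
    (hlab : ∀ a b c : Fin N, G'.Adj a b → G'.Adj a c → lab a b = lab a c → b = c)
    (T : G'.Subgraph) (hTree : T.coe.IsTree)
    (hR : ∀ v ∈ R, v ∈ T.verts) (hTE : T.edgeSet.ncard ≤ k') :
    ∃ M : Finset (Sym2 (SteinerV N L p)),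
      IsMatchingF (steinerGraph N G' L p lab) M ∧
      ((steinerGraph N G' L p lab).induce (satSet M)).Preconnected ∧
      (r : ℤ) * R.card - p * k' ≤ ∑ e ∈ M, steinerWeight N L p e := by
  have hp1 : 1 ≤ p := by omega
  refine ⟨MM N G' L p T, MM_matching lab, MM_preconnected lab hp1 hTree.isConnected, ?_⟩
  rw [weight_MM]
  have hRsub : R ⊆ VTf N G' T := fun w hw => (Set.Finite.mem_toFinset _).mpr (hR w hw)
  have hsum : ∑ w ∈ R, (L w : ℤ) = (r : ℤ) * R.card := by
    calc ∑ w ∈ R, (L w : ℤ) = ∑ _w ∈ R, (r : ℤ) :=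
          Finset.sum_congr rfl (fun w hw => by rw [hL w, if_pos hw])
      _ = R.card • (r : ℤ) := Finset.sum_const _
      _ = (r : ℤ) * R.card := by rw [nsmul_eq_mul, mul_comm]
  have h1 : (r : ℤ) * R.card ≤ ∑ w ∈ VTf N G' T, (L w : ℤ) := by
    rw [← hsum]
    exact Finset.sum_le_sum_of_subset_of_nonneg hRsub
      (fun w _ _ => Int.natCast_nonneg _)
  have hfin : T.edgeSet.Finite := Set.toFinite _
  have h2 : (ETp N G' T).card ≤ k' := by
    have hcard : (ETp N G' T).card
        = ((ETp N G' T).image (fun ab => s(ab.1, ab.2))).card := by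
      rw [Finset.card_image_of_injOn]
      rintro ⟨a, b⟩ hab ⟨a', b'⟩ hab' h
      simp only [ETp, Finset.coe_filter, Finset.mem_univ, true_and,
        Set.mem_setOf_eq] at hab hab'
      rcases Sym2.eq_iff.mp h with ⟨rfl, rfl⟩ | ⟨rfl, rfl⟩
      · rfl
      · exact absurd (hab.1.trans hab'.1) (lt_irrefl _)
    have hsub : (ETp N G' T).image (fun ab => s(ab.1, ab.2)) ⊆ hfin.toFinset := by
      intro e he
      simp only [Finset.mem_image] at he
      obtain ⟨ab, hab, rfl⟩ := he
      simp only [ETp, Finset.mem_filter, Finset.mem_univ, true_and] at hab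
      exact hfin.mem_toFinset.mpr (SimpleGraph.Subgraph.mem_edgeSet.mpr hab.2)
    calc (ETp N G' T).card = _ := hcard
      _ ≤ hfin.toFinset.card := Finset.card_le_card hsub
      _ = T.edgeSet.ncard := (Set.ncard_eq_toFinset_card _ hfin).symm
      _ ≤ k' := hTE
  have h3 : ((ETp N G' T).card : ℤ) * p ≤ (k' : ℤ) * p :=
    mul_le_mul_of_nonneg_right (by exact_mod_cast h2) (Int.natCast_nonneg _)
  linarith
end
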